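/- arXiv:1309.6242 — 3 statements merged into one kernel-verified Lean document; each statement's English description precedes it below -/
import Mathlib

section
/- Let S = {S_i}_{i∈E} be a rotation-free similarity IFS on ℝ^d satisfying the open set condition, with attractor C of similarity dimension s, and let μ be the normalized measure H^s(C)^{-1}·H^s⌊C. Let k(x,y) = Ω(x−y)/|x−y|^s be an s-homogeneous kernel. Suppose there is a finite word w ∈ E^* whose fixed point x_w of S_w lies in some open set O for which S satisfies the strong open set condition, the function y ↦ k(x_w,y) is μ-integrable on C∖C_w, and ∫_{C∖C_w} k(x_w,y) dμ(y) ≠ 0. Then for μ-almost every x ∈ C one has T*(1)(x) = ∞, i.e. sup_{ε>0} |∫_{C∖B(x,ε)} k(x,y) dμ(y)| = ∞. -/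
open MeasureTheory Metric Set Filter
open scoped ENNReal Topology NNReal

noncomputable section

/-- Euclidean space `ℝ^d`. -/
abbrev Euc (d : ℕ) := EuclideanSpace ℝ (Fin d)

/-- Composition `S_w = S_{w_1} ∘ ⋯ ∘ S_{w_n}` along a finite word. -/
def Sw {d N : ℕ} (S : Fin N → Euc d → Euc d) : List (Fin N) → Euc d → Euc d
  | [] => id
  | i :: t => S i ∘ Sw S t

/-- The finite word `w|_k = w_1 ⋯ w_k` of an infinite word. -/
def word {N : ℕ} (w : ℕ → Fin N) (k : ℕ) : List (Fin N) :=
  List.ofFn (fun j : Fin k => w j)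

/-- Distance between two sets. -/
def setDist {X : Type*} [PseudoMetricSpace X] (A B : Set X) : ℝ :=
  sInf (Set.image2 dist A B)

/-- The word `w` repeated `m` times. -/
def wrep {N : ℕ} (w : List (Fin N)) (m : ℕ) : List (Fin N) :=
  (List.replicate m w).flatten

/-- The unit vector `(x - ξ)/|x - ξ|`, as a point of the unit sphere. -/
def sphN {d : ℕ} (ξ x : Euc d) (h : x ≠ ξ) : sphere (0 : Euc d) 1 :=
  ⟨‖x - ξ‖⁻¹ • (x - ξ), by
    have hx : x - ξ ≠ 0 := sub_ne_zero.mpr h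
    simp [mem_sphere_iff_norm, norm_smul, abs_of_nonneg,
      inv_mul_cancel₀ (norm_ne_zero_iff.mpr hx)]⟩

/-- The starred integral: the integral if the integrand is integrable on the set, else `0`. -/
def starInt {X : Type*} [MeasurableSpace X] (μ : Measure X) (A : Set X) (g : X → ℝ) : ℝ :=
  @ite _ (IntegrableOn g A μ) (Classical.dec _) (∫ y in A, g y ∂μ) 0

namespace Stmt5Aux

def rho {N : ℕ} (r : Fin N → ℝ) (u : List (Fin N)) : ℝ := (u.map r).prod

variable {d N : ℕ}

theorem Sw_append (S : Fin N → Euc d → Euc d) (u v : List (Fin N)) :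
    Sw S (u ++ v) = Sw S u ∘ Sw S v := by
  induction u with
  | nil => rfl
  | cons i t ih => simp [Sw, List.cons_append, ih, Function.comp_assoc]

theorem rho_cons (r : Fin N → ℝ) (i : Fin N) (t : List (Fin N)) :
    rho r (i :: t) = r i * rho r t := by simp [rho]

theorem rho_append (r : Fin N → ℝ) (u v : List (Fin N)) :
    rho r (u ++ v) = rho r u * rho r v := by simp [rho]

variable {q : Fin N → Euc d} {r : Fin N → ℝ} {S : Fin N → Euc d → Euc d}

theorem rho_pos (hr : ∀ i, r i ∈ Set.Ioo (0:ℝ) 1) (u : List (Fin N)) : 0 < rho r u := by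
  induction u with
  | nil => simp [rho]
  | cons i t ih => rw [rho_cons]; exact mul_pos (hr i).1 ih

theorem rho_le_one (hr : ∀ i, r i ∈ Set.Ioo (0:ℝ) 1) (u : List (Fin N)) : rho r u ≤ 1 := by
  induction u with
  | nil => simp [rho]
  | cons i t ih =>
    rw [rho_cons]
    nlinarith [(hr i).1, (hr i).2, rho_pos hr t]

theorem Sw_sub (hS : ∀ i x, S i x = q i + r i • x) (u : List (Fin N)) (x y : Euc d) :
    Sw S u x - Sw S u y = rho r u • (x - y) := by
  induction u with
  | nil => simp [Sw, rho]
  | cons i t ih =>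
    simp only [Sw, Function.comp_apply, hS, rho_cons]
    rw [add_sub_add_left_eq_sub, ← smul_sub, ih, smul_smul]

theorem dist_Sw (hr : ∀ i, r i ∈ Set.Ioo (0:ℝ) 1) (hS : ∀ i x, S i x = q i + r i • x)
    (u : List (Fin N)) (x y : Euc d) :
    dist (Sw S u x) (Sw S u y) = rho r u * dist x y := by
  rw [dist_eq_norm, dist_eq_norm, Sw_sub hS, norm_smul, Real.norm_eq_abs,
    abs_of_pos (rho_pos hr u)]

theorem Sw_continuous (hS : ∀ i x, S i x = q i + r i • x) (u : List (Fin N)) :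
    Continuous (Sw S u) := by
  induction u with
  | nil => exact continuous_id
  | cons i t ih =>
    have : Continuous (S i) := by
      have : Continuous fun x : Euc d => q i + r i • x :=
        continuous_const.add (continuous_const_smul _)
      simpa [← funext (hS i)] using this
    exact this.comp ih

theorem Sw_bijective (hr : ∀ i, r i ∈ Set.Ioo (0:ℝ) 1) (hS : ∀ i x, S i x = q i + r i • x)
    (u : List (Fin N)) : Function.Bijective (Sw S u) := by
  constructor
  · intro x y hxy
    have h := Sw_sub hS u x y
    rw [hxy, sub_self] at h
    have : x - y = 0 := by
      have := h.symm
      rwa [smul_eq_zero, or_iff_right (ne_of_gt (rho_pos hr u))] at this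
    exact sub_eq_zero.mp this
  · have hSsurj : ∀ i, Function.Surjective (S i) := by
      intro i y
      refine ⟨(r i)⁻¹ • (y - q i), ?_⟩
      rw [hS, smul_smul, mul_inv_cancel₀ (ne_of_gt (hr i).1), one_smul, add_sub_cancel]
    induction u with
    | nil => exact Function.surjective_id
    | cons i t ih => exact (hSsurj i).comp ih


theorem Sw_image_open (hr : ∀ i, r i ∈ Set.Ioo (0:ℝ) 1) (hS : ∀ i x, S i x = q i + r i • x)
    (u : List (Fin N)) {U : Set (Euc d)} (hU : IsOpen U) : IsOpen (Sw S u '' U) := by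
  induction u with
  | nil => simpa [Sw] using hU
  | cons i t ih =>
    have : Sw S (i :: t) '' U = S i '' (Sw S t '' U) := by
      rw [show Sw S (i :: t) = S i ∘ Sw S t from rfl, Set.image_comp]
    rw [this]
    have heq : S i '' (Sw S t '' U) = (fun y : Euc d => (r i)⁻¹ • (y - q i)) ⁻¹' (Sw S t '' U) := by
      ext y
      constructor
      · rintro ⟨x, hx, rfl⟩
        have : (r i)⁻¹ • (S i x - q i) = x := by
          rw [hS, add_sub_cancel_left, smul_smul, inv_mul_cancel₀ (ne_of_gt (hr i).1), one_smul]
        simpa [this] using hx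
      · intro hy
        refine ⟨(r i)⁻¹ • (y - q i), hy, ?_⟩
        rw [hS, smul_smul, mul_inv_cancel₀ (ne_of_gt (hr i).1), one_smul, add_sub_cancel]
    rw [heq]
    exact ih.preimage ((continuous_id.sub continuous_const).const_smul (r i)⁻¹)

theorem ball_subset_Sw_image (hr : ∀ i, r i ∈ Set.Ioo (0:ℝ) 1)
    (hS : ∀ i x, S i x = q i + r i • x) (u : List (Fin N)) (z : Euc d) (t : ℝ) :
    ball (Sw S u z) (rho r u * t) ⊆ Sw S u '' ball z t := by
  intro y hy
  obtain ⟨x, rfl⟩ := (Sw_bijective hr hS u).2 y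
  refine ⟨x, ?_, rfl⟩
  have := dist_Sw hr hS u x z
  rw [mem_ball] at hy ⊢
  rw [this] at hy
  exact lt_of_mul_lt_mul_left hy (le_of_lt (rho_pos hr u))

theorem diam_Sw_le (hr : ∀ i, r i ∈ Set.Ioo (0:ℝ) 1) (hS : ∀ i x, S i x = q i + r i • x)
    (u : List (Fin N)) {A : Set (Euc d)} (hA : Bornology.IsBounded A) :
    Metric.diam (Sw S u '' A) ≤ rho r u * Metric.diam A := by
  apply Metric.diam_le_of_forall_dist_le
    (mul_nonneg (le_of_lt (rho_pos hr u)) Metric.diam_nonneg)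
  rintro y ⟨a, ha, rfl⟩ y' ⟨b, hb, rfl⟩
  rw [dist_Sw hr hS]
  exact mul_le_mul_of_nonneg_left (Metric.dist_le_diam_of_mem hA ha hb)
    (le_of_lt (rho_pos hr u))

theorem hausdorff_Sw {s : ℝ} (hs : 0 ≤ s) (hr : ∀ i, r i ∈ Set.Ioo (0:ℝ) 1)
    (hS : ∀ i x, S i x = q i + r i • x) (u : List (Fin N)) (A : Set (Euc d)) :
    μH[s] (Sw S u '' A) = ENNReal.ofReal (rho r u ^ s) * μH[s] A := by
  set ρ := rho r u with hρ
  have hρ0 : 0 < ρ := rho_pos hr u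
  have hlip : LipschitzWith ρ.toNNReal (Sw S u) := by
    apply LipschitzWith.of_dist_le_mul
    intro x y
    rw [dist_Sw hr hS, Real.coe_toNNReal _ (le_of_lt hρ0)]
  set g := Function.invFun (Sw S u) with hg
  have hgl : Function.LeftInverse g (Sw S u) := Function.leftInverse_invFun (Sw_bijective hr hS u).1
  have hgr : Function.RightInverse g (Sw S u) :=
    Function.rightInverse_invFun (Sw_bijective hr hS u).2
  have hglip : LipschitzWith (ρ⁻¹).toNNReal g := by
    apply LipschitzWith.of_dist_le_mul
    intro x y
    rw [Real.coe_toNNReal _ (le_of_lt (inv_pos.mpr hρ0))]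
    have : dist (Sw S u (g x)) (Sw S u (g y)) = ρ * dist (g x) (g y) := dist_Sw hr hS u _ _
    rw [hgr x, hgr y] at this
    rw [this]
    field_simp
    exact le_rfl
  have h1 : μH[s] (Sw S u '' A) ≤ (ρ.toNNReal : ℝ≥0∞) ^ s * μH[s] A :=
    hlip.hausdorffMeasure_image_le hs A
  have h2 : μH[s] A ≤ ((ρ⁻¹).toNNReal : ℝ≥0∞) ^ s * μH[s] (Sw S u '' A) := by
    have : A = g '' (Sw S u '' A) := by
      rw [← Set.image_comp]
      simp [Function.comp_def, hgl _, Set.image_id']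
    calc μH[s] A = μH[s] (g '' (Sw S u '' A)) := by rw [← this]
      _ ≤ _ := hglip.hausdorffMeasure_image_le hs _
  have hmul : (ρ.toNNReal : ℝ≥0∞) ^ s * ((ρ⁻¹).toNNReal : ℝ≥0∞) ^ s = 1 := by
    rw [← ENNReal.mul_rpow_of_nonneg _ _ hs, ← ENNReal.coe_mul]
    have : ρ.toNNReal * (ρ⁻¹).toNNReal = 1 := by
      rw [← Real.toNNReal_mul (le_of_lt hρ0), mul_inv_cancel₀ (ne_of_gt hρ0)]
      simp
    rw [this]
    simp [ENNReal.one_rpow]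
  have hofreal : (ρ.toNNReal : ℝ≥0∞) ^ s = ENNReal.ofReal (ρ ^ s) := by
    rw [ENNReal.ofReal, Real.toNNReal_rpow_of_nonneg (le_of_lt hρ0),
      ENNReal.coe_rpow_of_nonneg _ hs]
  rw [← hofreal]
  refine le_antisymm h1 ?_
  calc (ρ.toNNReal : ℝ≥0∞) ^ s * μH[s] A
      ≤ (ρ.toNNReal : ℝ≥0∞) ^ s * (((ρ⁻¹).toNNReal : ℝ≥0∞) ^ s * μH[s] (Sw S u '' A)) := by
        exact mul_le_mul_right h2 _
    _ = _ := by rw [← mul_assoc, hmul, one_mul]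


variable {C O : Set (Euc d)}

theorem Sw_image_C_subset (hCinv : C = ⋃ i, S i '' C) (u : List (Fin N)) :
    Sw S u '' C ⊆ C := by
  induction u with
  | nil => simp [Sw]
  | cons i t ih =>
    rw [show Sw S (i::t) = S i ∘ Sw S t from rfl, Set.image_comp]
    refine subset_trans (Set.image_mono ih) ?_
    intro y hy
    rw [hCinv]
    exact Set.mem_iUnion.2 ⟨i, hy⟩

theorem exists_word_level (hCinv : C = ⋃ i, S i '' C) (n : ℕ) :
    ∀ x ∈ C, ∃ u : List (Fin N), u.length = n ∧ x ∈ Sw S u '' C := by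
  induction n with
  | zero => intro x hx; exact ⟨[], rfl, ⟨x, hx, rfl⟩⟩
  | succ n ih =>
    intro x hx
    rw [hCinv] at hx
    obtain ⟨i, y, hy, rfl⟩ := Set.mem_iUnion.1 hx
    obtain ⟨u, hlen, z, hz, hzy⟩ := ih y hy
    exact ⟨i :: u, by simp [hlen], z, hz, by simp [Sw, hzy]⟩

theorem Sw_image_O_subset (hOsub : ∀ i, S i '' O ⊆ O) (u : List (Fin N)) :
    Sw S u '' O ⊆ O := by
  induction u with
  | nil => simp [Sw]
  | cons i t ih =>
    rw [show Sw S (i::t) = S i ∘ Sw S t from rfl, Set.image_comp]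
    exact subset_trans (Set.image_mono ih) (hOsub i)

theorem Sw_O_disjoint (hr : ∀ i, r i ∈ Set.Ioo (0:ℝ) 1) (hS : ∀ i x, S i x = q i + r i • x)
    (hOsub : ∀ i, S i '' O ⊆ O)
    (hOdisj : ∀ i j, i ≠ j → Disjoint (S i '' O) (S j '' O)) :
    ∀ u v : List (Fin N), u.length = v.length → u ≠ v →
      Disjoint (Sw S u '' O) (Sw S v '' O) := by
  intro u
  induction u with
  | nil =>
    intro v hlen hne
    exact absurd (List.length_eq_zero_iff.mp hlen.symm).symm hne
  | cons a u' ih =>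
    intro v hlen hne
    match v with
    | [] => simp at hlen
    | b :: v' =>
      simp only [List.length_cons, Nat.add_right_cancel_iff] at hlen
      rw [show Sw S (a::u') = S a ∘ Sw S u' from rfl, show Sw S (b::v') = S b ∘ Sw S v' from rfl,
        Set.image_comp, Set.image_comp]
      by_cases hab : a = b
      · subst hab
        have huv : u' ≠ v' := by intro h; exact hne (by rw [h])
        have hdis := ih v' hlen huv
        exact (Set.disjoint_image_iff (Sw_bijective hr hS [a]).1).mpr hdis |>.mono
          (by simp [Sw]) (by simp [Sw])
      · exact (hOdisj a b hab).mono (Set.image_mono (Sw_image_O_subset hOsub u'))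
          (Set.image_mono (Sw_image_O_subset hOsub v'))


theorem wrep_succ (w : List (Fin N)) (m : ℕ) : wrep w (m+1) = w ++ wrep w m := by
  simp [wrep, List.replicate_succ]

theorem wrep_zero (w : List (Fin N)) : wrep w 0 = [] := rfl

theorem Sw_wrep (hxw : Sw S w xw = xw) (m : ℕ) : Sw S (wrep w m) xw = xw := by
  induction m with
  | zero => rfl
  | succ m ih => rw [wrep_succ, Sw_append]; simp [ih, hxw]

theorem rho_wrep (w : List (Fin N)) (m : ℕ) : rho r (wrep w m) = rho r w ^ m := by
  induction m with
  | zero => simp [wrep_zero, rho]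
  | succ m ih => rw [wrep_succ, rho_append, ih, pow_succ]; ring

theorem exists_rbar (hN' : 0 < N) (hr : ∀ i, r i ∈ Set.Ioo (0:ℝ) 1) :
    ∃ R : ℝ, 0 ≤ R ∧ R < 1 ∧ ∀ i, r i ≤ R := by
  haveI : Nonempty (Fin N) := ⟨⟨0, hN'⟩⟩
  refine ⟨Finset.univ.sup' Finset.univ_nonempty r, ?_, ?_, ?_⟩
  · exact le_trans (le_of_lt (hr (Classical.arbitrary _)).1)
      (Finset.le_sup' r (Finset.mem_univ _))
  · exact (Finset.sup'_lt_iff _).mpr fun i _ => (hr i).2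
  · exact fun i => Finset.le_sup' r (Finset.mem_univ i)

theorem rho_le_pow {R : ℝ} (hr : ∀ i, r i ∈ Set.Ioo (0:ℝ) 1) (hR : ∀ i, r i ≤ R)
    (u : List (Fin N)) : rho r u ≤ R ^ u.length := by
  induction u with
  | nil => simp [rho]
  | cons i t ih =>
    rw [rho_cons, List.length_cons, pow_succ]
    have h0R : 0 ≤ R := le_trans (le_of_lt (hr i).1) (hR i)
    calc r i * rho r t ≤ R * R ^ t.length := by
          apply mul_le_mul (hR i) ih (le_of_lt (rho_pos hr t)) h0R
      _ = R ^ (t.length + 1) := by ring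

theorem C_subset_closure_O (hN' : 0 < N) (hr : ∀ i, r i ∈ Set.Ioo (0:ℝ) 1)
    (hS : ∀ i x, S i x = q i + r i • x) (hCcomp : IsCompact C) (hCinv : C = ⋃ i, S i '' C)
    (hOsub : ∀ i, S i '' O ⊆ O) (hSOSC : (O ∩ C).Nonempty) : C ⊆ closure O := by
  obtain ⟨z0, hz0O, hz0C⟩ := hSOSC
  obtain ⟨R, hR0, hR1, hRle⟩ := exists_rbar hN' hr
  intro x hx
  rw [Metric.mem_closure_iff]
  intro ε hε
  have hdiam : ∀ n : ℕ, ∀ u : List (Fin N), u.length = n →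
      Metric.diam (Sw S u '' C) ≤ R ^ n * Metric.diam C := by
    intro n u hlen
    calc Metric.diam (Sw S u '' C) ≤ rho r u * Metric.diam C :=
          diam_Sw_le hr hS u hCcomp.isBounded
      _ ≤ R ^ n * Metric.diam C := by
          apply mul_le_mul_of_nonneg_right _ Metric.diam_nonneg
          rw [← hlen]; exact rho_le_pow hr hRle u
  obtain ⟨n, hn⟩ : ∃ n : ℕ, R ^ n * Metric.diam C < ε := by
    rcases eq_or_lt_of_le (Metric.diam_nonneg (s := C)) with hd0 | hd0
    · exact ⟨0, by rw [← hd0]; simpa using hε⟩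
    · have := tendsto_pow_atTop_nhds_zero_of_lt_one hR0 hR1
      have h2 := this.mul_const (Metric.diam C)
      rw [zero_mul] at h2
      obtain ⟨n, hn⟩ := (h2.eventually (gt_mem_nhds hε)).exists
      exact ⟨n, hn⟩
  obtain ⟨u, hlen, hxu⟩ := exists_word_level hCinv n x hx
  refine ⟨Sw S u z0, Sw_image_O_subset hOsub u ⟨z0, hz0O, rfl⟩, ?_⟩
  calc dist x (Sw S u z0)
      ≤ Metric.diam (Sw S u '' C) :=
        Metric.dist_le_diam_of_mem ((hCcomp.image (Sw_continuous hS u)).isBounded)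
          hxu ⟨z0, hz0C, rfl⟩
    _ ≤ R ^ n * Metric.diam C := hdiam n u hlen
    _ < ε := hn

theorem xw_mem_C (hr : ∀ i, r i ∈ Set.Ioo (0:ℝ) 1) (hS : ∀ i x, S i x = q i + r i • x)
    (hCne : C.Nonempty) (hCcomp : IsCompact C) (hCinv : C = ⋃ i, S i '' C)
    {w : List (Fin N)} (hwne : w ≠ []) {xw : Euc d} (hxw : Sw S w xw = xw) : xw ∈ C := by
  obtain ⟨c0, hc0⟩ := hCne
  rw [← hCcomp.isClosed.closure_eq]
  rw [Metric.mem_closure_iff]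
  intro ε hε
  have hρ : rho r w < 1 := by
    match w, hwne with
    | i :: t, _ =>
      have h1 := (hr i).2
      have h2 := rho_le_one hr t
      have h3 := rho_pos hr t
      rw [rho_cons]
      nlinarith
  have hρ0 : 0 ≤ rho r w := le_of_lt (rho_pos hr w)
  obtain ⟨m, hm⟩ : ∃ m : ℕ, rho r w ^ m * dist xw c0 < ε := by
    have := (tendsto_pow_atTop_nhds_zero_of_lt_one hρ0 hρ).mul_const (dist xw c0)
    rw [zero_mul] at this
    exact ((this.eventually (gt_mem_nhds hε)).exists)
  refine ⟨Sw S (wrep w m) c0, Sw_image_C_subset hCinv _ ⟨c0, hc0, rfl⟩, ?_⟩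
  calc dist xw (Sw S (wrep w m) c0)
      = dist (Sw S (wrep w m) xw) (Sw S (wrep w m) c0) := by rw [Sw_wrep hxw]
    _ = rho r (wrep w m) * dist xw c0 := dist_Sw hr hS _ _ _
    _ = rho r w ^ m * dist xw c0 := by rw [rho_wrep]
    _ < ε := hm


section MeasureFacts

variable {s : ℝ} {μ : Measure (Euc d)}

theorem mu_apply (hCcomp : IsCompact C) (hμ : μ = (μH[s] C)⁻¹ • μH[s].restrict C)
    {A : Set (Euc d)} (hA : MeasurableSet A) :
    μ A = (μH[s] C)⁻¹ * μH[s] (A ∩ C) := by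
  rw [hμ, Measure.smul_apply, Measure.restrict_apply hA, smul_eq_mul]

theorem mu_C_one (hCcomp : IsCompact C) (hμ : μ = (μH[s] C)⁻¹ • μH[s].restrict C)
    (hH0 : μH[s] C ≠ 0) (hHtop : μH[s] C ≠ ⊤) : μ C = 1 := by
  rw [mu_apply hCcomp hμ hCcomp.isClosed.measurableSet, Set.inter_self,
    ENNReal.inv_mul_cancel hH0 hHtop]

theorem mu_univ_one (hCcomp : IsCompact C) (hμ : μ = (μH[s] C)⁻¹ • μH[s].restrict C)
    (hH0 : μH[s] C ≠ 0) (hHtop : μH[s] C ≠ ⊤) : μ Set.univ = 1 := by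
  rw [mu_apply hCcomp hμ MeasurableSet.univ, Set.univ_inter,
    ENNReal.inv_mul_cancel hH0 hHtop]

theorem mu_compl_C (hCcomp : IsCompact C) (hμ : μ = (μH[s] C)⁻¹ • μH[s].restrict C) :
    μ Cᶜ = 0 := by
  rw [mu_apply hCcomp hμ hCcomp.isClosed.measurableSet.compl, Set.compl_inter_self, measure_empty,
    mul_zero]

theorem mu_restrict_map (hs : 0 ≤ s) (hr : ∀ i, r i ∈ Set.Ioo (0:ℝ) 1)
    (hS : ∀ i x, S i x = q i + r i • x) (hCcomp : IsCompact C) (hCinv : C = ⋃ i, S i '' C)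
    (hμ : μ = (μH[s] C)⁻¹ • μH[s].restrict C) (u : List (Fin N)) :
    μ.restrict (Sw S u '' C) = ENNReal.ofReal (rho r u ^ s) • Measure.map (Sw S u) μ := by
  have hmeasSw : Measurable (Sw S u) := (Sw_continuous hS u).measurable
  have hCu : MeasurableSet (Sw S u '' C) :=
    (hCcomp.image (Sw_continuous hS u)).isClosed.measurableSet
  ext A hA
  rw [Measure.restrict_apply hA, Measure.smul_apply, Measure.map_apply hmeasSw hA, smul_eq_mul]
  have h1 : μ (A ∩ Sw S u '' C) = (μH[s] C)⁻¹ * μH[s] (A ∩ Sw S u '' C) := by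
    rw [mu_apply hCcomp hμ (hA.inter hCu)]
    congr 1
    rw [Set.inter_assoc, Set.inter_eq_self_of_subset_left (Sw_image_C_subset hCinv u)]
  have h2 : A ∩ Sw S u '' C = Sw S u '' (C ∩ Sw S u ⁻¹' A) := by
    rw [Set.image_inter_preimage, Set.inter_comm]
  rw [h1, h2, hausdorff_Sw hs hr hS, mu_apply hCcomp hμ (hmeasSw hA), Set.inter_comm]
  ring

theorem mu_Sw_image (hs : 0 ≤ s) (hr : ∀ i, r i ∈ Set.Ioo (0:ℝ) 1)
    (hS : ∀ i x, S i x = q i + r i • x) (hCcomp : IsCompact C) (hCinv : C = ⋃ i, S i '' C)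
    (hμ : μ = (μH[s] C)⁻¹ • μH[s].restrict C)
    (hH0 : μH[s] C ≠ 0) (hHtop : μH[s] C ≠ ⊤) (u : List (Fin N)) :
    μ (Sw S u '' C) = ENNReal.ofReal (rho r u ^ s) := by
  have hCu : MeasurableSet (Sw S u '' C) :=
    (hCcomp.image (Sw_continuous hS u)).isClosed.measurableSet
  have := congrArg (fun ν : Measure (Euc d) => ν Set.univ)
    (mu_restrict_map hs hr hS hCcomp hCinv hμ u)
  simp only [Measure.restrict_apply MeasurableSet.univ, Set.univ_inter, Measure.smul_apply,
    smul_eq_mul] at this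
  rw [this, Measure.map_apply (Sw_continuous hS u).measurable MeasurableSet.univ,
    Set.preimage_univ, mu_univ_one hCcomp hμ hH0 hHtop, mul_one]

theorem mu_inter_Sw_le (hs : 0 ≤ s) (hr : ∀ i, r i ∈ Set.Ioo (0:ℝ) 1)
    (hS : ∀ i x, S i x = q i + r i • x) (hCcomp : IsCompact C) (hCinv : C = ⋃ i, S i '' C)
    (hμ : μ = (μH[s] C)⁻¹ • μH[s].restrict C)
    {B : Set (Euc d)} (hB : MeasurableSet B) (hBC : ∀ u : List (Fin N), Sw S u ⁻¹' B ∩ C ⊆ B)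
    (u : List (Fin N)) :
    μ (B ∩ Sw S u '' C) ≤ ENNReal.ofReal (rho r u ^ s) * μ B := by
  have hCu : MeasurableSet (Sw S u '' C) :=
    (hCcomp.image (Sw_continuous hS u)).isClosed.measurableSet
  have h1 : μ (B ∩ Sw S u '' C) = (μ.restrict (Sw S u '' C)) B := by
    rw [Measure.restrict_apply hB]
  rw [h1, mu_restrict_map hs hr hS hCcomp hCinv hμ u, Measure.smul_apply,
    Measure.map_apply (Sw_continuous hS u).measurable hB, smul_eq_mul]
  refine mul_le_mul_right ?_ _
  have : μ (Sw S u ⁻¹' B) = μ (Sw S u ⁻¹' B ∩ C) := by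
    have hsplit : Sw S u ⁻¹' B ⊆ (Sw S u ⁻¹' B ∩ C) ∪ Cᶜ := by
      intro z hz
      by_cases hzC : z ∈ C
      · exact Or.inl ⟨hz, hzC⟩
      · exact Or.inr hzC
    refine le_antisymm ?_ (measure_mono Set.inter_subset_left)
    calc μ (Sw S u ⁻¹' B) ≤ μ ((Sw S u ⁻¹' B ∩ C) ∪ Cᶜ) := measure_mono hsplit
      _ ≤ μ (Sw S u ⁻¹' B ∩ C) + μ Cᶜ := measure_union_le _ _
      _ = μ (Sw S u ⁻¹' B ∩ C) := by rw [mu_compl_C hCcomp hμ, add_zero]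
  rw [this]
  exact measure_mono (hBC u)


theorem rho_rpow (hr : ∀ i, r i ∈ Set.Ioo (0:ℝ) 1) {s : ℝ} (u : List (Fin N)) :
    rho r u ^ s = ((u.map fun i => r i ^ s)).prod := by
  induction u with
  | nil => simp [rho, Real.one_rpow]
  | cons i t ih =>
    rw [rho_cons, Real.mul_rpow (le_of_lt (hr i).1) (le_of_lt (rho_pos hr t))]
    simp [ih]

theorem C_cover (hCinv : C = ⋃ i, S i '' C) (n : ℕ) :
    C ⊆ ⋃ f : Fin n → Fin N, Sw S (List.ofFn f) '' C := by
  intro x hx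
  obtain ⟨u, hlen, hxu⟩ := exists_word_level hCinv n x hx
  refine Set.mem_iUnion.2 ⟨fun j => u.get (Fin.cast hlen.symm j), ?_⟩
  have : List.ofFn (fun j => u.get (Fin.cast hlen.symm j)) = u := by
    apply List.ext_getElem
    · simp [hlen]
    · intro j h1 h2
      simp [List.getElem_ofFn]
  rw [this]
  exact hxu

theorem sum_words {s : ℝ} (hr : ∀ i, r i ∈ Set.Ioo (0:ℝ) 1) (hdim : ∑ i, r i ^ s = 1) (n : ℕ) :
    ∑ f : Fin n → Fin N, rho r (List.ofFn f) ^ s = 1 := by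
  have h1 : ∀ f : Fin n → Fin N, rho r (List.ofFn f) ^ s = ∏ j, r (f j) ^ s := by
    intro f
    rw [rho_rpow hr, List.map_ofFn, List.prod_ofFn]
    rfl
  simp_rw [h1]
  rw [← Fintype.sum_pow (fun i => r i ^ s) n, hdim, one_pow]

theorem pattern_ae {s : ℝ} {μ : Measure (Euc d)} (hs : 0 ≤ s)
    (hr : ∀ i, r i ∈ Set.Ioo (0:ℝ) 1) (hS : ∀ i x, S i x = q i + r i • x)
    (hCcomp : IsCompact C) (hCinv : C = ⋃ i, S i '' C)
    (hdim : ∑ i, r i ^ s = 1)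
    (hμ : μ = (μH[s] C)⁻¹ • μH[s].restrict C)
    (hH0 : μH[s] C ≠ 0) (hHtop : μH[s] C ≠ ⊤)
    (W : List (Fin N)) :
    μ (C \ ⋃ u : List (Fin N), Sw S (u ++ W) '' C) = 0 := by
  classical
  set B := C \ ⋃ u : List (Fin N), Sw S (u ++ W) '' C with hB
  set n := W.length
  have hCuMeas : ∀ v : List (Fin N), MeasurableSet (Sw S v '' C) := fun v =>
    (hCcomp.image (Sw_continuous hS v)).isClosed.measurableSet
  have hBmeas : MeasurableSet B :=
    (hCcomp.isClosed.measurableSet).diff (MeasurableSet.iUnion fun u => hCuMeas _)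
  -- B is "pattern-avoiding" under preimages
  have hBC : ∀ u : List (Fin N), Sw S u ⁻¹' B ∩ C ⊆ B := by
    rintro u z ⟨hz1, hz2⟩
    simp only [hB, Set.mem_diff, Set.mem_preimage] at hz1 ⊢
    refine ⟨hz2, ?_⟩
    intro hcon
    obtain ⟨v, y, hy, hvy⟩ := by
      simpa only [Set.mem_iUnion] using hcon
    exact hz1.2 (Set.mem_iUnion.2 ⟨u ++ v, y, hy, by
      rw [List.append_assoc, Sw_append, Function.comp_apply, ← hvy]⟩)
  -- the distinguished word W itself
  have hf0 : ∃ f0 : Fin n → Fin N, List.ofFn f0 = W := by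
    refine ⟨fun j => W.get (Fin.cast rfl j), ?_⟩
    exact List.ofFn_get W
  obtain ⟨f0, hf0⟩ := hf0
  have hBW : B ∩ Sw S (List.ofFn f0) '' C = ∅ := by
    rw [hf0]
    apply Set.eq_empty_of_forall_notMem
    rintro z ⟨hz1, hz2⟩
    exact hz1.2 (Set.mem_iUnion.2 ⟨[], by simpa using hz2⟩)
  -- covering bound
  have hcov : μ B ≤ ∑ f : Fin n → Fin N, μ (B ∩ Sw S (List.ofFn f) '' C) := by
    have : B ⊆ ⋃ f : Fin n → Fin N, B ∩ Sw S (List.ofFn f) '' C := by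
      intro x hx
      obtain ⟨f, hf⟩ := Set.mem_iUnion.1 (C_cover hCinv n hx.1)
      exact Set.mem_iUnion.2 ⟨f, hx, hf⟩
    calc μ B ≤ μ (⋃ f : Fin n → Fin N, B ∩ Sw S (List.ofFn f) '' C) := measure_mono this
      _ ≤ ∑ f : Fin n → Fin N, μ (B ∩ Sw S (List.ofFn f) '' C) := measure_iUnion_fintype_le _ _
  have hterm : ∀ f : Fin n → Fin N, f ≠ f0 →
      μ (B ∩ Sw S (List.ofFn f) '' C) ≤ ENNReal.ofReal (rho r (List.ofFn f) ^ s) * μ B :=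
    fun f _ => mu_inter_Sw_le hs hr hS hCcomp hCinv hμ hBmeas hBC _
  have hsum : μ B ≤ ENNReal.ofReal (1 - rho r (List.ofFn f0) ^ s) * μ B := by
    calc μ B ≤ ∑ f : Fin n → Fin N, μ (B ∩ Sw S (List.ofFn f) '' C) := hcov
      _ = ∑ f ∈ Finset.univ.erase f0, μ (B ∩ Sw S (List.ofFn f) '' C) := by
          rw [← Finset.sum_erase_add _ _ (Finset.mem_univ f0)]
          rw [hBW, measure_empty, add_zero]
      _ ≤ ∑ f ∈ Finset.univ.erase f0, ENNReal.ofReal (rho r (List.ofFn f) ^ s) * μ B := by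
          refine Finset.sum_le_sum fun f hf => hterm f (Finset.ne_of_mem_erase hf)
      _ = (∑ f ∈ Finset.univ.erase f0, ENNReal.ofReal (rho r (List.ofFn f) ^ s)) * μ B := by
          rw [Finset.sum_mul]
      _ = ENNReal.ofReal (1 - rho r (List.ofFn f0) ^ s) * μ B := by
          congr 1
          rw [← ENNReal.ofReal_sum_of_nonneg]
          · congr 1
            have := sum_words hr hdim n
            rw [← Finset.sum_erase_add _ _ (Finset.mem_univ f0)] at this
            linarith
          · intro f _
            exact Real.rpow_nonneg (le_of_lt (rho_pos hr _)) s
  -- conclude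
  have hμBfin : μ B ≠ ⊤ := by
    have : μ B ≤ 1 := by
      rw [← mu_univ_one hCcomp hμ hH0 hHtop]
      exact measure_mono (Set.subset_univ _)
    exact ne_top_of_le_ne_top ENNReal.one_ne_top this
  by_contra hμB0
  have hlt : ENNReal.ofReal (1 - rho r (List.ofFn f0) ^ s) < 1 := by
    apply ENNReal.ofReal_lt_one.2
    have : 0 < rho r (List.ofFn f0) ^ s := Real.rpow_pos_of_pos (rho_pos hr _) s
    linarith
  have : ENNReal.ofReal (1 - rho r (List.ofFn f0) ^ s) * μ B < 1 * μ B := by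
    rw [mul_comm _ (μ B), mul_comm 1]; exact ENNReal.mul_lt_mul_right hμB0 hμBfin hlt
  rw [one_mul] at this
  exact absurd (lt_of_le_of_lt hsum this) (lt_irrefl _)

end MeasureFacts

theorem wrep_succ' (w : List (Fin N)) (m : ℕ) : wrep w (m+1) = wrep w m ++ w := by
  induction m with
  | zero => simp [wrep_succ, wrep_zero]
  | succ m ih =>
    rw [wrep_succ w (m+1), ih, ← List.append_assoc]
    congr 1

theorem wrep_add (w : List (Fin N)) (a b : ℕ) : wrep w (a + b) = wrep w a ++ wrep w b := by
  induction b with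
  | zero => simp [wrep_zero]
  | succ b ih => rw [← Nat.add_assoc, wrep_succ' w (a+b), ih, wrep_succ' w b, List.append_assoc]

theorem exists_maximal_nat (P : ℕ → Prop) (j : ℕ) (h0 : P 0) (hj : ¬ P j) :
    ∃ l, l < j ∧ P l ∧ ¬ P (l+1) := by
  induction j with
  | zero => exact absurd h0 hj
  | succ j ih =>
    by_cases hPj : P j
    · exact ⟨j, Nat.lt_succ_self j, hPj, hj⟩
    · obtain ⟨l, hl, h1, h2⟩ := ih hPj
      exact ⟨l, Nat.lt_succ_of_lt hl, h1, h2⟩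

section Kernel

variable {s : ℝ} {Ω : Euc d → ℝ}

theorem kernel_continuousOn (hΩc : ContinuousOn Ω {z | z ≠ 0}) (s : ℝ) (x : Euc d) :
    ContinuousOn (fun y => Ω (x - y) / ‖x - y‖ ^ s) {y | y ≠ x} := by
  have hopen : IsOpen {y : Euc d | y ≠ x} := isOpen_compl_singleton
  apply continuousOn_of_forall_continuousAt
  intro y hy
  have hxy : x - y ≠ 0 := sub_ne_zero.mpr (Ne.symm hy)
  have hnorm : ‖x - y‖ ≠ 0 := norm_ne_zero_iff.mpr hxy
  apply ContinuousAt.div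
  · have h1 : ContinuousAt (fun y : Euc d => x - y) y := (continuous_const.sub continuous_id).continuousAt
    have h2 : ContinuousAt Ω (x - y) :=
      hΩc.continuousAt (IsOpen.mem_nhds isOpen_compl_singleton hxy)
    exact h2.comp h1
  · have h1 : ContinuousAt (fun y : Euc d => ‖x - y‖) y :=
      ((continuous_const.sub continuous_id).norm).continuousAt
    exact ContinuousAt.rpow_const h1 (Or.inl hnorm)
  · exact ne_of_gt (Real.rpow_pos_of_pos (norm_pos_iff.mpr hxy) s)

theorem omega_bound (hd : 1 ≤ d) (hΩc : ContinuousOn Ω {z | z ≠ 0})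
    (hΩhom : ∀ c : ℝ, 0 < c → ∀ x, x ≠ 0 → Ω (c • x) = Ω x) :
    ∃ M : ℝ, 0 ≤ M ∧ ∀ z : Euc d, z ≠ 0 → |Ω z| ≤ M := by
  have hsph : (Metric.sphere (0 : Euc d) 1).Nonempty := by
    refine ⟨EuclideanSpace.single ⟨0, hd⟩ 1, ?_⟩
    simp [EuclideanSpace.norm_single]
  have hcomp : IsCompact (Metric.sphere (0 : Euc d) 1) := isCompact_sphere 0 1
  have hsub : Metric.sphere (0 : Euc d) 1 ⊆ {z | z ≠ 0} := by
    intro z hz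
    simp only [mem_sphere_iff_norm, sub_zero] at hz
    intro h0
    rw [h0] at hz; simp at hz
  obtain ⟨M, hM⟩ := hcomp.exists_bound_of_continuousOn (hΩc.mono hsub)
  refine ⟨max M 0, le_max_right _ _, ?_⟩
  intro z hz
  have hnz : ‖z‖ ≠ 0 := norm_ne_zero_iff.mpr hz
  have hzpos : (0:ℝ) < ‖z‖ := norm_pos_iff.mpr hz
  have hmem : ‖z‖⁻¹ • z ∈ Metric.sphere (0 : Euc d) 1 := by
    simp [norm_smul, abs_of_nonneg (inv_nonneg.mpr (le_of_lt hzpos)), inv_mul_cancel₀ hnz]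
  have := hM _ hmem
  rw [hΩhom _ (inv_pos.mpr hzpos) z hz] at this
  rw [Real.norm_eq_abs] at this
  exact le_trans this (le_max_left _ _)

theorem integrable_far {M : ℝ} (hs : 0 < s) {μ : Measure (Euc d)} [IsFiniteMeasure μ]
    (hΩc : ContinuousOn Ω {z | z ≠ 0}) (hM0 : 0 ≤ M) (hM : ∀ z : Euc d, z ≠ 0 → |Ω z| ≤ M)
    (x : Euc d) {A : Set (Euc d)} (hA : MeasurableSet A) {ε : ℝ} (hε : 0 < ε)
    (hfar : ∀ y ∈ A, ε ≤ dist x y) :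
    IntegrableOn (fun y => Ω (x - y) / ‖x - y‖ ^ s) A μ ∧
      |∫ y in A, Ω (x - y) / ‖x - y‖ ^ s ∂μ| ≤ M / ε ^ s * (μ A).toReal := by
  have hAx : A ⊆ {y | y ≠ x} := by
    intro y hy
    have := hfar y hy
    intro h; rw [h] at this; simp at this; linarith
  have hbd : ∀ y ∈ A, |Ω (x - y) / ‖x - y‖ ^ s| ≤ M / ε ^ s := by
    intro y hy
    have hxy : x - y ≠ 0 := sub_ne_zero.mpr (Ne.symm (hAx hy))
    have h1 : ε ≤ ‖x - y‖ := by
      rw [show ‖x - y‖ = dist x y from (dist_eq_norm x y).symm]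
      exact hfar y hy
    have h2 : ε ^ s ≤ ‖x - y‖ ^ s := Real.rpow_le_rpow (le_of_lt hε) h1 (le_of_lt hs)
    have h3 : (0:ℝ) < ε ^ s := Real.rpow_pos_of_pos hε s
    rw [abs_div, abs_of_pos (lt_of_lt_of_le h3 h2)]
    exact div_le_div₀ hM0 (hM _ hxy) h3 h2
  have haesm : AEStronglyMeasurable (fun y => Ω (x - y) / ‖x - y‖ ^ s) (μ.restrict A) :=
    ((kernel_continuousOn hΩc s x).mono hAx).aestronglyMeasurable hA
  have hbdae : ∀ᵐ y ∂μ.restrict A, ‖Ω (x - y) / ‖x - y‖ ^ s‖ ≤ M / ε ^ s := by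
    filter_upwards [ae_restrict_mem hA] with y hy
    rw [Real.norm_eq_abs]; exact hbd y hy
  have hint : IntegrableOn (fun y => Ω (x - y) / ‖x - y‖ ^ s) A μ :=
    ⟨haesm, HasFiniteIntegral.restrict_of_bounded _ (measure_lt_top μ A) hbdae⟩
  refine ⟨hint, ?_⟩
  rw [← Real.norm_eq_abs]
  apply norm_setIntegral_le_of_norm_le_const (measure_lt_top μ A)
  · intro y hy
    rw [Real.norm_eq_abs]; exact hbd y hy

end Kernel

theorem shell_integral {s : ℝ} {μ : Measure (Euc d)} (hs : 0 < s)
    (hr : ∀ i, r i ∈ Set.Ioo (0:ℝ) 1) (hS : ∀ i x, S i x = q i + r i • x)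
    (hCcomp : IsCompact C) (hCinv : C = ⋃ i, S i '' C)
    (hμ : μ = (μH[s] C)⁻¹ • μH[s].restrict C)
    {Ω : Euc d → ℝ} (hΩc : ContinuousOn Ω {z | z ≠ 0})
    (hΩhom : ∀ c : ℝ, 0 < c → ∀ z, z ≠ 0 → Ω (c • z) = Ω z)
    (v W : List (Fin N)) (x : Euc d)
    (hxB : x ∈ Sw S (v ++ W) '' C) :
    ∫ y in (Sw S v '' C) \ (Sw S (v ++ W) '' C), Ω (x - y) / ‖x - y‖ ^ s ∂μ
      = ∫ z in C \ Sw S W '' C,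
          Ω (Function.invFun (Sw S v) x - z) / ‖Function.invFun (Sw S v) x - z‖ ^ s ∂μ := by
  set f := Sw S v with hf
  have hbij := Sw_bijective hr hS v
  have hmeasf : Measurable f := (Sw_continuous hS v).measurable
  set ρ := rho r v with hρdef
  have hρ0 : 0 < ρ := rho_pos hr v
  have hρs : (0:ℝ) < ρ ^ s := Real.rpow_pos_of_pos hρ0 s
  set x' := Function.invFun f x with hx'def
  have hfx' : f x' = x := Function.rightInverse_invFun hbij.2 x
  set A := C \ Sw S W '' C with hA
  have hAm : MeasurableSet A := hCcomp.isClosed.measurableSet.diff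
    ((hCcomp.image (Sw_continuous hS W)).isClosed.measurableSet)
  have himage : Sw S (v ++ W) '' C = f '' (Sw S W '' C) := by
    rw [Sw_append, Set.image_comp]
  have hB : (Sw S v '' C) \ (Sw S (v ++ W) '' C) = f '' A := by
    rw [himage, hA, Set.image_diff hbij.1]
  have hBm : MeasurableSet (f '' A) := by
    rw [← hB]
    exact ((hCcomp.image (Sw_continuous hS v)).isClosed.measurableSet).diff
      ((hCcomp.image (Sw_continuous hS (v ++ W))).isClosed.measurableSet)
  have hxnotin : f '' A ⊆ {y | y ≠ x} := by
    rintro y ⟨z, hz, rfl⟩ h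
    have hxB' := hxB
    rw [himage] at hxB'
    obtain ⟨t', ht', hft'⟩ := hxB'
    have : z = t' := hbij.1 (show f z = f t' by rw [hft', h])
    exact hz.2 (this ▸ ht')
  have hrestr : μ.restrict (f '' A) =
      ENNReal.ofReal (ρ ^ s) • Measure.map f (μ.restrict A) := by
    have h1 : μ.restrict (f '' A) = (μ.restrict (f '' C)).restrict (f '' A) := by
      rw [Measure.restrict_restrict hBm, Set.inter_eq_self_of_subset_left
        (Set.image_mono Set.diff_subset)]
    rw [h1, mu_restrict_map (le_of_lt hs) hr hS hCcomp hCinv hμ v, Measure.restrict_smul]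
    congr 1
    rw [Measure.restrict_map hmeasf hBm, Set.preimage_image_eq A hbij.1]
  have haesm : AEStronglyMeasurable (fun y => Ω (x - y) / ‖x - y‖ ^ s)
      (Measure.map f (μ.restrict A)) := by
    have h2 : Measure.map f (μ.restrict A) = (Measure.map f μ).restrict (f '' A) := by
      rw [Measure.restrict_map hmeasf hBm, Set.preimage_image_eq A hbij.1]
    rw [h2]
    exact ((kernel_continuousOn hΩc s x).mono hxnotin).aestronglyMeasurable hBm
  have hpt : ∀ z : Euc d, Ω (x - f z) / ‖x - f z‖ ^ s
      = (Ω (x' - z) / ‖x' - z‖ ^ s) / ρ ^ s := by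
    intro z
    have hsub : x - f z = ρ • (x' - z) := by
      rw [← hfx', Sw_sub hS v]
    by_cases hzx : z = x'
    · subst hzx
      rw [sub_self, smul_zero] at hsub
      simp [hsub, Real.zero_rpow (ne_of_gt hs)]
    · have hne : x' - z ≠ 0 := sub_ne_zero.mpr (Ne.symm hzx)
      rw [hsub, hΩhom ρ hρ0 _ hne, norm_smul, Real.norm_eq_abs, abs_of_pos hρ0,
        Real.mul_rpow (le_of_lt hρ0) (norm_nonneg _), div_div, mul_comm (ρ ^ s), ← div_div]
  calc ∫ y in (Sw S v '' C) \ (Sw S (v ++ W) '' C), Ω (x - y) / ‖x - y‖ ^ s ∂μ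
      = ∫ y, Ω (x - y) / ‖x - y‖ ^ s ∂(μ.restrict (f '' A)) := by rw [hB]
    _ = (ENNReal.ofReal (ρ ^ s)).toReal •
          ∫ y, Ω (x - y) / ‖x - y‖ ^ s ∂(Measure.map f (μ.restrict A)) := by
        rw [hrestr, integral_smul_measure]
    _ = ρ ^ s * ∫ z, Ω (x - f z) / ‖x - f z‖ ^ s ∂(μ.restrict A) := by
        rw [ENNReal.toReal_ofReal (le_of_lt hρs), smul_eq_mul,
          integral_map hmeasf.aemeasurable haesm]
    _ = ρ ^ s * ∫ z, (Ω (x' - z) / ‖x' - z‖ ^ s) / ρ ^ s ∂(μ.restrict A) := by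
        congr 1
        exact integral_congr_ae (Filter.Eventually.of_forall fun z => hpt z)
    _ = ρ ^ s * ((∫ z, Ω (x' - z) / ‖x' - z‖ ^ s ∂(μ.restrict A)) / ρ ^ s) := by
        rw [integral_div]
    _ = ∫ z in A, Ω (x' - z) / ‖x' - z‖ ^ s ∂μ := by
        field_simp


theorem F_continuousAt {s M : ℝ} {μ : Measure (Euc d)} [IsFiniteMeasure μ] (hs : 0 < s)
    {Ω : Euc d → ℝ} (hΩc : ContinuousOn Ω {z | z ≠ 0}) (hM0 : 0 ≤ M)
    (hM : ∀ z : Euc d, z ≠ 0 → |Ω z| ≤ M)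
    {A : Set (Euc d)} (hAm : MeasurableSet A) {x0 : Euc d} {d0 : ℝ} (hd0 : 0 < d0)
    (hfar : ∀ y ∈ A, d0 ≤ dist x0 y) :
    ContinuousAt (fun x => ∫ y in A, Ω (x - y) / ‖x - y‖ ^ s ∂μ) x0 := by
  have hdistlow : ∀ x ∈ Metric.ball x0 (d0/2), ∀ y ∈ A, d0/2 ≤ dist x y := by
    intro x hx y hy
    have h1 := hfar y hy
    have h2 : dist x x0 < d0/2 := Metric.mem_ball.1 hx
    have h3 := dist_triangle x0 x y
    rw [dist_comm x0 x] at h3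
    linarith
  apply continuousAt_of_dominated (bound := fun _ => M / (d0/2) ^ s)
  · filter_upwards [Metric.ball_mem_nhds x0 (half_pos hd0)] with x hx
    apply ((kernel_continuousOn hΩc s x).mono ?_).aestronglyMeasurable hAm
    intro y hy
    have := hdistlow x hx y hy
    intro h
    rw [h, dist_self] at this
    linarith
  · filter_upwards [Metric.ball_mem_nhds x0 (half_pos hd0)] with x hx
    filter_upwards [ae_restrict_mem hAm] with y hy
    have h1 : d0/2 ≤ dist x y := hdistlow x hx y hy
    have hxy : x - y ≠ 0 := by
      intro h
      have : dist x y = 0 := by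
        rw [dist_eq_norm, h, norm_zero]
      rw [this] at h1; linarith
    have h2 : d0/2 ≤ ‖x - y‖ := by rw [← dist_eq_norm]; exact h1
    have h3 : (d0/2) ^ s ≤ ‖x - y‖ ^ s :=
      Real.rpow_le_rpow (le_of_lt (half_pos hd0)) h2 (le_of_lt hs)
    have h4 : (0:ℝ) < (d0/2) ^ s := Real.rpow_pos_of_pos (half_pos hd0) s
    rw [Real.norm_eq_abs, abs_div, abs_of_pos (lt_of_lt_of_le h4 h3)]
    exact div_le_div₀ hM0 (hM _ hxy) h4 h3
  · exact integrable_const _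
  · filter_upwards [ae_restrict_mem hAm] with y hy
    have hxy : x0 - y ≠ 0 := by
      intro h
      have h1 := hfar y hy
      rw [dist_eq_norm, h, norm_zero] at h1
      linarith
    have hnorm : ‖x0 - y‖ ≠ 0 := norm_ne_zero_iff.mpr hxy
    apply ContinuousAt.div
    · have hin : ContinuousAt (fun x : Euc d => x - y) x0 :=
        (continuous_id.sub continuous_const).continuousAt
      exact ContinuousAt.comp (hΩc.continuousAt (IsOpen.mem_nhds isOpen_compl_singleton hxy)) hin
    · exact ContinuousAt.rpow_const ((continuous_id.sub continuous_const).norm).continuousAt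
        (Or.inl hnorm)
    · exact ne_of_gt (Real.rpow_pos_of_pos (norm_pos_iff.mpr hxy) s)

end Stmt5Aux

set_option maxHeartbeats 1000000 in
open Stmt5Aux in
/-- (Criterion for unboundedness.) For a rotation-free similarity IFS on `ℝ^d`
satisfying the OSC, if `S` satisfies the SOSC with an open set `O` containing the fixed point
`x_w` of some `S_w`, and `∫_{C∖C_w} k(x_w,y) dμ(y)` is finite and nonzero, then
`T*(1)(x) = ∞` for `μ`-a.e. `x`. -/
theorem stmt5
    {d N : ℕ} (hd : 1 ≤ d) (hN : 2 ≤ N)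
    (q : Fin N → Euc d) (r : Fin N → ℝ) (hr : ∀ i, r i ∈ Set.Ioo (0:ℝ) 1)
    (S : Fin N → Euc d → Euc d) (hS : ∀ i x, S i x = q i + r i • x)
    (C : Set (Euc d)) (hCne : C.Nonempty) (hCcomp : IsCompact C)
    (hCinv : C = ⋃ i, S i '' C)
    (O : Set (Euc d)) (hOop : IsOpen O) (hOne : O.Nonempty)
    (hOsub : ∀ i, S i '' O ⊆ O)
    (hOdisj : ∀ i j, i ≠ j → Disjoint (S i '' O) (S j '' O))
    (hSOSC : (O ∩ C).Nonempty)
    (s : ℝ) (hs : 0 < s) (hdim : ∑ i, r i ^ s = 1)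
    (μ : Measure (Euc d)) (hμ : μ = (μH[s] C)⁻¹ • μH[s].restrict C)
    (Ω : Euc d → ℝ)
    (hΩc : ContinuousOn Ω {x | x ≠ 0})
    (hΩne : ∃ x, x ≠ 0 ∧ Ω x ≠ 0)
    (hΩhom : ∀ c : ℝ, 0 < c → ∀ x, x ≠ 0 → Ω (c • x) = Ω x)
    (w : List (Fin N)) (hwne : w ≠ []) (xw : Euc d) (hxw : Sw S w xw = xw)
    (hxwO : xw ∈ O)
    (hint : IntegrableOn (fun y => Ω (xw - y) / ‖xw - y‖ ^ s) (C \ Sw S w '' C) μ)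
    (hne : ∫ y in C \ Sw S w '' C, Ω (xw - y) / ‖xw - y‖ ^ s ∂μ ≠ 0) :
    ∀ᵐ x ∂μ,
      (⨆ (ε : ℝ) (_ : 0 < ε), ENNReal.ofReal
        |∫ y in C \ closedBall x ε, Ω (x - y) / ‖x - y‖ ^ s ∂μ|) = ⊤ := by

  classical
  have hs0 : (0:ℝ) ≤ s := le_of_lt hs
  have hN0 : 0 < N := lt_of_lt_of_le (by norm_num) hN
  -- the Hausdorff measure of C is positive and finite
  have hμ0 : μ ≠ 0 := by
    intro h
    apply hne
    rw [h]
    simp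
  have hH0 : μH[s] C ≠ 0 := by
    intro h
    apply hμ0
    rw [hμ, Measure.restrict_eq_zero.mpr h, smul_zero]
  have hHtop : μH[s] C ≠ ⊤ := by
    intro h
    apply hμ0
    rw [hμ, h, ENNReal.inv_top, zero_smul]
  haveI : IsProbabilityMeasure μ := ⟨mu_univ_one hCcomp hμ hH0 hHtop⟩
  -- geometric setup
  have hxwC : xw ∈ C := xw_mem_C hr hS hCne hCcomp hCinv hwne hxw
  have hCwcomp : IsCompact (Sw S w '' C) := hCcomp.image (Sw_continuous hS w)
  have hAmCw : MeasurableSet (C \ Sw S w '' C) :=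
    hCcomp.isClosed.measurableSet.diff hCwcomp.isClosed.measurableSet
  have hclosO : C ⊆ closure O := C_subset_closure_O hN0 hr hS hCcomp hCinv hOsub hSOSC
  have hxwSwO : xw ∈ Sw S w '' O := ⟨xw, hxwO, hxw⟩
  have hSwOopen : IsOpen (Sw S w '' O) := Sw_image_open hr hS w hOop
  obtain ⟨d0, hd0pos, hd0ball⟩ := Metric.isOpen_iff.1 hSwOopen xw hxwSwO
  have hCvclos : ∀ v : List (Fin N), Sw S v '' C ⊆ closure (Sw S v '' O) := by
    intro v
    calc Sw S v '' C ⊆ Sw S v '' closure O := Set.image_mono hclosO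
      _ ⊆ closure (Sw S v '' O) := image_closure_subset_closure_image (Sw_continuous hS v)
  have hfarC : ∀ y ∈ C \ Sw S w '' C, d0 ≤ dist xw y := by
    intro y hy
    by_contra hcon
    push_neg at hcon
    have hyball : y ∈ Metric.ball xw d0 := by
      rw [Metric.mem_ball, dist_comm]; exact hcon
    have hySwO : y ∈ Sw S w '' O := hd0ball hyball
    obtain ⟨v, hvlen, hyv⟩ := exists_word_level hCinv w.length y hy.1
    have hvw : w ≠ v := by rintro rfl; exact hy.2 hyv
    have hyclos : y ∈ closure (Sw S v '' O) := hCvclos v hyv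
    have hdisj : Disjoint (Sw S w '' O) (Sw S v '' O) :=
      Sw_O_disjoint hr hS hOsub hOdisj w v hvlen.symm hvw
    exact Set.disjoint_left.1 (hdisj.closure_right hSwOopen) hySwO hyclos
  obtain ⟨M, hM0, hMb⟩ := omega_bound hd hΩc hΩhom
  -- the nonzero integral
  set I := ∫ y in C \ Sw S w '' C, Ω (xw - y) / ‖xw - y‖ ^ s ∂μ with hI
  have hIpos : 0 < |I| := abs_pos.mpr hne
  -- continuity of the potential F
  set F : Euc d → ℝ := fun z => ∫ y in C \ Sw S w '' C, Ω (z - y) / ‖z - y‖ ^ s ∂μ with hF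
  have hFcont : ContinuousAt F xw := F_continuousAt hs hΩc hM0 hMb hAmCw hd0pos hfarC
  have hFxw : F xw = I := rfl
  obtain ⟨δF, hδF0, hδFball⟩ := Metric.mem_nhds_iff.1
    (hFcont (Metric.ball_mem_nhds (F xw) (by positivity : (0:ℝ) < |I|/4)))
  have hδFprop : ∀ z : Euc d, dist z xw < δF → |F z - I| < |I|/4 := by
    intro z hz
    have := hδFball (Metric.mem_ball.2 hz)
    rw [Set.mem_preimage, Metric.mem_ball, hFxw, Real.dist_eq] at this
    exact this
  set δ1 := min δF (d0/2) with hδ1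
  have hδ1pos : 0 < δ1 := lt_min hδF0 (by linarith)
  have hδ1d0 : δ1 ≤ d0/2 := min_le_right _ _
  have hδ1δF : δ1 ≤ δF := min_le_left _ _
  -- ρ w < 1
  have hρw : rho r w < 1 := by
    match w, hwne with
    | i :: t, _ =>
      have h1 := (hr i).2
      have h2 := rho_le_one hr t
      have h3 := rho_pos hr t
      rw [rho_cons]
      nlinarith
  have hρw0 : 0 < rho r w := rho_pos hr w
  -- choice of J
  obtain ⟨Jn, hJn⟩ : ∃ Jn : ℕ, rho r w ^ Jn * Metric.diam C < δ1 := by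
    have := (tendsto_pow_atTop_nhds_zero_of_lt_one (le_of_lt hρw0) hρw).mul_const
      (Metric.diam C)
    rw [zero_mul] at this
    exact (this.eventually (gt_mem_nhds hδ1pos)).exists
  have hJprop : ∀ m, Jn ≤ m → ∀ z ∈ Sw S (wrep w m) '' C, dist z xw < δ1 := by
    intro m hm z hz
    have hxwm : xw ∈ Sw S (wrep w m) '' C := ⟨xw, hxwC, Sw_wrep hxw m⟩
    calc dist z xw ≤ Metric.diam (Sw S (wrep w m) '' C) :=
          Metric.dist_le_diam_of_mem (hCcomp.image (Sw_continuous hS _)).isBounded hz hxwm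
      _ ≤ rho r (wrep w m) * Metric.diam C := diam_Sw_le hr hS _ hCcomp.isBounded
      _ = rho r w ^ m * Metric.diam C := by rw [rho_wrep]
      _ ≤ rho r w ^ Jn * Metric.diam C := by
          apply mul_le_mul_of_nonneg_right _ Metric.diam_nonneg
          exact pow_le_pow_of_le_one (le_of_lt hρw0) (le_of_lt hρw) hm
      _ < δ1 := hJn
  -- MAIN CLAIM
  have main : ∀ K : ℝ, ∀ x, x ∈ C → (∀ Mn : ℕ, ∃ u : List (Fin N), x ∈ Sw S (u ++ wrep w Mn) '' C) →
      ∃ ε : ℝ, 0 < ε ∧ K < |∫ y in C \ closedBall x ε, Ω (x - y) / ‖x - y‖ ^ s ∂μ| := by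
    intro K x hxC hxpat
    set B0 := M / (d0/4) ^ s with hB0
    have hd04 : (0:ℝ) < d0/4 := by linarith
    have hB0nn : 0 ≤ B0 := div_nonneg hM0 (le_of_lt (Real.rpow_pos_of_pos hd04 s))
    have h34 : (0:ℝ) < 3*|I|/4 := by positivity
    obtain ⟨m', hm'⟩ := exists_nat_gt ((2*K + 2*B0) / (3*|I|/4))
    have hm'big : 2*K + 2*B0 < m' * (3*|I|/4) := by
      calc 2*K + 2*B0 = ((2*K+2*B0)/(3*|I|/4)) * (3*|I|/4) := by field_simp
        _ < m' * (3*|I|/4) := mul_lt_mul_of_pos_right hm' h34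
    obtain ⟨u, hxu⟩ := hxpat (Jn + m')
    set m := Jn + m' with hmdef
    set v : ℕ → List (Fin N) := fun j => u ++ wrep w j with hv
    have hv0 : v 0 = u := by simp [hv, wrep_zero]
    have hvj1 : ∀ j : ℕ, v (j+1) = v j ++ w := by
      intro j
      simp only [hv]
      rw [wrep_succ', ← List.append_assoc]
    have hρv : ∀ j : ℕ, rho r (v j) = rho r u * rho r w ^ j := by
      intro j
      simp only [hv]
      rw [rho_append, rho_wrep]
    have hρvpos : ∀ j, 0 < rho r (v j) := fun j => rho_pos hr _
    have hCvj : ∀ j, MeasurableSet (Sw S (v j) '' C) := fun j =>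
      (hCcomp.image (Sw_continuous hS _)).isClosed.measurableSet
    have hCvjC : ∀ j, Sw S (v j) '' C ⊆ C := fun j => Sw_image_C_subset hCinv _
    have hdecomp : ∀ j, j ≤ m → x ∈ Sw S (v j) '' (Sw S (wrep w (m - j)) '' C) := by
      intro j hj
      have heq : u ++ wrep w m = v j ++ wrep w (m - j) := by
        simp only [hv]
        rw [List.append_assoc, ← wrep_add]
        congr 2
        omega
      rw [← Set.image_comp, ← Sw_append, ← heq]
      exact hxu
    have hxin : ∀ j, j ≤ m → x ∈ Sw S (v j) '' C := fun j hj =>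
      Set.image_mono (Sw_image_C_subset hCinv _) (hdecomp j hj)
    set x' : ℕ → Euc d := fun j => Function.invFun (Sw S (v j)) x with hx'
    have hSwx' : ∀ j, Sw S (v j) (x' j) = x := fun j =>
      Function.rightInverse_invFun (Sw_bijective hr hS (v j)).2 x
    have hx'mem : ∀ j, j ≤ m → x' j ∈ Sw S (wrep w (m - j)) '' C := by
      intro j hj
      obtain ⟨z, hz, hzx⟩ := hdecomp j hj
      have hzeq : x' j = z := by
        simp only [hx']
        rw [← hzx]
        exact Function.leftInverse_invFun (Sw_bijective hr hS (v j)).1 z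
      rw [hzeq]; exact hz
    have hx'C : ∀ j, j ≤ m → x' j ∈ C := fun j hj =>
      Sw_image_C_subset hCinv _ (hx'mem j hj)
    have hx'close : ∀ j, j ≤ m' → dist (x' j) xw < δ1 := by
      intro j hj
      apply hJprop (m - j) (by omega)
      exact hx'mem j (by omega)
    -- separation estimate
    have hsep : ∀ j, j ≤ m' → ∀ y ∈ C \ Sw S (v j) '' C,
        (d0/4) * rho r (v j) < dist x y := by
      intro j hj y hy
      have hu0 : 0 < rho r u := rho_pos hr u
      by_cases hyu : y ∈ Sw S u '' C
      · have hP0 : y ∈ Sw S (v 0) '' C := by rw [hv0]; exact hyu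
        obtain ⟨l, hlj, hPl, hPl1⟩ :=
          exists_maximal_nat (fun l => y ∈ Sw S (v l) '' C) j hP0 hy.2
        obtain ⟨y'', hy''C, hy''⟩ := hPl
        have hy''notCw : y'' ∉ Sw S w '' C := by
          intro hcon
          obtain ⟨t, htC, hts⟩ := hcon
          apply hPl1
          rw [hvj1 l, Sw_append]
          exact ⟨t, htC, by rw [Function.comp_apply, hts, hy'']⟩
        have hfary'' : d0 ≤ dist xw y'' := hfarC y'' ⟨hy''C, hy''notCw⟩
        have hlm' : l ≤ m' := le_trans (le_of_lt hlj) hj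
        have hclosel : dist (x' l) xw < δ1 := hx'close l hlm'
        have hdistxy : dist x y = rho r (v l) * dist (x' l) y'' := by
          rw [← hSwx' l, ← hy'']
          exact dist_Sw hr hS _ _ _
        have hge : d0/2 ≤ dist (x' l) y'' := by
          have htri := dist_triangle xw (x' l) y''
          have h1 : dist xw (x' l) < δ1 := by rw [dist_comm]; exact hclosel
          linarith
        rw [hdistxy, hρv j, hρv l]
        have hll : rho r w ^ j ≤ rho r w ^ l :=
          pow_le_pow_of_le_one (le_of_lt hρw0) (le_of_lt hρw) (le_of_lt hlj)
        have hwl : 0 < rho r w ^ l := pow_pos hρw0 l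
        calc (d0/4) * (rho r u * rho r w ^ j) ≤ (d0/4) * (rho r u * rho r w ^ l) := by
              apply mul_le_mul_of_nonneg_left _ (le_of_lt hd04)
              exact mul_le_mul_of_nonneg_left hll (le_of_lt hu0)
          _ < (d0/2) * (rho r u * rho r w ^ l) :=
              mul_lt_mul_of_pos_right (by linarith) (mul_pos hu0 hwl)
          _ ≤ (rho r u * rho r w ^ l) * dist (x' l) y'' := by
              rw [mul_comm (d0/2) (rho r u * rho r w ^ l)]
              exact mul_le_mul_of_nonneg_left hge (le_of_lt (mul_pos hu0 hwl))
      · obtain ⟨v', hv'len, hyv'⟩ := exists_word_level hCinv u.length y hy.1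
        have hv'u : u ≠ v' := by rintro rfl; exact hyu hyv'
        have hx0 : Sw S u (x' 0) = x := by rw [← hv0]; exact hSwx' 0
        have hx'0close : dist (x' 0) xw < δ1 := hx'close 0 (Nat.zero_le _)
        have hballsub : Metric.ball x (rho r u * (d0/2)) ⊆ Sw S u '' O := by
          have h1 : Metric.ball x (rho r u * (d0/2)) ⊆
              Sw S u '' Metric.ball (x' 0) (d0/2) := by
            have h2 := ball_subset_Sw_image hr hS u (x' 0) (d0/2)
            rw [hx0] at h2
            exact h2
          refine h1.trans (Set.image_mono ?_)
          intro z hz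
          have h2 : dist z xw < d0 := by
            have h3 := Metric.mem_ball.1 hz
            have h4 := dist_triangle z (x' 0) xw
            linarith
          exact Sw_image_O_subset hOsub w (hd0ball (Metric.mem_ball.2 h2))
        have hdisj : Disjoint (Sw S u '' O) (Sw S v' '' O) :=
          Sw_O_disjoint hr hS hOsub hOdisj u v' hv'len.symm hv'u
        have hdisj2 : Disjoint (Metric.ball x (rho r u * (d0/2))) (closure (Sw S v' '' O)) :=
          (hdisj.mono_left hballsub).closure_right Metric.isOpen_ball
        have hdge : rho r u * (d0/2) ≤ dist x y := by
          by_contra hlt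
          push_neg at hlt
          have hyb : y ∈ Metric.ball x (rho r u * (d0/2)) := by
            rw [Metric.mem_ball, dist_comm]
            exact hlt
          exact Set.disjoint_left.1 hdisj2 hyb (hCvclos v' hyv')
        rw [hρv j]
        have hwj : rho r w ^ j ≤ 1 := pow_le_one₀ (le_of_lt hρw0) (le_of_lt hρw)
        have hwjpos : 0 < rho r w ^ j := pow_pos hρw0 j
        calc (d0/4) * (rho r u * rho r w ^ j) ≤ (d0/4) * rho r u := by
              apply mul_le_mul_of_nonneg_left _ (le_of_lt hd04)
              exact mul_le_of_le_one_right (le_of_lt hu0) hwj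
          _ < (d0/2) * rho r u := mul_lt_mul_of_pos_right (by linarith) hu0
          _ ≤ dist x y := by rw [mul_comm]; exact hdge
    -- truncation radii
    set ε : ℕ → ℝ := fun j => (d0/4) * rho r (v j) with hε
    have hεpos : ∀ j, 0 < ε j := fun j => mul_pos hd04 (hρvpos j)
    have hcb : ∀ j, j ≤ m' → C \ closedBall x (ε j) =
        (C \ Sw S (v j) '' C) ∪ ((Sw S (v j) '' C) \ closedBall x (ε j)) := by
      intro j hj
      ext y
      constructor
      · rintro ⟨hyC, hyn⟩
        by_cases hyv : y ∈ Sw S (v j) '' C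
        · exact Or.inr ⟨hyv, hyn⟩
        · exact Or.inl ⟨hyC, hyv⟩
      · rintro (⟨hyC, hyv⟩ | ⟨hyv, hyn⟩)
        · refine ⟨hyC, ?_⟩
          intro hcon
          have h1 := hsep j hj y ⟨hyC, hyv⟩
          have h2 : dist y x ≤ ε j := Metric.mem_closedBall.1 hcon
          rw [dist_comm] at h2
          simp only [hε] at h2
          linarith
        · exact ⟨hCvjC j hyv, hyn⟩
    have hGint : ∀ j, j ≤ m' → IntegrableOn (fun y => Ω (x - y) / ‖x - y‖ ^ s)
        (C \ Sw S (v j) '' C) μ ∧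
        |∫ y in C \ Sw S (v j) '' C, Ω (x - y) / ‖x - y‖ ^ s ∂μ| ≤
          M / (ε j) ^ s * (μ (C \ Sw S (v j) '' C)).toReal := by
      intro j hj
      apply integrable_far hs hΩc hM0 hMb x
        (hCcomp.isClosed.measurableSet.diff (hCvj j)) (hεpos j)
      intro y hy
      exact le_of_lt (hsep j hj y hy)
    have hΦint : ∀ j, j ≤ m' → IntegrableOn (fun y => Ω (x - y) / ‖x - y‖ ^ s)
        ((Sw S (v j) '' C) \ closedBall x (ε j)) μ ∧
        |∫ y in (Sw S (v j) '' C) \ closedBall x (ε j), Ω (x - y) / ‖x - y‖ ^ s ∂μ| ≤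
          M / (ε j) ^ s * (μ ((Sw S (v j) '' C) \ closedBall x (ε j))).toReal := by
      intro j hj
      apply integrable_far hs hΩc hM0 hMb x
        ((hCvj j).diff measurableSet_closedBall) (hεpos j)
      intro y hy
      have h1 := hy.2
      rw [Metric.mem_closedBall, not_le] at h1
      rw [dist_comm]
      exact le_of_lt h1
    have hΦbd : ∀ j, j ≤ m' →
        |∫ y in (Sw S (v j) '' C) \ closedBall x (ε j), Ω (x - y) / ‖x - y‖ ^ s ∂μ| ≤ B0 := by
      intro j hj
      refine le_trans (hΦint j hj).2 ?_
      have hρs : (0:ℝ) < rho r (v j) ^ s := Real.rpow_pos_of_pos (hρvpos j) s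
      have hds : (0:ℝ) < (d0/4) ^ s := Real.rpow_pos_of_pos hd04 s
      have hμv : (μ ((Sw S (v j) '' C) \ closedBall x (ε j))).toReal ≤ rho r (v j) ^ s := by
        have h1 : μ ((Sw S (v j) '' C) \ closedBall x (ε j)) ≤
            ENNReal.ofReal (rho r (v j) ^ s) := by
          rw [← mu_Sw_image hs0 hr hS hCcomp hCinv hμ hH0 hHtop (v j)]
          exact measure_mono Set.diff_subset
        calc (μ ((Sw S (v j) '' C) \ closedBall x (ε j))).toReal
            ≤ (ENNReal.ofReal (rho r (v j) ^ s)).toReal :=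
              ENNReal.toReal_mono ENNReal.ofReal_ne_top h1
          _ = rho r (v j) ^ s := ENNReal.toReal_ofReal (le_of_lt hρs)
      have hεs : (ε j) ^ s = (d0/4) ^ s * rho r (v j) ^ s := by
        simp only [hε]
        exact Real.mul_rpow (le_of_lt hd04) (le_of_lt (hρvpos j))
      have hεspos : (0:ℝ) < (ε j) ^ s := Real.rpow_pos_of_pos (hεpos j) s
      calc M / (ε j) ^ s * (μ ((Sw S (v j) '' C) \ closedBall x (ε j))).toReal
          ≤ M / (ε j) ^ s * (rho r (v j) ^ s) := by
            apply mul_le_mul_of_nonneg_left hμv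
            positivity
        _ = B0 := by
            rw [hεs, hB0]
            field_simp
    have hT : ∀ j, j ≤ m' → (∫ y in C \ closedBall x (ε j), Ω (x - y) / ‖x - y‖ ^ s ∂μ) =
        (∫ y in C \ Sw S (v j) '' C, Ω (x - y) / ‖x - y‖ ^ s ∂μ) +
        ∫ y in (Sw S (v j) '' C) \ closedBall x (ε j), Ω (x - y) / ‖x - y‖ ^ s ∂μ := by
      intro j hj
      rw [hcb j hj]
      apply setIntegral_union
      · rw [Set.disjoint_left]
        rintro y ⟨_, hy2⟩ ⟨hy3, _⟩
        exact hy2 hy3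
      · exact (hCvj j).diff measurableSet_closedBall
      · exact (hGint j hj).1
      · exact (hΦint j hj).1
    have htel : ∀ j, j < m' →
        (∫ y in C \ Sw S (v (j+1)) '' C, Ω (x - y) / ‖x - y‖ ^ s ∂μ) =
        (∫ y in C \ Sw S (v j) '' C, Ω (x - y) / ‖x - y‖ ^ s ∂μ) + F (x' j) := by
      intro j hj
      have hsub1 : Sw S (v (j+1)) '' C ⊆ Sw S (v j) '' C := by
        rw [hvj1 j, Sw_append, Set.image_comp]
        exact Set.image_mono (Sw_image_C_subset hCinv w)
      have hsetid : C \ Sw S (v (j+1)) '' C =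
          (C \ Sw S (v j) '' C) ∪ ((Sw S (v j) '' C) \ Sw S (v (j+1)) '' C) :=
        (Set.diff_union_diff_cancel (hCvjC j) hsub1).symm
      have hshellsub : (Sw S (v j) '' C) \ Sw S (v (j+1)) '' C ⊆ C \ Sw S (v (j+1)) '' C :=
        fun y hy => ⟨hCvjC j hy.1, hy.2⟩
      have hshellint : IntegrableOn (fun y => Ω (x - y) / ‖x - y‖ ^ s)
          ((Sw S (v j) '' C) \ Sw S (v (j+1)) '' C) μ :=
        (hGint (j+1) (by omega)).1.mono_set hshellsub
      rw [hsetid, setIntegral_union ?_ ((hCvj j).diff (hCvj (j+1)))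
        (hGint j (by omega)).1 hshellint]
      · congr 1
        have hxB : x ∈ Sw S (v j ++ w) '' C := by
          rw [← hvj1 j]
          exact hxin (j+1) (by omega)
        have hshell := shell_integral hs hr hS hCcomp hCinv hμ hΩc hΩhom (v j) w x hxB
        rw [← hvj1 j] at hshell
        exact hshell
      · rw [Set.disjoint_left]
        rintro y ⟨_, hy2⟩ ⟨hy3, _⟩
        exact hy2 hy3
    have hGsum : ∀ n, n ≤ m' →
        (∫ y in C \ Sw S (v n) '' C, Ω (x - y) / ‖x - y‖ ^ s ∂μ) =
        (∫ y in C \ Sw S (v 0) '' C, Ω (x - y) / ‖x - y‖ ^ s ∂μ) +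
        ∑ j ∈ Finset.range n, F (x' j) := by
      intro n
      induction n with
      | zero => intro _; simp
      | succ n ih =>
        intro hn
        rw [htel n (by omega), ih (by omega), Finset.sum_range_succ]
        ring
    have hFest : ∀ j, j < m' → |F (x' j) - I| < |I|/4 := fun j hj =>
      hδFprop _ (lt_of_lt_of_le (hx'close j (by omega)) hδ1δF)
    have hsum_lb : (m' : ℝ) * (3*|I|/4) ≤ |∑ j ∈ Finset.range m', F (x' j)| := by
      have h1 : |∑ j ∈ Finset.range m', (F (x' j) - I)| ≤ m' * (|I|/4) := by
        calc |∑ j ∈ Finset.range m', (F (x' j) - I)|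
            ≤ ∑ j ∈ Finset.range m', |F (x' j) - I| := Finset.abs_sum_le_sum_abs _ _
          _ ≤ ∑ _j ∈ Finset.range m', (|I|/4) := Finset.sum_le_sum fun j hj =>
              le_of_lt (hFest j (Finset.mem_range.1 hj))
          _ = m' * (|I|/4) := by rw [Finset.sum_const, Finset.card_range, nsmul_eq_mul]
      have h2 : ∑ j ∈ Finset.range m', (F (x' j) - I) =
          (∑ j ∈ Finset.range m', F (x' j)) - m' * I := by
        rw [Finset.sum_sub_distrib, Finset.sum_const, Finset.card_range, nsmul_eq_mul]
      have h3 : |(m' : ℝ) * I| = m' * |I| := by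
        rw [abs_mul, Nat.abs_cast]
      have h4 : |(m' : ℝ) * I| ≤ |∑ j ∈ Finset.range m', F (x' j)| +
          |∑ j ∈ Finset.range m', (F (x' j) - I)| := by
        rw [h2]
        exact abs_sub _ _ |>.trans_eq' (by ring_nf)
      rw [h3] at h4
      linarith
    -- conclusion
    have hTm := hT m' le_rfl
    have hT0 := hT 0 (Nat.zero_le _)
    have hdiffG : (∫ y in C \ Sw S (v m') '' C, Ω (x - y) / ‖x - y‖ ^ s ∂μ) -
        (∫ y in C \ Sw S (v 0) '' C, Ω (x - y) / ‖x - y‖ ^ s ∂μ) =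
        ∑ j ∈ Finset.range m', F (x' j) := by
      rw [hGsum m' le_rfl]; ring
    have hΦm := hΦbd m' le_rfl
    have hΦ0 := hΦbd 0 (Nat.zero_le _)
    set Tm := ∫ y in C \ closedBall x (ε m'), Ω (x - y) / ‖x - y‖ ^ s ∂μ with hTmdef
    set T0 := ∫ y in C \ closedBall x (ε 0), Ω (x - y) / ‖x - y‖ ^ s ∂μ with hT0def
    have hkey : 2*K < |Tm| + |T0| := by
      have h5 : |∑ j ∈ Finset.range m', F (x' j)| ≤ |Tm - T0| + 2*B0 := by
        have h6 : (∑ j ∈ Finset.range m', F (x' j)) = (Tm - T0) -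
            ((∫ y in (Sw S (v m') '' C) \ closedBall x (ε m'), Ω (x - y) / ‖x - y‖ ^ s ∂μ) -
             (∫ y in (Sw S (v 0) '' C) \ closedBall x (ε 0), Ω (x - y) / ‖x - y‖ ^ s ∂μ)) := by
          rw [hTm, hT0, ← hdiffG]
          ring
        rw [h6]
        have h7 := abs_sub (Tm - T0)
          ((∫ y in (Sw S (v m') '' C) \ closedBall x (ε m'), Ω (x - y) / ‖x - y‖ ^ s ∂μ) -
           (∫ y in (Sw S (v 0) '' C) \ closedBall x (ε 0), Ω (x - y) / ‖x - y‖ ^ s ∂μ))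
        have h8 := abs_sub
          (∫ y in (Sw S (v m') '' C) \ closedBall x (ε m'), Ω (x - y) / ‖x - y‖ ^ s ∂μ)
          (∫ y in (Sw S (v 0) '' C) \ closedBall x (ε 0), Ω (x - y) / ‖x - y‖ ^ s ∂μ)
        linarith
      have h9 : |Tm - T0| ≤ |Tm| + |T0| := abs_sub _ _
      linarith
    by_cases hc : K < |Tm|
    · exact ⟨ε m', hεpos m', hc⟩
    · push_neg at hc
      exact ⟨ε 0, hεpos 0, by linarith⟩
  -- A.E. CONCLUSION
  have hae1 : ∀ᵐ x ∂μ, x ∈ C := by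
    rw [ae_iff]
    have h0 := mu_compl_C hCcomp hμ
    apply measure_mono_null _ h0
    intro x hx
    exact hx
  have hae2 : ∀ᵐ x ∂μ, ∀ Mn : ℕ, x ∈ C → ∃ u : List (Fin N), x ∈ Sw S (u ++ wrep w Mn) '' C := by
    rw [ae_all_iff]
    intro Mn
    have hz := pattern_ae hs0 hr hS hCcomp hCinv hdim hμ hH0 hHtop (wrep w Mn)
    rw [ae_iff]
    apply measure_mono_null _ hz
    intro x hx
    simp only [Set.mem_setOf_eq, not_forall] at hx
    obtain ⟨hxC, hxn⟩ := hx
    refine ⟨hxC, ?_⟩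
    intro hcon
    obtain ⟨u, hu⟩ := Set.mem_iUnion.1 hcon
    exact hxn ⟨u, hu⟩
  filter_upwards [hae1, hae2] with x hxC hxpat
  by_contra hsup
  have hblt : (⨆ (ε : ℝ) (_ : 0 < ε), ENNReal.ofReal
      |∫ y in C \ closedBall x ε, Ω (x - y) / ‖x - y‖ ^ s ∂μ|) ≠ ⊤ := hsup
  set b := ⨆ (ε : ℝ) (_ : 0 < ε), ENNReal.ofReal
      |∫ y in C \ closedBall x ε, Ω (x - y) / ‖x - y‖ ^ s ∂μ| with hbdef
  obtain ⟨ε, hεpos, hKlt⟩ := main b.toReal x hxC (fun Mn => hxpat Mn hxC)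
  have hle : ENNReal.ofReal |∫ y in C \ closedBall x ε, Ω (x - y) / ‖x - y‖ ^ s ∂μ| ≤ b := by
    rw [hbdef]
    exact le_iSup₂ (f := fun (ε : ℝ) (_ : 0 < ε) => ENNReal.ofReal
      |∫ y in C \ closedBall x ε, Ω (x - y) / ‖x - y‖ ^ s ∂μ|) ε hεpos
  have hlt : b < ENNReal.ofReal |∫ y in C \ closedBall x ε, Ω (x - y) / ‖x - y‖ ^ s ∂μ| := by
    calc b = ENNReal.ofReal b.toReal := (ENNReal.ofReal_toReal hblt).symm
      _ < _ := (ENNReal.ofReal_lt_ofReal_iff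
          (lt_of_le_of_lt ENNReal.toReal_nonneg hKlt)).2 hKlt
  exact absurd hle (not_le.2 hlt)
end
end

section
/- Let S = {S_i}_{i∈E} be a separated similarity IFS on ℝ^d with attractor C of similarity dimension s and μ = H^s(C)^{-1}·H^s⌊C. Fix a nonempty finite word w ∈ E^*, let ξ_w be the unique fixed point of S_w, and fix a finite r ∈ ℕ. Then for every function Ω : ℝ^d∖{0} → ℝ that is C^r and homogeneous of degree zero, and for every ε > 0, there exists Ω* : ℝ^d∖{0} → ℝ, C^r and homogeneous of degree zero, such that ∫_{C∖C_w} Ω*(x−ξ_w)/|x−ξ_w|^s dμ(x) ≠ 0 and sup_{x∈S^{d-1}} ‖D^i(Ω*−Ω)(x)‖ ≤ ε for every 0 ≤ i ≤ r, where D^i denotes the i-th (Fréchet) derivative. -/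
open MeasureTheory Metric Set Filter
open scoped ENNReal Topology NNReal

noncomputable section

namespace Stmt8Aux
variable {d N : ℕ}

def rho {N : ℕ} (r : Fin N → ℝ) : List (Fin N) → ℝ
  | [] => 1
  | i :: t => r i * rho r t

variable {r : Fin N → ℝ} {S : Fin N → Euc d → Euc d} {C : Set (Euc d)}

lemma rho_nonneg (hr : ∀ i, 0 < r i) (w : List (Fin N)) : 0 ≤ rho r w := by
  induction w with
  | nil => norm_num [rho]
  | cons i t ih => exact mul_nonneg (hr i).le ih

lemma rho_pos (hr : ∀ i, 0 < r i) (w : List (Fin N)) : 0 < rho r w := by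
  induction w with
  | nil => norm_num [rho]
  | cons i t ih => exact mul_pos (hr i) ih

lemma rho_le_one (hr : ∀ i, r i ∈ Set.Ioo (0:ℝ) 1) (w : List (Fin N)) : rho r w ≤ 1 := by
  induction w with
  | nil => norm_num [rho]
  | cons i t ih =>
    have := (hr i).2
    have h0 := rho_nonneg (fun i => (hr i).1) t
    calc r i * rho r t ≤ 1 * 1 := by
          exact mul_le_mul this.le ih h0 zero_le_one
      _ = 1 := by ring

lemma rho_lt_one (hr : ∀ i, r i ∈ Set.Ioo (0:ℝ) 1) {w : List (Fin N)} (hw : w ≠ []) :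
    rho r w < 1 := by
  cases w with
  | nil => exact absurd rfl hw
  | cons i t =>
    have h1 := (hr i).2
    have h0 := rho_pos (fun i => (hr i).1) t
    have h2 := rho_le_one hr t
    calc r i * rho r t ≤ r i * 1 := mul_le_mul_of_nonneg_left h2 (hr i).1.le
      _ < 1 := by simpa using h1

lemma rho_le_pow (hr : ∀ i, 0 < r i) {rmax : ℝ} (hrm : ∀ i, r i ≤ rmax)
    (w : List (Fin N)) : rho r w ≤ rmax ^ w.length := by
  induction w with
  | nil => norm_num [rho]
  | cons i t ih =>
    have h0 := rho_nonneg hr t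
    have h1 : (0:ℝ) < rmax := lt_of_lt_of_le (hr i) (hrm i)
    calc r i * rho r t ≤ rmax * rmax ^ t.length := by
          exact mul_le_mul (hrm i) ih h0 h1.le
      _ = rmax ^ (i :: t).length := by rw [List.length_cons]; ring

lemma Sw_dist (hr : ∀ i, 0 < r i) (hS : ∀ i x y, dist (S i x) (S i y) = r i * dist x y)
    (w : List (Fin N)) (x y : Euc d) :
    dist (Sw S w x) (Sw S w y) = rho r w * dist x y := by
  induction w with
  | nil => simp [Sw, rho]
  | cons i t ih => simp only [Sw, Function.comp_apply, hS, ih, rho]; ring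

lemma S_inj (hr : ∀ i, 0 < r i) (hS : ∀ i x y, dist (S i x) (S i y) = r i * dist x y)
    (i : Fin N) : Function.Injective (S i) := by
  intro x y h
  have := hS i x y
  rw [h, dist_self] at this
  have := (mul_eq_zero.1 this.symm).resolve_left (ne_of_gt (hr i))
  exact dist_eq_zero.1 this

lemma Sw_inj (hr : ∀ i, 0 < r i) (hS : ∀ i x y, dist (S i x) (S i y) = r i * dist x y)
    (w : List (Fin N)) : Function.Injective (Sw S w) := by
  intro x y h
  have h2 := Sw_dist hr hS w x y
  rw [h, dist_self] at h2
  have := (mul_eq_zero.1 h2.symm).resolve_left (ne_of_gt (rho_pos hr w))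
  exact dist_eq_zero.1 this

lemma S_continuous (hr : ∀ i, 0 < r i)
    (hS : ∀ i x y, dist (S i x) (S i y) = r i * dist x y) (i : Fin N) :
    Continuous (S i) := by
  apply (LipschitzWith.of_dist_le_mul (K := ⟨r i, (hr i).le⟩) ?_).continuous
  intro x y; rw [hS]; rfl

lemma Sw_continuous (hr : ∀ i, 0 < r i)
    (hS : ∀ i x y, dist (S i x) (S i y) = r i * dist x y) (w : List (Fin N)) :
    Continuous (Sw S w) := by
  induction w with
  | nil => exact continuous_id
  | cons i t ih => exact (S_continuous hr hS i).comp ih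

lemma SwC_subset (hCinv : C = ⋃ i, S i '' C) (w : List (Fin N)) : Sw S w '' C ⊆ C := by
  induction w with
  | nil => simp [Sw]
  | cons i t ih =>
    have : Sw S (i :: t) '' C = S i '' (Sw S t '' C) := Set.image_comp _ _ _
    rw [this]
    intro x hx
    obtain ⟨y, hy, rfl⟩ := hx
    have : S i y ∈ S i '' C := ⟨y, ih hy, rfl⟩
    rw [hCinv]
    exact Set.mem_iUnion.2 ⟨i, this⟩

lemma SwC_compact (hCcomp : IsCompact C) (hr : ∀ i, 0 < r i)
    (hS : ∀ i x y, dist (S i x) (S i y) = r i * dist x y) (w : List (Fin N)) :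
    IsCompact (Sw S w '' C) :=
  hCcomp.image (Sw_continuous hr hS w)

lemma SwC_cons (i : Fin N) (t : List (Fin N)) :
    Sw S (i :: t) '' C = S i '' (Sw S t '' C) := Set.image_comp _ _ _

-- fixed point of S_w lies in the cylinder C_w
lemma fixedPoint_mem
    (hr : ∀ i, r i ∈ Set.Ioo (0:ℝ) 1)
    (hS : ∀ i x y, dist (S i x) (S i y) = r i * dist x y)
    (hCne : C.Nonempty) (hCcomp : IsCompact C) (hCinv : C = ⋃ i, S i '' C)
    {w : List (Fin N)} (hw : w ≠ []) {ξ : Euc d} (hξ : Sw S w ξ = ξ) :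
    ξ ∈ Sw S w '' C := by
  have hr0 : ∀ i, 0 < r i := fun i => (hr i).1
  obtain ⟨x0, hx0⟩ := hCne
  set f := Sw S w with hf
  have hfC : ∀ x ∈ C, f x ∈ C := fun x hx => SwC_subset hCinv w ⟨x, hx, rfl⟩
  have hmem : ∀ n, f^[n] x0 ∈ C := by
    intro n
    induction n with
    | zero => simpa using hx0
    | succ n ih => rw [Function.iterate_succ_apply']; exact hfC _ ih
  have hmem2 : ∀ n, f^[n+1] x0 ∈ Sw S w '' C := by
    intro n
    rw [Function.iterate_succ_apply']
    exact ⟨f^[n] x0, hmem n, rfl⟩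
  have hdist : ∀ n, dist (f^[n] x0) ξ ≤ rho r w ^ n * dist x0 ξ := by
    intro n
    induction n with
    | zero => simp
    | succ n ih =>
      rw [Function.iterate_succ_apply']
      have : dist (f (f^[n] x0)) ξ = rho r w * dist (f^[n] x0) ξ := by
        conv_lhs => rw [← hξ]
        exact Sw_dist hr0 hS w _ _
      rw [this, pow_succ]
      have h0 := rho_pos hr0 w
      calc rho r w * dist (f^[n] x0) ξ ≤ rho r w * (rho r w ^ n * dist x0 ξ) :=
            mul_le_mul_of_nonneg_left ih h0.le
        _ = rho r w ^ n * rho r w * dist x0 ξ := by ring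
  have htend : Tendsto (fun n => f^[n+1] x0) atTop (𝓝 ξ) := by
    rw [tendsto_iff_dist_tendsto_zero]
    have h1 : Tendsto (fun n : ℕ => rho r w ^ (n+1) * dist x0 ξ) atTop (𝓝 0) := by
      have := tendsto_pow_atTop_nhds_zero_of_lt_one (rho_nonneg (fun i => (hr i).1) w)
        (rho_lt_one hr hw)
      simpa using ((this.comp (tendsto_add_atTop_nat 1)).mul_const (dist x0 ξ))
    refine squeeze_zero (fun n => dist_nonneg) (fun n => hdist (n+1)) h1
  exact ((SwC_compact hCcomp hr0 hS w).isClosed).mem_of_tendsto htend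
    (Eventually.of_forall hmem2)

-- each cylinder is relatively open in C
lemma cyl_open (hr : ∀ i, 0 < r i)
    (hS : ∀ i x y, dist (S i x) (S i y) = r i * dist x y)
    (hCcomp : IsCompact C) (hCinv : C = ⋃ i, S i '' C)
    (hsep : ∀ i j, i ≠ j → Disjoint (S i '' C) (S j '' C))
    (w : List (Fin N)) : ∃ V, IsOpen V ∧ Sw S w '' C = C ∩ V := by
  induction w with
  | nil => exact ⟨Set.univ, isOpen_univ, by simp [Sw]⟩
  | cons i t ih =>
    obtain ⟨V, hV, hEq⟩ := ih
    set K : Set (Euc d) :=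
      ⋃ j, (if j = i then S i '' (C \ V) else S j '' C) with hK
    have hKcomp : IsCompact K := by
      apply isCompact_iUnion
      intro j
      by_cases h : j = i
      · simp only [h, if_pos rfl]
        exact (hCcomp.diff hV).image (S_continuous hr hS i)
      · simp only [if_neg h]
        exact hCcomp.image (S_continuous hr hS j)
    refine ⟨Kᶜ, hKcomp.isClosed.isOpen_compl, ?_⟩
    rw [SwC_cons, hEq]
    ext x
    constructor
    · rintro ⟨y, ⟨hyC, hyV⟩, rfl⟩
      have hxC : S i y ∈ C := SwC_subset hCinv [i] ⟨y, hyC, by simp [Sw]⟩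
      refine ⟨hxC, ?_⟩
      intro hxK
      simp only [hK, Set.mem_iUnion] at hxK
      obtain ⟨j, hj⟩ := hxK
      by_cases h : j = i
      · rw [if_pos h] at hj
        obtain ⟨y', hy', hEq'⟩ := hj
        have := S_inj hr hS i hEq'
        rw [this] at hy'
        exact hy'.2 hyV
      · rw [if_neg h] at hj
        exact Set.disjoint_left.1 (hsep j i h) hj ⟨y, hyC, rfl⟩
    · rintro ⟨hxC, hxK⟩
      have hx2 : x ∈ ⋃ j, S j '' C := by rw [← hCinv]; exact hxC
      obtain ⟨j, y, hy, rfl⟩ := by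
        simpa only [Set.mem_iUnion] using hx2
      have hj : j = i := by
        by_contra h
        apply hxK
        simp only [hK, Set.mem_iUnion]
        exact ⟨j, by rw [if_neg h]; exact ⟨y, hy, rfl⟩⟩
      subst hj
      refine ⟨y, ⟨hy, ?_⟩, rfl⟩
      by_contra hyV
      apply hxK
      simp only [hK, Set.mem_iUnion]
      exact ⟨j, by rw [if_pos rfl]; exact ⟨y, ⟨hy, hyV⟩, rfl⟩⟩

/-- The descent lemma: any small set meeting `C` is captured by a cylinder of
comparable weight (up to an error `rmax ^ n`). -/
lemma lemB (hr : ∀ i, 0 < r i)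
    (hS : ∀ i x y, dist (S i x) (S i y) = r i * dist x y)
    (hCinv : C = ⋃ i, S i '' C) (hCbdd : Bornology.IsBounded C)
    {δ : ℝ} (hδpos : 0 < δ)
    (hδ : ∀ i j, i ≠ j → ∀ x ∈ S i '' C, ∀ y ∈ S j '' C, δ ≤ dist x y)
    {rmax : ℝ} (hrm : ∀ i, r i ≤ rmax) :
    ∀ (n : ℕ) (A : Set (Euc d)), A ⊆ C → A.Nonempty → Metric.diam A < δ →
      ∃ w : List (Fin N), A ⊆ Sw S w '' C ∧
        rho r w ≤ max (2 / δ * Metric.diam A) (rmax ^ n) := by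
  intro n
  induction n with
  | zero =>
    intro A hAC hAne hAd
    exact ⟨[], by simpa [Sw] using hAC, by simp [rho]⟩
  | succ n ih =>
    intro A hAC hAne hAd
    obtain ⟨a, ha⟩ := hAne
    have hAbdd : Bornology.IsBounded A := hCbdd.subset hAC
    -- a ∈ some S i₀ '' C
    have : a ∈ ⋃ i, S i '' C := by rw [← hCinv]; exact hAC ha
    obtain ⟨i₀, hai⟩ := Set.mem_iUnion.1 this
    -- A ⊆ S i₀ '' C
    have hAsub : A ⊆ S i₀ '' C := by
      intro x hx
      have : x ∈ ⋃ i, S i '' C := by rw [← hCinv]; exact hAC hx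
      obtain ⟨j, hxj⟩ := Set.mem_iUnion.1 this
      by_cases h : j = i₀
      · rwa [h] at hxj
      · exfalso
        have h1 := hδ j i₀ h x hxj a hai
        have h2 := dist_le_diam_of_mem hAbdd hx ha
        linarith
    by_cases hstop : r i₀ * δ ≤ 2 * Metric.diam A
    · refine ⟨[i₀], ?_, ?_⟩
      · rw [SwC_cons]; simpa [Sw] using hAsub
      · have : rho r [i₀] = r i₀ := by simp [rho]
        rw [this]
        refine le_max_of_le_left ?_
        rw [div_mul_eq_mul_div, le_div_iff₀ hδpos]
        linarith
    · push_neg at hstop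
      set A' := S i₀ ⁻¹' A ∩ C with hA'
      have hA'C : A' ⊆ C := Set.inter_subset_right
      have hA'ne : A'.Nonempty := by
        obtain ⟨b, hbC, hba⟩ := hai
        exact ⟨b, by rw [hA']; exact ⟨by simp [Set.mem_preimage, hba, ha], hbC⟩⟩
      have hdiam' : Metric.diam A' ≤ Metric.diam A / r i₀ := by
        apply Metric.diam_le_of_forall_dist_le (div_nonneg Metric.diam_nonneg (hr i₀).le)
        intro x hx y hy
        have h1 : dist (S i₀ x) (S i₀ y) ≤ Metric.diam A :=
          dist_le_diam_of_mem hAbdd hx.1 hy.1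
        rw [hS] at h1
        rw [le_div_iff₀ (hr i₀)]
        linarith [h1]
      have hdiam'2 : Metric.diam A' < δ := by
        have : Metric.diam A / r i₀ < δ / 2 := by
          rw [div_lt_div_iff₀ (hr i₀) two_pos] at *
          nlinarith [hr i₀]
        linarith [hdiam', hδpos]
      obtain ⟨w', hw'sub, hw'val⟩ := ih A' hA'C hA'ne hdiam'2
      refine ⟨i₀ :: w', ?_, ?_⟩
      · rw [SwC_cons]
        intro x hx
        obtain ⟨b, hbC, rfl⟩ := hAsub hx
        have hbA' : b ∈ A' := ⟨by simpa [Set.mem_preimage] using hx, hbC⟩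
        exact ⟨b, hw'sub hbA', rfl⟩
      · have : rho r (i₀ :: w') = r i₀ * rho r w' := rfl
        rw [this]
        have h2 : r i₀ * rho r w' ≤ r i₀ * max (2 / δ * Metric.diam A') (rmax ^ n) :=
          mul_le_mul_of_nonneg_left hw'val (hr i₀).le
        rw [mul_max_of_nonneg _ _ (hr i₀).le] at h2
        refine h2.trans (max_le_max ?_ ?_)
        · have h3 : r i₀ * Metric.diam A' ≤ Metric.diam A := by
            rw [le_div_iff₀' (hr i₀)] at hdiam'
            linarith [hdiam']
          calc r i₀ * (2 / δ * Metric.diam A') = 2 / δ * (r i₀ * Metric.diam A') := by ring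
            _ ≤ 2 / δ * Metric.diam A := by
                apply mul_le_mul_of_nonneg_left h3 (by positivity)
        · rw [pow_succ]
          have hrm0 : 0 ≤ rmax ^ n := pow_nonneg (le_trans (hr i₀).le (hrm i₀)) n
          calc r i₀ * rmax ^ n ≤ rmax * rmax ^ n :=
                mul_le_mul_of_nonneg_right (hrm i₀) hrm0
            _ = rmax ^ n * rmax := by ring

/-- Tree covering lemma: a finite family of cylinders covering `C` has total weight `≥ 1`. -/
lemma treeLemma (hN : 0 < N) (hr : ∀ i, r i ∈ Set.Ioo (0:ℝ) 1)
    (hS : ∀ i x y, dist (S i x) (S i y) = r i * dist x y)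
    (hCne : C.Nonempty) (hCinv : C = ⋃ i, S i '' C)
    (hsep : ∀ i j, i ≠ j → Disjoint (S i '' C) (S j '' C))
    {s : ℝ} (hdim : ∑ i, r i ^ s = 1) :
    ∀ (k : ℕ) (W : Finset (List (Fin N))), (∑ w ∈ W, w.length) = k →
      (C ⊆ ⋃ w ∈ W, Sw S w '' C) → 1 ≤ ∑ w ∈ W, rho r w ^ s := by
  classical
  haveI : NeZero N := ⟨hN.ne'⟩
  have hr0 : ∀ i, 0 < r i := fun i => (hr i).1
  intro k
  induction k using Nat.strong_induction_on with
  | _ k IH =>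
    intro W hk hcov
    by_cases hnil : ([] : List (Fin N)) ∈ W
    · have h1 : rho r ([] : List (Fin N)) ^ s = 1 := by
        simp [rho, Real.one_rpow]
      calc (1:ℝ) = rho r ([] : List (Fin N)) ^ s := h1.symm
        _ ≤ ∑ w ∈ W, rho r w ^ s :=
          Finset.single_le_sum (fun w _ => Real.rpow_nonneg (rho_nonneg hr0 w) s) hnil
    · -- every word in W is nonempty; fiber over the head
      have hcov_i : ∀ i : Fin N, ∀ x ∈ C, ∃ w ∈ W, w.headI = i ∧ x ∈ Sw S w.tail '' C := by
        intro i x hx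
        have hSx : S i x ∈ C := SwC_subset hCinv [i] ⟨x, hx, by simp [Sw]⟩
        obtain ⟨w, hwW, hmem⟩ := Set.mem_iUnion₂.1 (hcov hSx)
        cases w with
        | nil => exact absurd hwW hnil
        | cons j t =>
          rw [SwC_cons] at hmem
          obtain ⟨y, hyt, hEq⟩ := hmem
          have hj : j = i := by
            by_contra h
            have h1 : S i x ∈ S j '' C := ⟨y, SwC_subset hCinv t hyt, hEq⟩
            exact Set.disjoint_left.1 (hsep j i h) h1 ⟨x, hx, rfl⟩
          subst hj
          have hxy : y = x := S_inj hr0 hS j hEq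
          exact ⟨j :: t, hwW, rfl, by rw [List.tail_cons]; rw [← hxy]; exact hyt⟩
      set Fi : Fin N → Finset (List (Fin N)) :=
        fun i => W.filter (fun w => w.headI = i) with hFi
      have htail : ∀ i, ∀ w ∈ Fi i, w = i :: w.tail := by
        intro i w hw
        rw [hFi, Finset.mem_filter] at hw
        cases w with
        | nil => exact absurd hw.1 hnil
        | cons j t => rw [List.headI_cons] at hw; rw [hw.2]; rfl
      have hinj : ∀ i, Set.InjOn List.tail (Fi i : Set (List (Fin N))) := by
        intro i w hw w' hw' hww'
        rw [htail i w hw, htail i w' hw', hww']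
      -- the tail families
      set Wi : Fin N → Finset (List (Fin N)) := fun i => (Fi i).image List.tail with hWi
      have hWicov : ∀ i, C ⊆ ⋃ t ∈ Wi i, Sw S t '' C := by
        intro i x hx
        obtain ⟨w, hwW, hhead, hmem⟩ := hcov_i i x hx
        have hwFi : w ∈ Fi i := by rw [hFi, Finset.mem_filter]; exact ⟨hwW, hhead⟩
        exact Set.mem_iUnion₂.2 ⟨w.tail, Finset.mem_image_of_mem _ hwFi, hmem⟩
      have hFine : ∀ i, (Fi i).Nonempty := by
        intro i
        obtain ⟨x, hx⟩ := hCne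
        obtain ⟨w, hwW, hhead, _⟩ := hcov_i i x hx
        exact ⟨w, by rw [hFi, Finset.mem_filter]; exact ⟨hwW, hhead⟩⟩
      have hlen : ∀ i, ∑ t ∈ Wi i, t.length < k := by
        intro i
        have h1 : ∑ t ∈ Wi i, t.length = ∑ w ∈ Fi i, w.tail.length :=
          Finset.sum_image fun w hw w' hw' h => hinj i hw hw' h
        have h2 : ∑ w ∈ Fi i, w.tail.length < ∑ w ∈ Fi i, w.length := by
          apply Finset.sum_lt_sum_of_nonempty (hFine i)
          intro w hw
          conv_rhs => rw [htail i w hw]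
          simp
        have h3 : ∑ w ∈ Fi i, w.length ≤ ∑ w ∈ W, w.length :=
          Finset.sum_le_sum_of_subset (Finset.filter_subset _ _)
        omega
      have hIH : ∀ i, 1 ≤ ∑ t ∈ Wi i, rho r t ^ s :=
        fun i => IH _ (hlen i) (Wi i) rfl (hWicov i)
      have hsplit : ∑ w ∈ W, rho r w ^ s = ∑ i : Fin N, ∑ w ∈ Fi i, rho r w ^ s :=
        (Finset.sum_fiberwise W (fun w => w.headI) (fun w => rho r w ^ s)).symm
      have hfib : ∀ i : Fin N, r i ^ s ≤ ∑ w ∈ Fi i, rho r w ^ s := by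
        intro i
        have h1 : ∑ w ∈ Fi i, rho r w ^ s = ∑ w ∈ Fi i, r i ^ s * rho r w.tail ^ s := by
          apply Finset.sum_congr rfl
          intro w hw
          conv_lhs => rw [htail i w hw]
          rw [show rho r (i :: w.tail) = r i * rho r w.tail from rfl,
            Real.mul_rpow (hr0 i).le (rho_nonneg hr0 _)]
        rw [h1, ← Finset.mul_sum]
        have h2 : ∑ t ∈ Wi i, rho r t ^ s = ∑ w ∈ Fi i, rho r w.tail ^ s :=
          Finset.sum_image fun w hw w' hw' h => hinj i hw hw' h
        rw [← h2]
        nlinarith [hIH i, Real.rpow_nonneg (hr0 i).le s]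
      calc (1:ℝ) = ∑ i : Fin N, r i ^ s := hdim.symm
        _ ≤ ∑ i : Fin N, ∑ w ∈ Fi i, rho r w ^ s := Finset.sum_le_sum fun i _ => hfib i
        _ = ∑ w ∈ W, rho r w ^ s := hsplit.symm

lemma pow_rpow_comm {x : ℝ} (hx : 0 ≤ x) (s : ℝ) (m : ℕ) : (x ^ m) ^ s = (x ^ s) ^ m := by
  induction m with
  | zero => simp [Real.one_rpow]
  | succ n ih => rw [pow_succ, pow_succ, Real.mul_rpow (pow_nonneg hx n) hx, ih]

lemma sum_image_le_real {α β : Type*} [DecidableEq β] (G : Finset α) (g : α → β)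
    (f : β → ℝ) (hf : ∀ b, 0 ≤ f b) : ∑ b ∈ G.image g, f b ≤ ∑ a ∈ G, f (g a) := by
  classical
  rw [← Finset.sum_fiberwise_of_maps_to (g := g) (t := G.image g)
    (fun a ha => Finset.mem_image_of_mem g ha) (fun a => f (g a))]
  apply Finset.sum_le_sum
  intro b hb
  obtain ⟨a₀, ha₀, rfl⟩ := Finset.mem_image.1 hb
  have ha₀' : a₀ ∈ G.filter (fun a => g a = g a₀) := by
    rw [Finset.mem_filter]; exact ⟨ha₀, rfl⟩
  exact Finset.single_le_sum (fun a _ => hf (g a)) ha₀'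

/-- Existence of a uniform positive gap between the first-level pieces. -/
lemma gap_exists (hN : 0 < N) (hr : ∀ i, 0 < r i)
    (hS : ∀ i x y, dist (S i x) (S i y) = r i * dist x y)
    (hCne : C.Nonempty) (hCcomp : IsCompact C)
    (hsep : ∀ i j, i ≠ j → Disjoint (S i '' C) (S j '' C)) :
    ∃ δ > (0:ℝ), ∀ i j, i ≠ j → ∀ x ∈ S i '' C, ∀ y ∈ S j '' C, δ ≤ dist x y := by
  haveI : Nonempty (Fin N) := Fin.pos_iff_nonempty.1 hN
  have hpair : ∀ i j : Fin N, ∃ δ' : ℝ, 0 < δ' ∧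
      (i ≠ j → ∀ x ∈ S i '' C, ∀ y ∈ S j '' C, δ' ≤ dist x y) := by
    intro i j
    by_cases hij : i = j
    · exact ⟨1, one_pos, fun h => absurd hij h⟩
    · have hKi : IsCompact (S i '' C) := hCcomp.image (S_continuous hr hS i)
      have hKj : IsCompact (S j '' C) := hCcomp.image (S_continuous hr hS j)
      have hprod : IsCompact ((S i '' C) ×ˢ (S j '' C)) := hKi.prod hKj
      have hne : ((S i '' C) ×ˢ (S j '' C)).Nonempty :=
        (hCne.image (S i)).prod (hCne.image (S j))
      obtain ⟨p, hp, hmin⟩ := hprod.exists_isMinOn (f := fun q : Euc d × Euc d => dist q.1 q.2)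
        hne continuous_dist.continuousOn
      have hpne : p.1 ≠ p.2 := by
        intro h
        exact Set.disjoint_left.1 (hsep i j hij) hp.1 (h ▸ hp.2)
      have hb := isMinOn_iff.mp hmin
      refine ⟨dist p.1 p.2, dist_pos.2 hpne, fun _ x hx y hy => ?_⟩
      exact hb (x, y) (Set.mk_mem_prod hx hy)
  choose F hFpos hFsep using hpair
  refine ⟨Finset.univ.inf' (Finset.univ_nonempty) (fun p : Fin N × Fin N => F p.1 p.2), ?_, ?_⟩
  · rw [gt_iff_lt, Finset.lt_inf'_iff]
    exact fun p _ => hFpos p.1 p.2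
  · intro i j hij x hx y hy
    exact le_trans (Finset.inf'_le _ (Finset.mem_univ (i, j))) (hFsep i j hij x hx y hy)

lemma hausdorff_pos (hN : 0 < N) (hr : ∀ i, r i ∈ Set.Ioo (0:ℝ) 1)
    (hS : ∀ i x y, dist (S i x) (S i y) = r i * dist x y)
    (hCne : C.Nonempty) (hCcomp : IsCompact C) (hCinv : C = ⋃ i, S i '' C)
    (hsep : ∀ i j, i ≠ j → Disjoint (S i '' C) (S j '' C))
    {s : ℝ} (hs : 0 < s) (hdim : ∑ i, r i ^ s = 1) :
    0 < μH[s] C := by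
  classical
  haveI : Nonempty (Fin N) := Fin.pos_iff_nonempty.1 hN
  have hr0 : ∀ i, 0 < r i := fun i => (hr i).1
  obtain ⟨δ, hδpos, hδ⟩ := gap_exists hN hr0 hS hCne hCcomp hsep
  set rmax : ℝ := Finset.univ.sup' Finset.univ_nonempty r with hrmax
  have hrm : ∀ i, r i ≤ rmax := fun i => Finset.le_sup' r (Finset.mem_univ i)
  have hrmax0 : 0 < rmax := lt_of_lt_of_le (hr0 (Classical.arbitrary _)) (hrm _)
  have hrmax1 : rmax < 1 := by
    rw [hrmax, Finset.sup'_lt_iff]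
    exact fun i _ => (hr i).2
  set K : ℝ≥0∞ := ENNReal.ofReal ((2/δ)^s) with hK
  have hKpos : 0 < (2/δ)^s := Real.rpow_pos_of_pos (by positivity) s
  have hK0 : K ≠ 0 := by
    rw [hK]; exact (ENNReal.ofReal_pos.2 hKpos).ne'
  have hKtop : K ≠ ⊤ := ENNReal.ofReal_ne_top
  -- main estimate: for any admissible cover, the sum is at least K⁻¹
  have main : ∀ t : ℕ → Set (Euc d), C ⊆ ⋃ n, t n →
      (∀ n, EMetric.diam (t n) ≤ ENNReal.ofReal (δ/2)) →
      K⁻¹ ≤ ∑' n, ⨆ _ : (t n).Nonempty, EMetric.diam (t n) ^ s := by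
    intro t hcov hdiam
    set T : ℝ≥0∞ := ∑' n, ⨆ _ : (t n).Nonempty, EMetric.diam (t n) ^ s with hT
    have key : (1 : ℝ≥0∞) ≤ K * T := by
      apply ENNReal.le_of_forall_pos_le_add
      intro η hη _
      set η' : ℝ := (η : ℝ) with hη'
      have hη'0 : 0 < η' := hη
      -- choose a word for each (relevant) index
      have hword : ∀ n : ℕ, ∃ w : List (Fin N), ((t n ∩ C).Nonempty →
          (t n ∩ C ⊆ Sw S w '' C ∧
            rho r w ^ s ≤ (2/δ)^s * (Metric.diam (t n))^s + (η'/2) * (1/2)^n)) := by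
        intro n
        by_cases hgood : (t n ∩ C).Nonempty
        · have hbdd : Bornology.IsBounded (t n) :=
            Metric.isBounded_iff_ediam_ne_top.2
              (ne_top_of_le_ne_top ENNReal.ofReal_ne_top (hdiam n))
          have hdiam_tn : Metric.diam (t n) ≤ δ/2 := by
            have : Metric.diam (t n) = (EMetric.diam (t n)).toReal := rfl
            rw [this]
            exact ENNReal.toReal_le_of_le_ofReal (by positivity) (hdiam n)
          have hdiamA : Metric.diam (t n ∩ C) ≤ Metric.diam (t n) :=
            Metric.diam_mono Set.inter_subset_left hbdd
          have hAlt : Metric.diam (t n ∩ C) < δ := by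
            have := hdiamA.trans hdiam_tn
            linarith
          have hq1 : rmax ^ s < 1 := Real.rpow_lt_one hrmax0.le hrmax1 hs
          obtain ⟨m, hm⟩ := exists_pow_lt_of_lt_one
            (show (0:ℝ) < (η'/2) * (1/2)^n by positivity) hq1
          obtain ⟨w, hwsub, hwval⟩ := lemB hr0 hS hCinv hCcomp.isBounded hδpos hδ hrm
            m (t n ∩ C) Set.inter_subset_right hgood hAlt
          refine ⟨w, fun _ => ⟨hwsub, ?_⟩⟩
          rcases le_max_iff.1 hwval with h | h
          · have h1 : rho r w ^ s ≤ (2/δ * Metric.diam (t n ∩ C)) ^ s :=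
              Real.rpow_le_rpow (rho_nonneg hr0 w) h hs.le
            have h2 : (2/δ * Metric.diam (t n ∩ C)) ^ s
                = (2/δ)^s * (Metric.diam (t n ∩ C))^s :=
              Real.mul_rpow (by positivity) Metric.diam_nonneg
            have h3 : (Metric.diam (t n ∩ C))^s ≤ (Metric.diam (t n))^s :=
              Real.rpow_le_rpow Metric.diam_nonneg hdiamA hs.le
            have h4 : (0:ℝ) ≤ (η'/2) * (1/2)^n := by positivity
            nlinarith [hKpos]
          · have h1 : rho r w ^ s ≤ (rmax ^ m) ^ s :=
              Real.rpow_le_rpow (rho_nonneg hr0 w) h hs.le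
            rw [pow_rpow_comm hrmax0.le s m] at h1
            have h4 : (0:ℝ) ≤ (2/δ)^s * (Metric.diam (t n))^s := by
              have := Real.rpow_nonneg (Metric.diam_nonneg (s := t n)) s
              positivity
            linarith [h1.trans hm.le]
        · exact ⟨[], fun h => absurd h hgood⟩
      choose ws hws using hword
      obtain ⟨Vf, hVf⟩ := Classical.axiomOfChoice
        (cyl_open (S := S) (C := C) hr0 hS hCcomp hCinv hsep)
      -- cover C by the corresponding relatively open sets
      have hCsub : C ⊆ ⋃ n : ℕ, ⋃ _ : (t n ∩ C).Nonempty, Vf (ws n) := by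
        intro x hx
        obtain ⟨n, hn⟩ := Set.mem_iUnion.1 (hcov hx)
        have hgood : (t n ∩ C).Nonempty := ⟨x, hn, hx⟩
        have hxA : x ∈ Sw S (ws n) '' C := ((hws n) hgood).1 ⟨hn, hx⟩
        rw [(hVf (ws n)).2] at hxA
        exact Set.mem_iUnion.2 ⟨n, Set.mem_iUnion.2 ⟨hgood, hxA.2⟩⟩
      obtain ⟨G, hG⟩ := hCcomp.elim_finite_subcover
        (fun n : ℕ => ⋃ _ : (t n ∩ C).Nonempty, Vf (ws n))
        (fun n => isOpen_iUnion (fun _ => (hVf (ws n)).1)) hCsub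
      set Gf : Finset ℕ := G.filter (fun n => (t n ∩ C).Nonempty) with hGf
      set W : Finset (List (Fin N)) := Gf.image ws with hW
      have hWcov : C ⊆ ⋃ w ∈ W, Sw S w '' C := by
        intro x hx
        obtain ⟨n, hnG, hn⟩ := Set.mem_iUnion₂.1 (hG hx)
        obtain ⟨hgood, hxV⟩ := Set.mem_iUnion.1 hn
        have hxcyl : x ∈ Sw S (ws n) '' C := by
          rw [(hVf (ws n)).2]; exact ⟨hx, hxV⟩
        have hnGf : n ∈ Gf := by rw [hGf, Finset.mem_filter]; exact ⟨hnG, hgood⟩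
        exact Set.mem_iUnion₂.2 ⟨ws n, Finset.mem_image_of_mem ws hnGf, hxcyl⟩
      have htree : (1:ℝ) ≤ ∑ w ∈ W, rho r w ^ s :=
        treeLemma hN hr hS hCne hCinv hsep hdim _ W rfl hWcov
      have himg : ∑ w ∈ W, rho r w ^ s ≤ ∑ n ∈ Gf, rho r (ws n) ^ s :=
        sum_image_le_real Gf ws (fun w => rho r w ^ s)
          (fun w => Real.rpow_nonneg (rho_nonneg hr0 w) s)
      have hbound : ∑ n ∈ Gf, rho r (ws n) ^ s ≤
          ∑ n ∈ Gf, ((2/δ)^s * (Metric.diam (t n))^s + (η'/2) * (1/2)^n) := by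
        apply Finset.sum_le_sum
        intro n hn
        rw [hGf, Finset.mem_filter] at hn
        exact ((hws n) hn.2).2
      -- pass to ℝ≥0∞
      have hterm_nonneg : ∀ n, (0:ℝ) ≤ (2/δ)^s * (Metric.diam (t n))^s + (η'/2) * (1/2)^n := by
        intro n
        have := Real.rpow_nonneg (Metric.diam_nonneg (s := t n)) s
        positivity
      have step1 : (1:ℝ≥0∞) ≤ ENNReal.ofReal
          (∑ n ∈ Gf, ((2/δ)^s * (Metric.diam (t n))^s + (η'/2) * (1/2)^n)) := by
        rw [show (1:ℝ≥0∞) = ENNReal.ofReal 1 from (ENNReal.ofReal_one).symm]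
        exact ENNReal.ofReal_le_ofReal (le_trans htree (le_trans himg hbound))
      rw [ENNReal.ofReal_sum_of_nonneg (fun n _ => hterm_nonneg n)] at step1
      have step2 : ∀ n ∈ Gf, ENNReal.ofReal ((2/δ)^s * (Metric.diam (t n))^s + (η'/2) * (1/2)^n)
          ≤ K * (⨆ _ : (t n).Nonempty, EMetric.diam (t n) ^ s) + ENNReal.ofReal ((η'/2) * (1/2)^n) := by
        intro n hn
        rw [hGf, Finset.mem_filter] at hn
        have hne : (t n).Nonempty := hn.2.mono Set.inter_subset_left
        rw [iSup_pos hne]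
        refine le_trans (ENNReal.ofReal_add_le) (add_le_add ?_ le_rfl)
        rw [ENNReal.ofReal_mul hKpos.le]
        apply mul_le_mul_right
        have hdtop : EMetric.diam (t n) ≠ ⊤ :=
          ne_top_of_le_ne_top ENNReal.ofReal_ne_top (hdiam n)
        have h1 : (Metric.diam (t n))^s = (EMetric.diam (t n) ^ s).toReal := by
          rw [← ENNReal.toReal_rpow]; rfl
        rw [h1, ENNReal.ofReal_toReal (ENNReal.rpow_ne_top_of_nonneg hs.le hdtop)]
      have step3 : (1:ℝ≥0∞) ≤
          (∑ n ∈ Gf, K * (⨆ _ : (t n).Nonempty, EMetric.diam (t n) ^ s))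
          + ∑ n ∈ Gf, ENNReal.ofReal ((η'/2) * (1/2)^n) := by
        refine le_trans step1 (le_trans (Finset.sum_le_sum step2) ?_)
        rw [Finset.sum_add_distrib]
      have step4 : ∑ n ∈ Gf, K * (⨆ _ : (t n).Nonempty, EMetric.diam (t n) ^ s) ≤ K * T := by
        rw [← Finset.mul_sum]
        exact mul_le_mul_right (ENNReal.sum_le_tsum Gf) K
      have step5 : ∑ n ∈ Gf, ENNReal.ofReal ((η'/2) * (1/2)^n) ≤ (η : ℝ≥0∞) := by
        rw [← ENNReal.ofReal_sum_of_nonneg (fun n _ => by positivity)]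
        have hreal : ∑ n ∈ Gf, (η'/2) * (1/2:ℝ)^n ≤ η' := by
          rw [← Finset.mul_sum]
          have h2 : ∑ n ∈ Gf, (1/2:ℝ)^n ≤ 2 := by
            have h3 := Summable.sum_le_tsum Gf (fun n _ => by positivity : ∀ n ∉ Gf, (0:ℝ) ≤ (1/2)^n)
              summable_geometric_two
            rwa [tsum_geometric_two] at h3
          nlinarith
        calc ENNReal.ofReal (∑ n ∈ Gf, (η'/2) * (1/2:ℝ)^n)
            ≤ ENNReal.ofReal η' := ENNReal.ofReal_le_ofReal hreal
          _ = (η : ℝ≥0∞) := by rw [hη', ENNReal.ofReal_coe_nnreal]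
      calc (1:ℝ≥0∞) ≤ _ := step3
        _ ≤ K * T + η := add_le_add step4 step5
    -- conclude K⁻¹ ≤ T
    have := mul_le_mul_right key K⁻¹
    rwa [mul_one, ← mul_assoc, ENNReal.inv_mul_cancel hK0 hKtop, one_mul] at this
  -- plug into the definition of Hausdorff measure
  have hge : K⁻¹ ≤ μH[s] C := by
    rw [MeasureTheory.Measure.hausdorffMeasure_apply]
    refine le_iSup₂_of_le (ENNReal.ofReal (δ/2)) (ENNReal.ofReal_pos.2 (by positivity)) ?_
    exact le_iInf fun t => le_iInf fun hcov => le_iInf fun hdiam => main t hcov hdiam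
  exact lt_of_lt_of_le (ENNReal.inv_pos.2 hKtop) hge

lemma rho_ofFn {n : ℕ} (v : Fin n → Fin N) :
    rho r (List.ofFn v) = ∏ j, r (v j) := by
  have h1 : ∀ w : List (Fin N), rho r w = (w.map r).prod := by
    intro w
    induction w with
    | nil => simp [rho]
    | cons i t ih => simp [rho, ih]
  rw [h1, List.map_ofFn, List.prod_ofFn]
  rfl

lemma level_cover (hCinv : C = ⋃ i, S i '' C) (n : ℕ) :
    C ⊆ ⋃ v : Fin n → Fin N, Sw S (List.ofFn v) '' C := by
  induction n with
  | zero =>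
    intro x hx
    exact Set.mem_iUnion.2 ⟨fun j => j.elim0, by simpa [Sw] using hx⟩
  | succ n ih =>
    intro x hx
    have : x ∈ ⋃ i, S i '' C := by rw [← hCinv]; exact hx
    obtain ⟨i, y, hy, rfl⟩ := by simpa only [Set.mem_iUnion] using this
    obtain ⟨v, hv⟩ := Set.mem_iUnion.1 (ih hy)
    refine Set.mem_iUnion.2 ⟨Fin.cons i v, ?_⟩
    have hofn : List.ofFn (Fin.cons i v : Fin (n+1) → Fin N) = i :: List.ofFn v := by
      rw [List.ofFn_succ]
      simp
    rw [hofn, SwC_cons]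
    exact ⟨y, hv, rfl⟩

lemma sum_rho_pow {s : ℝ} (hr : ∀ i, 0 < r i) (hdim : ∑ i, r i ^ s = 1) (n : ℕ) :
    ∑ v : Fin n → Fin N, rho r (List.ofFn v) ^ s = 1 := by
  classical
  have h1 : ∀ v : Fin n → Fin N, rho r (List.ofFn v) ^ s = ∏ j, r (v j) ^ s := by
    intro v
    rw [rho_ofFn]
    rw [← Real.finset_prod_rpow Finset.univ (fun j => r (v j)) (fun j _ => (hr (v j)).le) s]
  calc ∑ v : Fin n → Fin N, rho r (List.ofFn v) ^ s
      = ∑ v : Fin n → Fin N, ∏ j, r (v j) ^ s := by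
        exact Finset.sum_congr rfl (fun v _ => h1 v)
    _ = ∏ _j : Fin n, ∑ i : Fin N, r i ^ s := by
        rw [Finset.prod_univ_sum (fun _ => Finset.univ) (fun _ i => r i ^ s)]
        rw [← Fintype.piFinset_univ]
    _ = 1 := by rw [hdim]; simp

lemma hausdorff_lt_top (hN : 0 < N) (hr : ∀ i, r i ∈ Set.Ioo (0:ℝ) 1)
    (hS : ∀ i x y, dist (S i x) (S i y) = r i * dist x y)
    (hCcomp : IsCompact C) (hCinv : C = ⋃ i, S i '' C)
    {s : ℝ} (hs : 0 < s) (hdim : ∑ i, r i ^ s = 1) :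
    μH[s] C ≠ ⊤ := by
  classical
  haveI : Nonempty (Fin N) := Fin.pos_iff_nonempty.1 hN
  have hr0 : ∀ i, 0 < r i := fun i => (hr i).1
  set rmax : ℝ := Finset.univ.sup' Finset.univ_nonempty r with hrmax
  have hrm : ∀ i, r i ≤ rmax := fun i => Finset.le_sup' r (Finset.mem_univ i)
  have hrmax0 : 0 < rmax := lt_of_lt_of_le (hr0 (Classical.arbitrary _)) (hrm _)
  have hrmax1 : rmax < 1 := by
    rw [hrmax, Finset.sup'_lt_iff]
    exact fun i _ => (hr i).2
  have hCbdd := hCcomp.isBounded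
  have hle : μH[s] C ≤ ENNReal.ofReal ((Metric.diam C) ^ s) := by
    have hr_lim : Tendsto (fun n : ℕ => ENNReal.ofReal (rmax ^ n * Metric.diam C))
        atTop (𝓝 0) := by
      rw [show (0:ℝ≥0∞) = ENNReal.ofReal 0 from ENNReal.ofReal_zero.symm]
      apply ENNReal.tendsto_ofReal
      simpa using (tendsto_pow_atTop_nhds_zero_of_lt_one hrmax0.le hrmax1).mul_const
        (Metric.diam C)
    have hmain := MeasureTheory.Measure.hausdorffMeasure_le_liminf_sum (ι := fun n : ℕ => Fin n → Fin N) s C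
      (l := atTop) (fun n => ENNReal.ofReal (rmax ^ n * Metric.diam C))
      hr_lim (fun n v => Sw S (List.ofFn v) '' C) ?_ ?_
    · refine le_trans hmain ?_
      apply liminf_le_of_frequently_le'
      apply Frequently.of_forall
      intro n
      have heach : ∀ v : Fin n → Fin N,
          EMetric.diam (Sw S (List.ofFn v) '' C) ^ s
            ≤ ENNReal.ofReal ((rho r (List.ofFn v) * Metric.diam C) ^ s) := by
        intro v
        have hd : EMetric.diam (Sw S (List.ofFn v) '' C)
            ≤ ENNReal.ofReal (rho r (List.ofFn v) * Metric.diam C) := by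
          apply EMetric.diam_le
          rintro x ⟨a, ha, rfl⟩ y ⟨b, hb, rfl⟩
          rw [edist_dist, Sw_dist hr0 hS]
          apply ENNReal.ofReal_le_ofReal
          exact mul_le_mul_of_nonneg_left (dist_le_diam_of_mem hCbdd ha hb)
            (rho_nonneg hr0 _)
        calc EMetric.diam (Sw S (List.ofFn v) '' C) ^ s
            ≤ (ENNReal.ofReal (rho r (List.ofFn v) * Metric.diam C)) ^ s :=
              ENNReal.rpow_le_rpow hd hs.le
          _ = ENNReal.ofReal ((rho r (List.ofFn v) * Metric.diam C) ^ s) :=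
              ENNReal.ofReal_rpow_of_nonneg
                (mul_nonneg (rho_nonneg hr0 _) Metric.diam_nonneg) hs.le
      calc ∑ v : Fin n → Fin N, EMetric.diam (Sw S (List.ofFn v) '' C) ^ s
          ≤ ∑ v : Fin n → Fin N,
              ENNReal.ofReal ((rho r (List.ofFn v) * Metric.diam C) ^ s) :=
            Finset.sum_le_sum (fun v _ => heach v)
        _ = ENNReal.ofReal (∑ v : Fin n → Fin N,
              (rho r (List.ofFn v) * Metric.diam C) ^ s) :=
            (ENNReal.ofReal_sum_of_nonneg (fun v _ =>
              Real.rpow_nonneg (mul_nonneg (rho_nonneg hr0 _) Metric.diam_nonneg) s)).symm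
        _ ≤ ENNReal.ofReal ((Metric.diam C) ^ s) := by
            apply ENNReal.ofReal_le_ofReal
            have : ∀ v : Fin n → Fin N, (rho r (List.ofFn v) * Metric.diam C) ^ s
                = rho r (List.ofFn v) ^ s * (Metric.diam C) ^ s := fun v =>
              Real.mul_rpow (rho_nonneg hr0 _) Metric.diam_nonneg
            rw [Finset.sum_congr rfl (fun v _ => this v), ← Finset.sum_mul,
              sum_rho_pow hr0 hdim n, one_mul]
    · apply Eventually.of_forall
      intro n v
      apply EMetric.diam_le
      rintro x ⟨a, ha, rfl⟩ y ⟨b, hb, rfl⟩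
      rw [edist_dist, Sw_dist hr0 hS]
      apply ENNReal.ofReal_le_ofReal
      have h1 := rho_le_pow hr0 hrm (List.ofFn v)
      rw [List.length_ofFn] at h1
      exact mul_le_mul h1 (dist_le_diam_of_mem hCbdd ha hb) dist_nonneg
        (pow_nonneg hrmax0.le n)
    · exact Eventually.of_forall (fun n => level_cover hCinv n)
  exact ne_top_of_le_ne_top ENNReal.ofReal_ne_top hle

lemma cyl_measure_le
    (hr : ∀ i, 0 < r i)
    (hS : ∀ i x y, dist (S i x) (S i y) = r i * dist x y)
    {s : ℝ} (hs : 0 < s) (w : List (Fin N)) :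
    μH[s] (Sw S w '' C) ≤ ENNReal.ofReal (rho r w ^ s) * μH[s] C := by
  have hlip : LipschitzWith ⟨rho r w, rho_nonneg hr w⟩ (Sw S w) := by
    apply LipschitzWith.of_dist_le_mul
    intro x y
    rw [Sw_dist hr hS]
    exact le_rfl
  have := hlip.hausdorffMeasure_image_le hs.le C
  refine le_trans this (le_of_eq ?_)
  congr 1
  rw [← ENNReal.ofReal_rpow_of_nonneg (rho_nonneg hr w) hs.le]
  congr 1
  simp [ENNReal.ofReal, Real.toNNReal, rho_nonneg hr w]
  rfl

end Stmt8Aux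

/-- (Density of non-vanishing perturbations.) Any `C^r` homogeneous function of
degree zero can be perturbed, by an arbitrarily `C^r`-small amount on the sphere, to a `C^r`
homogeneous function of degree zero whose integral against `|x−ξ_w|^{-s} dμ` over `C∖C_w`
does not vanish. -/
theorem stmt8
    {d N : ℕ} (hd : 1 ≤ d) (hN : 2 ≤ N)
    (r : Fin N → ℝ) (hr : ∀ i, r i ∈ Set.Ioo (0:ℝ) 1)
    (S : Fin N → Euc d → Euc d)
    (hSsim : ∀ i x y, dist (S i x) (S i y) = r i * dist x y)
    (C : Set (Euc d)) (hCne : C.Nonempty) (hCcomp : IsCompact C)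
    (hCinv : C = ⋃ i, S i '' C)
    (hsep : ∀ i j, i ≠ j → Disjoint (S i '' C) (S j '' C))
    (s : ℝ) (hs : 0 < s) (hdim : ∑ i, r i ^ s = 1)
    (μ : Measure (Euc d)) (hμ : μ = (μH[s] C)⁻¹ • μH[s].restrict C)
    (w : List (Fin N)) (hwne : w ≠ []) (ξw : Euc d) (hξw : Sw S w ξw = ξw)
    (rr : ℕ)
    (Ω : Euc d → ℝ)
    (hΩsm : ContDiffOn ℝ rr Ω {x | x ≠ 0})
    (hΩhom : ∀ c : ℝ, 0 < c → ∀ x, x ≠ 0 → Ω (c • x) = Ω x)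
    (ε : ℝ) (hε : 0 < ε) :
    ∃ Ωs : Euc d → ℝ,
      ContDiffOn ℝ rr Ωs {x | x ≠ 0} ∧
      (∀ c : ℝ, 0 < c → ∀ x, x ≠ 0 → Ωs (c • x) = Ωs x) ∧
      (∫ x in C \ Sw S w '' C, Ωs (x - ξw) / ‖x - ξw‖ ^ s ∂μ) ≠ 0 ∧
      ∀ i : ℕ, i ≤ rr → ∀ x ∈ sphere (0 : Euc d) 1,
        ‖iteratedFDeriv ℝ i (fun y => Ωs y - Ω y) x‖ ≤ ε := by
  classical
  have hN0 : 0 < N := by omega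
  haveI : Nonempty (Fin N) := Fin.pos_iff_nonempty.1 hN0
  have hr0 : ∀ i, 0 < r i := fun i => (hr i).1
  have hSC : ∀ i, S i '' C ⊆ C := fun i x hx => by
    rw [hCinv]; exact Set.mem_iUnion.2 ⟨i, hx⟩
  set A : Set (Euc d) := C \ Sw S w '' C with hA
  -- Hausdorff measure of C is positive and finite
  have hpos := Stmt8Aux.hausdorff_pos hN0 hr hSsim hCne hCcomp hCinv hsep hs hdim
  have htop := Stmt8Aux.hausdorff_lt_top hN0 hr hSsim hCcomp hCinv hs hdim
  -- the cylinder has strictly smaller measure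
  have hrhow : Stmt8Aux.rho r w < 1 := Stmt8Aux.rho_lt_one hr hwne
  have hcylm : μH[s] (Sw S w '' C) < μH[s] C := by
    refine lt_of_le_of_lt (Stmt8Aux.cyl_measure_le hr0 hSsim hs w) ?_
    have h1 : ENNReal.ofReal (Stmt8Aux.rho r w ^ s) < 1 := by
      rw [show (1:ℝ≥0∞) = ENNReal.ofReal 1 from ENNReal.ofReal_one.symm]
      rw [ENNReal.ofReal_lt_ofReal_iff one_pos]
      exact Real.rpow_lt_one (Stmt8Aux.rho_nonneg hr0 w) hrhow hs
    calc ENNReal.ofReal (Stmt8Aux.rho r w ^ s) * μH[s] C < 1 * μH[s] C :=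
          by rw [mul_comm _ (μH[s] C), mul_comm 1]; exact ENNReal.mul_lt_mul_right hpos.ne' htop h1
      _ = μH[s] C := one_mul _
  have hAmeas : MeasurableSet A :=
    hCcomp.isClosed.measurableSet.diff
      (Stmt8Aux.SwC_compact hCcomp hr0 hSsim w).isClosed.measurableSet
  have hμHA_pos : 0 < μH[s] A := by
    rcases eq_or_ne (μH[s] A) 0 with h | h
    · exfalso
      have hsub : C ⊆ (Sw S w '' C) ∪ A := by
        intro x hx
        by_cases hxc : x ∈ Sw S w '' C
        · exact Or.inl hxc
        · exact Or.inr ⟨hx, hxc⟩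
      have h2 : μH[s] C ≤ μH[s] (Sw S w '' C) + μH[s] A :=
        le_trans (measure_mono hsub) (measure_union_le _ _)
      rw [h, add_zero] at h2
      exact absurd h2 (not_le.2 hcylm)
    · exact pos_iff_ne_zero.2 h
  have hμA : μ A = (μH[s] C)⁻¹ * μH[s] A := by
    rw [hμ, Measure.smul_apply, smul_eq_mul, Measure.restrict_apply hAmeas,
      Set.inter_eq_self_of_subset_left Set.diff_subset]
  have hμA_pos : 0 < μ A := by
    rw [hμA]
    exact ENNReal.mul_pos (ENNReal.inv_ne_zero.2 htop) hμHA_pos.ne'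
  have hμA_top : μ A ≠ ⊤ := by
    rw [hμA]
    have h1 : (μH[s] C)⁻¹ * μH[s] A ≤ (μH[s] C)⁻¹ * μH[s] C :=
      mul_le_mul_right (measure_mono Set.diff_subset) _
    rw [ENNReal.inv_mul_cancel hpos.ne' htop] at h1
    exact ne_top_of_le_ne_top ENNReal.one_ne_top h1
  haveI : IsFiniteMeasure μ := by
    constructor
    rw [hμ, Measure.smul_apply, smul_eq_mul, Measure.restrict_apply_univ,
      ENNReal.inv_mul_cancel hpos.ne' htop]
    exact ENNReal.one_lt_top
  -- geometry around the fixed point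
  have hξmem : ξw ∈ Sw S w '' C :=
    Stmt8Aux.fixedPoint_mem hr hSsim hCne hCcomp hCinv hwne hξw
  have hξC : ξw ∈ C := Stmt8Aux.SwC_subset hCinv w hξmem
  obtain ⟨V, hVopen, hVeq⟩ := Stmt8Aux.cyl_open hr0 hSsim hCcomp hCinv hsep w
  have hAeq : A = C \ V := by rw [hA, hVeq, Set.diff_self_inter]
  have hAcomp : IsCompact A := by rw [hAeq]; exact hCcomp.diff hVopen
  have hAne : A.Nonempty := nonempty_of_measure_ne_zero hμA_pos.ne'
  have hξnA : ξw ∉ A := fun h => h.2 hξmem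
  have hsub_ne : ∀ x ∈ A, x - ξw ≠ 0 := by
    intro x hx h
    rw [sub_eq_zero] at h
    exact hξnA (h ▸ hx)
  have hnorm_pos : ∀ x ∈ A, 0 < ‖x - ξw‖ := fun x hx =>
    norm_pos_iff.2 (hsub_ne x hx)
  -- continuity on A
  have hcont1 : ContinuousOn (fun x : Euc d => Ω (x - ξw)) A := by
    apply (hΩsm.continuousOn).comp
      ((continuous_id.sub continuous_const).continuousOn)
    exact fun x hx => hsub_ne x hx
  have hcont_norm : ContinuousOn (fun x : Euc d => ‖x - ξw‖ ^ s) A := by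
    apply ContinuousOn.rpow_const
    · exact ((continuous_id.sub continuous_const).norm).continuousOn
    · exact fun x hx => Or.inl (hnorm_pos x hx).ne'
  have hne_den : ∀ x ∈ A, ‖x - ξw‖ ^ s ≠ 0 := fun x hx =>
    (Real.rpow_pos_of_pos (hnorm_pos x hx) s).ne'
  have hint1 : IntegrableOn (fun x => Ω (x - ξw) / ‖x - ξw‖ ^ s) A μ :=
    (hcont1.div hcont_norm hne_den).integrableOn_compact hAcomp
  have hint2 : IntegrableOn (fun x => (‖x - ξw‖ ^ s)⁻¹) A μ :=
    (hcont_norm.inv₀ hne_den).integrableOn_compact hAcomp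
  -- positivity of the reference integral
  set I₁ : ℝ := ∫ x in A, (‖x - ξw‖ ^ s)⁻¹ ∂μ with hI₁
  have hdiamC : 0 < Metric.diam C := by
    have h01 : (⟨0, by omega⟩ : Fin N) ≠ ⟨1, by omega⟩ := by
      intro h
      simpa using congrArg Fin.val h
    obtain ⟨x₁, hx₁⟩ := hCne.image (S ⟨0, by omega⟩)
    obtain ⟨x₂, hx₂⟩ := hCne.image (S ⟨1, by omega⟩)
    have hne12 : x₁ ≠ x₂ := by
      intro h
      exact Set.disjoint_left.1 (hsep _ _ h01) hx₁ (h ▸ hx₂)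
    calc (0:ℝ) < dist x₁ x₂ := dist_pos.2 hne12
      _ ≤ Metric.diam C := dist_le_diam_of_mem hCcomp.isBounded
          (hSC _ hx₁) (hSC _ hx₂)
  have hlow : ∀ x ∈ A, ((Metric.diam C) ^ s)⁻¹ ≤ (‖x - ξw‖ ^ s)⁻¹ := by
    intro x hx
    have h1 : ‖x - ξw‖ ≤ Metric.diam C := by
      rw [show ‖x - ξw‖ = dist x ξw from (dist_eq_norm x ξw).symm]
      exact dist_le_diam_of_mem hCcomp.isBounded hx.1 hξC
    have h2 : ‖x - ξw‖ ^ s ≤ (Metric.diam C) ^ s :=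
      Real.rpow_le_rpow (norm_nonneg _) h1 hs.le
    exact one_div_le_one_div_of_le (Real.rpow_pos_of_pos (hnorm_pos x hx) s) h2
      |>.trans_eq (by rw [one_div]) |>.trans_eq' (by rw [one_div])
  have hI₁pos : 0 < I₁ := by
    have hconst : 0 < ((Metric.diam C) ^ s)⁻¹ * (μ A).toReal := by
      have := Real.rpow_pos_of_pos hdiamC s
      have := ENNReal.toReal_pos hμA_pos.ne' hμA_top
      positivity
    exact lt_of_lt_of_le hconst
      (setIntegral_ge_of_const_le_real hAmeas hμA_top hlow hint2)
  set I₀ : ℝ := ∫ x in A, Ω (x - ξw) / ‖x - ξw‖ ^ s ∂μ with hI₀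
  set t₀ : ℝ := if I₀ + ε * I₁ = 0 then ε/2 else ε with ht₀
  have ht₀pos : 0 < t₀ := by
    rw [ht₀]; split <;> linarith
  have ht₀le : t₀ ≤ ε := by
    rw [ht₀]; split <;> linarith
  have hItotal : I₀ + t₀ * I₁ ≠ 0 := by
    rw [ht₀]
    split
    · rename_i h
      intro h2
      have : (ε/2) * I₁ = 0 := by linarith
      have := mul_ne_zero (by linarith : ε/2 ≠ 0) hI₁pos.ne'
      exact this ‹(ε/2) * I₁ = 0›
    · rename_i h
      exact h
  refine ⟨fun y => Ω y + t₀, ?_, ?_, ?_, ?_⟩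
  · exact hΩsm.add contDiffOn_const
  · intro c hc x hx
    simp only
    rw [hΩhom c hc x hx]
  · have hrw : Set.EqOn (fun x => (Ω (x - ξw) + t₀) / ‖x - ξw‖ ^ s)
        (fun x => Ω (x - ξw) / ‖x - ξw‖ ^ s + t₀ * (‖x - ξw‖ ^ s)⁻¹) A := by
      intro x _
      simp only [add_div, div_eq_mul_inv]
      ring
    rw [show (∫ x in C \ Sw S w '' C, ((fun y => Ω y + t₀) (x - ξw)) / ‖x - ξw‖ ^ s ∂μ)
        = ∫ x in A, (Ω (x - ξw) + t₀) / ‖x - ξw‖ ^ s ∂μ from rfl]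
    rw [setIntegral_congr_fun hAmeas hrw]
    rw [integral_add hint1 (hint2.const_mul t₀), MeasureTheory.integral_const_mul]
    exact hItotal
  · intro i hi x hx
    simp only [add_sub_cancel_left]
    rcases Nat.eq_zero_or_pos i with h0 | h0
    · subst h0
      rw [norm_iteratedFDeriv_zero, Real.norm_eq_abs, abs_of_pos ht₀pos]
      exact ht₀le
    · rw [iteratedFDeriv_const_of_ne (Nat.pos_iff_ne_zero.1 h0)]
      simp only [Pi.zero_apply, norm_zero]
      exact hε.le
end
end

section
/- Let S = {S_i}_{i∈E} be a separated, rotation-free similarity IFS on ℝ^d with attractor C of similarity dimension s and μ = H^s(C)^{-1}·H^s⌊C. Consider the space K⁰ of continuous functions Ω : ℝ^d∖{0} → ℝ homogeneous of degree zero, topologized by the supremum distance of restrictions to the unit sphere S^{d-1}. Then the subcollection U⁰ ⊆ K⁰ of those Ω for which the kernel k(x,y) = Ω(x−y)/|x−y|^s satisfies sup_{ε>0} |∫_{C∖B(x,ε)} k(x,y) dμ(y)| = ∞ for μ-almost every x ∈ C contains a subset of K⁰ that is open and dense; in particular U⁰ is dense in K⁰. -/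
open MeasureTheory Metric Set Filter
open scoped ENNReal Topology NNReal

noncomputable section

/-- The collection of continuous `Ω : S^{d-1} → ℝ` (identified with continuous functions on
`ℝ^d∖{0}` homogeneous of degree zero) whose associated maximal singular integral of the constant
function `1` is infinite `μ`-a.e. -/
def U0 {d : ℕ} (C : Set (Euc d)) (μ : Measure (Euc d)) (s : ℝ) :
    Set (ContinuousMap (sphere (0 : Euc d) 1) ℝ) :=
  {ω | ∀ᵐ x ∂μ,
    (⨆ (ε : ℝ) (_ : 0 < ε), ENNReal.ofReal
      |∫ y in C \ closedBall x ε,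
        (@dite ℝ (x = y) (Classical.dec _) (fun _ => (0:ℝ)) (fun h => ω (sphN y x h)))
          / ‖x - y‖ ^ s ∂μ|) = ⊤}

namespace Stmt9

variable {d N : ℕ}

def rwd (r : Fin N → ℝ) (w : List (Fin N)) : ℝ := (w.map r).prod

@[simp] lemma rwd_nil (r : Fin N → ℝ) : rwd r [] = 1 := by simp [rwd]

@[simp] lemma rwd_cons (r : Fin N → ℝ) (i : Fin N) (w : List (Fin N)) :
    rwd r (i :: w) = r i * rwd r w := by simp [rwd]

lemma rwd_append (r : Fin N → ℝ) (a b : List (Fin N)) :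
    rwd r (a ++ b) = rwd r a * rwd r b := by simp [rwd]

lemma rwd_replicate (r : Fin N → ℝ) (i : Fin N) (m : ℕ) :
    rwd r (List.replicate m i) = r i ^ m := by
  simp [rwd, List.map_replicate, List.prod_replicate]

variable {q : Fin N → Euc d} {r : Fin N → ℝ} {S : Fin N → Euc d → Euc d}

lemma rwd_pos (hr : ∀ i, r i ∈ Set.Ioo (0:ℝ) 1) (w : List (Fin N)) : 0 < rwd r w := by
  induction w with
  | nil => simp
  | cons i t ih => simpa using mul_pos (hr i).1 ih

lemma rwd_le_one (hr : ∀ i, r i ∈ Set.Ioo (0:ℝ) 1) (w : List (Fin N)) : rwd r w ≤ 1 := by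
  induction w with
  | nil => simp
  | cons i t ih =>
    have h1 := (hr i).1
    have h2 := (hr i).2
    have := rwd_pos hr t
    simp only [rwd_cons]
    nlinarith

lemma Sw_apply (hS : ∀ i x, S i x = q i + r i • x) (w : List (Fin N)) (x : Euc d) :
    Sw S w x = Sw S w 0 + rwd r w • x := by
  induction w generalizing x with
  | nil => simp [Sw]
  | cons i t ih =>
    simp only [Sw, Function.comp_apply, rwd_cons]
    rw [hS i (Sw S t x), hS i (Sw S t 0), ih x, ih 0]
    simp only [smul_zero, add_zero, smul_add, smul_smul]
    abel

lemma dist_Sw (hS : ∀ i x, S i x = q i + r i • x) (hr : ∀ i, r i ∈ Set.Ioo (0:ℝ) 1)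
    (w : List (Fin N)) (x y : Euc d) :
    dist (Sw S w x) (Sw S w y) = rwd r w * dist x y := by
  rw [Sw_apply hS w x, Sw_apply hS w y, dist_add_left, dist_smul₀,
    Real.norm_eq_abs, abs_of_pos (rwd_pos hr w)]

lemma Sw_injective (hS : ∀ i x, S i x = q i + r i • x) (hr : ∀ i, r i ∈ Set.Ioo (0:ℝ) 1)
    (w : List (Fin N)) : Function.Injective (Sw S w) := by
  intro x y h
  have := dist_Sw hS hr w x y
  rw [h, dist_self] at this
  have hpos := rwd_pos hr w
  have : dist x y = 0 := by
    rcases mul_eq_zero.1 this.symm with h' | h'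
    · exact absurd h' (ne_of_gt hpos)
    · exact h'
  exact dist_eq_zero.1 this

lemma Sw_append (a b : List (Fin N)) : Sw S (a ++ b) = Sw S a ∘ Sw S b := by
  induction a with
  | nil => simp [Sw]
  | cons i t ih => simp [Sw, ih, Function.comp_assoc]

variable {C : Set (Euc d)}

lemma Si_image_subset (hCinv : C = ⋃ i, S i '' C) (i : Fin N) : S i '' C ⊆ C := by
  conv_rhs => rw [hCinv]
  exact subset_iUnion_of_subset i le_rfl

lemma Sw_image_subset (hCinv : C = ⋃ i, S i '' C) (w : List (Fin N)) :
    Sw S w '' C ⊆ C := by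
  induction w with
  | nil => simp [Sw]
  | cons i t ih =>
    rw [Sw, Set.image_comp]
    exact (Set.image_mono ih).trans (Si_image_subset hCinv i)

lemma cover (hCinv : C = ⋃ i, S i '' C) (m : ℕ) :
    ∀ x ∈ C, ∃ u : Fin m → Fin N, x ∈ Sw S (List.ofFn u) '' C := by
  induction m with
  | zero => intro x hx; exact ⟨![], by simpa [Sw] using hx⟩
  | succ m ih =>
    intro x hx
    rw [hCinv] at hx
    obtain ⟨i, y, hy, hxy⟩ := by simpa using hx
    obtain ⟨u, z, hz, hzy⟩ := ih y hy
    refine ⟨Fin.cons i u, z, hz, ?_⟩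
    rw [List.ofFn_succ]
    simp only [Fin.cons_zero, Fin.cons_succ]
    show S i (Sw S (List.ofFn u) z) = x
    rw [hzy, hxy]

lemma continuous_S (hS : ∀ i x, S i x = q i + r i • x) (i : Fin N) : Continuous (S i) := by
  have : S i = fun x => q i + r i • x := funext (hS i)
  rw [this]; exact continuous_const.add (continuous_id.const_smul (r i))

lemma continuous_Sw (hS : ∀ i x, S i x = q i + r i • x) (w : List (Fin N)) :
    Continuous (Sw S w) := by
  induction w with
  | nil => exact continuous_id
  | cons i t ih => exact (continuous_S hS i).comp ih

lemma dist_S (hS : ∀ i x, S i x = q i + r i • x) (hr : ∀ i, r i ∈ Set.Ioo (0:ℝ) 1)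
    (i : Fin N) (x y : Euc d) : dist (S i x) (S i y) = r i * dist x y := by
  rw [hS, hS, dist_add_left, dist_smul₀, Real.norm_eq_abs, abs_of_pos (hr i).1]

set_option maxHeartbeats 1000000 in
lemma exists_gap (hN : 2 ≤ N) (hCne : C.Nonempty) (hCcomp : IsCompact C)
    (hS : ∀ i x, S i x = q i + r i • x)
    (hsep : ∀ i j, i ≠ j → Disjoint (S i '' C) (S j '' C)) :
    ∃ δ : ℝ, 0 < δ ∧ ∀ i j, i ≠ j → ∀ u ∈ S i '' C, ∀ v ∈ S j '' C, δ ≤ dist u v := by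
  have hNpos : 0 < N := by omega
  have key : ∀ p : Fin N × Fin N, ∃ δ : ℝ, 0 < δ ∧
      (p.1 ≠ p.2 → ∀ u ∈ S p.1 '' C, ∀ v ∈ S p.2 '' C, δ ≤ dist u v) := by
    rintro ⟨i, j⟩
    by_cases hij : i = j
    · exact ⟨1, one_pos, fun h => absurd hij h⟩
    · have hKi : IsCompact (S i '' C) := hCcomp.image (continuous_S hS i)
      have hKj : IsCompact (S j '' C) := hCcomp.image (continuous_S hS j)
      have hne : ((S i '' C) ×ˢ (S j '' C)).Nonempty :=
        (hCne.image _).prod (hCne.image _)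
      obtain ⟨⟨a, b⟩, hab, hmin⟩ := (hKi.prod hKj).exists_isMinOn hne
        (continuous_dist.continuousOn)
      have hab' : a ≠ b := by
        rintro rfl
        exact Set.disjoint_left.1 (hsep i j hij) hab.1 hab.2
      refine ⟨dist a b, dist_pos.2 hab', fun _ u hu v hv => ?_⟩
      exact isMinOn_iff.1 hmin (u, v) (Set.mk_mem_prod hu hv)
  choose f hf using key
  haveI : Nonempty (Fin N) := ⟨⟨0, hNpos⟩⟩
  have hune : (Finset.univ : Finset (Fin N × Fin N)).Nonempty := Finset.univ_nonempty
  refine ⟨Finset.univ.inf' hune f, ?_, fun i j hij u hu v hv => ?_⟩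
  · rw [Finset.lt_inf'_iff]
    exact fun p _ => (hf p).1
  · exact le_trans (Finset.inf'_le f (Finset.mem_univ (i, j))) ((hf (i, j)).2 hij u hu v hv)

lemma gap_cylinder (hS : ∀ i x, S i x = q i + r i • x) (hr : ∀ i, r i ∈ Set.Ioo (0:ℝ) 1)
    (hCinv : C = ⋃ i, S i '' C) {δ : ℝ} (hδ0 : 0 < δ)
    (hδ : ∀ i j, i ≠ j → ∀ u ∈ S i '' C, ∀ v ∈ S j '' C, δ ≤ dist u v) :
    ∀ w : List (Fin N), ∀ x ∈ Sw S w '' C, ∀ y ∈ C, y ∉ Sw S w '' C →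
      rwd r w * δ ≤ dist x y := by
  intro w
  induction w with
  | nil => intro x _ y hy hy'; exact absurd (by simpa [Sw] using hy) hy'
  | cons i t ih =>
    intro x hx y hy hy'
    have hxi : x ∈ S i '' (Sw S t '' C) := by
      rwa [show Sw S (i :: t) = S i ∘ Sw S t from rfl, Set.image_comp] at hx
    by_cases hyi : y ∈ S i '' C
    · obtain ⟨y', hy'C, rfl⟩ := hyi
      obtain ⟨x', hx', rfl⟩ := hxi
      have hy't : y' ∉ Sw S t '' C := by
        intro h
        obtain ⟨z, hzC, hz⟩ := h
        exact hy' ⟨z, hzC, by simp [Sw, Function.comp_apply, hz]⟩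
      have hxC : x' ∈ Sw S t '' C := hx'
      have hIH := ih x' hxC y' hy'C hy't
      rw [dist_S hS hr]
      calc rwd r (i :: t) * δ = r i * (rwd r t * δ) := by rw [rwd_cons, mul_assoc]
        _ ≤ r i * dist x' y' := by
            exact mul_le_mul_of_nonneg_left hIH (hr i).1.le
    · have : y ∈ ⋃ j, S j '' C := by rw [← hCinv]; exact hy
      obtain ⟨j, hyj⟩ := Set.mem_iUnion.1 this
      have hij : i ≠ j := by rintro rfl; exact hyi hyj
      have hxI : x ∈ S i '' C := by
        obtain ⟨x', hx', rfl⟩ := hxi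
        exact ⟨x', Sw_image_subset hCinv t hx', rfl⟩
      have := hδ i j hij x hxI y hyj
      calc rwd r (i :: t) * δ ≤ 1 * δ :=
            mul_le_mul_of_nonneg_right (rwd_le_one hr _) hδ0.le
        _ = δ := one_mul δ
        _ ≤ dist x y := this

def xi (q : Fin N → Euc d) (r : Fin N → ℝ) (i₀ : Fin N) : Euc d := (1 - r i₀)⁻¹ • q i₀

variable {i₀ : Fin N}

lemma S_xi (hS : ∀ i x, S i x = q i + r i • x) (hr : ∀ i, r i ∈ Set.Ioo (0:ℝ) 1) :
    S i₀ (xi q r i₀) = xi q r i₀ := by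
  have hne : (1:ℝ) - r i₀ ≠ 0 := by have := (hr i₀).2; intro h; linarith [(hr i₀).2]
  have hsc : (1:ℝ) + r i₀ * (1 - r i₀)⁻¹ = (1 - r i₀)⁻¹ := by field_simp; ring
  rw [hS, xi, smul_smul]
  calc q i₀ + (r i₀ * (1 - r i₀)⁻¹) • q i₀
      = (1:ℝ) • q i₀ + (r i₀ * (1 - r i₀)⁻¹) • q i₀ := by rw [one_smul]
    _ = ((1:ℝ) + r i₀ * (1 - r i₀)⁻¹) • q i₀ := by rw [add_smul]
    _ = (1 - r i₀)⁻¹ • q i₀ := by rw [hsc]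

lemma Sw_rep_xi (hS : ∀ i x, S i x = q i + r i • x) (hr : ∀ i, r i ∈ Set.Ioo (0:ℝ) 1)
    (m : ℕ) : Sw S (List.replicate m i₀) (xi q r i₀) = xi q r i₀ := by
  induction m with
  | zero => simp [Sw]
  | succ m ih =>
    rw [List.replicate_succ]
    show S i₀ (Sw S (List.replicate m i₀) (xi q r i₀)) = xi q r i₀
    rw [ih, S_xi hS hr]

lemma xi_mem_C (hCne : C.Nonempty) (hCcomp : IsCompact C) (hCinv : C = ⋃ i, S i '' C)
    (hS : ∀ i x, S i x = q i + r i • x) (hr : ∀ i, r i ∈ Set.Ioo (0:ℝ) 1) :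
    xi q r i₀ ∈ C := by
  obtain ⟨z, hz⟩ := hCne
  set ξ := xi q r i₀
  have hmem : ∀ m : ℕ, Sw S (List.replicate m i₀) z ∈ C := fun m =>
    Sw_image_subset hCinv _ (Set.mem_image_of_mem _ hz)
  have hdist : ∀ m : ℕ, dist (Sw S (List.replicate m i₀) z) ξ = r i₀ ^ m * dist z ξ := by
    intro m
    conv_lhs => rw [show ξ = Sw S (List.replicate m i₀) ξ from (Sw_rep_xi hS hr m).symm]
    rw [dist_Sw hS hr, rwd_replicate]
  have htend : Tendsto (fun m => Sw S (List.replicate m i₀) z) atTop (𝓝 ξ) := by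
    rw [tendsto_iff_dist_tendsto_zero]
    simp only [hdist]
    have := (tendsto_pow_atTop_nhds_zero_of_lt_one (hr i₀).1.le (hr i₀).2).mul_const
      (dist z ξ)
    simpa using this
  exact hCcomp.isClosed.mem_of_tendsto htend (Filter.Eventually.of_forall hmem)

lemma xi_mem_rep (hCne : C.Nonempty) (hCcomp : IsCompact C) (hCinv : C = ⋃ i, S i '' C)
    (hS : ∀ i x, S i x = q i + r i • x) (hr : ∀ i, r i ∈ Set.Ioo (0:ℝ) 1) (m : ℕ) :
    xi q r i₀ ∈ Sw S (List.replicate m i₀) '' C :=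
  ⟨xi q r i₀, xi_mem_C hCne hCcomp hCinv hS hr, Sw_rep_xi hS hr m⟩

lemma Sw_image_eq_preimage (hS : ∀ i x, S i x = q i + r i • x)
    (hr : ∀ i, r i ∈ Set.Ioo (0:ℝ) 1) (w : List (Fin N)) (A : Set (Euc d)) :
    Sw S w '' A = (fun y => (rwd r w)⁻¹ • (y - Sw S w 0)) ⁻¹' A := by
  have hrw := rwd_pos hr w
  ext y
  constructor
  · rintro ⟨x, hx, rfl⟩
    simpa [Sw_apply hS w x, hrw.ne'] using hx
  · intro hy
    refine ⟨(rwd r w)⁻¹ • (y - Sw S w 0), hy, ?_⟩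
    rw [Sw_apply hS]
    rw [smul_inv_smul₀ hrw.ne']
    abel

lemma measurableSet_Sw_image (hS : ∀ i x, S i x = q i + r i • x)
    (hr : ∀ i, r i ∈ Set.Ioo (0:ℝ) 1) (w : List (Fin N)) {A : Set (Euc d)}
    (hA : MeasurableSet A) : MeasurableSet (Sw S w '' A) := by
  rw [Sw_image_eq_preimage hS hr]
  exact hA.preimage (by fun_prop)

/-! ### Kernel -/

def ker (ω : C(sphere (0 : Euc d) 1, ℝ)) (s : ℝ) (x y : Euc d) : ℝ :=
  (@dite ℝ (x = y) (Classical.dec _) (fun _ => (0:ℝ)) (fun h => ω (sphN y x h)))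
    / ‖x - y‖ ^ s

lemma mem_U0_iff {C : Set (Euc d)} {μ : Measure (Euc d)} {s : ℝ}
    {ω : C(sphere (0 : Euc d) 1, ℝ)} :
    ω ∈ U0 C μ s ↔ ∀ᵐ x ∂μ,
      (⨆ (ε : ℝ) (_ : 0 < ε), ENNReal.ofReal
        |∫ y in C \ closedBall x ε, ker ω s x y ∂μ|) = ⊤ := Iff.rfl

def kf (ω : C(sphere (0 : Euc d) 1, ℝ)) (s : ℝ) (v : Euc d) : ℝ :=
  (@dite ℝ (v = 0) (Classical.dec _) (fun _ => (0:ℝ))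
    (fun h => ω ⟨‖v‖⁻¹ • v, by
      simp [mem_sphere_iff_norm, norm_smul, abs_of_nonneg,
        inv_mul_cancel₀ (norm_ne_zero_iff.mpr h)]⟩)) / ‖v‖ ^ s

variable {ω : C(sphere (0 : Euc d) 1, ℝ)} {s : ℝ}

lemma ker_eq_kf (x y : Euc d) : ker ω s x y = kf ω s (x - y) := by
  by_cases h : x = y
  · subst h; simp [ker, kf]
  · rw [ker, kf, dif_neg h, dif_neg (sub_ne_zero.mpr h)]
    rfl

@[simp] lemma ker_self (x : Euc d) : ker ω s x x = 0 := by simp [ker]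

lemma ker_of_ne {x y : Euc d} (h : x ≠ y) :
    ker ω s x y = ω (sphN y x h) / ‖x - y‖ ^ s := by
  rw [ker, dif_neg h]

lemma mem_sphere_unit {v : Euc d} (hv : v ≠ 0) :
    ‖v‖⁻¹ • v ∈ sphere (0 : Euc d) 1 := by
  simp [mem_sphere_iff_norm, norm_smul, abs_of_nonneg,
    inv_mul_cancel₀ (norm_ne_zero_iff.mpr hv)]

lemma continuousOn_kf : ContinuousOn (kf ω s) {v : Euc d | v ≠ 0} := by
  rw [continuousOn_iff_continuous_restrict]
  have hmem : ∀ v : {v : Euc d | v ≠ 0}, ‖(v : Euc d)‖⁻¹ • (v : Euc d) ∈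
      sphere (0 : Euc d) 1 := fun v => mem_sphere_unit v.2
  have h0 : Continuous fun v : {v : Euc d | v ≠ 0} => (v : Euc d) := continuous_subtype_val
  have h1 : Continuous fun v : {v : Euc d | v ≠ 0} => ‖(v : Euc d)‖⁻¹ • (v : Euc d) :=
    (h0.norm.inv₀
      (fun v => norm_ne_zero_iff.mpr (show (v : Euc d) ≠ 0 from v.2))).smul h0
  have h2 := h1.subtype_mk hmem
  have h3 : Continuous fun v : {v : Euc d | v ≠ 0} => ‖(v : Euc d)‖ ^ s :=
    h0.norm.rpow_const
      (fun v => Or.inl (norm_ne_zero_iff.mpr (show (v : Euc d) ≠ 0 from v.2)))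
  have h4 := (ω.continuous.comp h2).div h3
    (fun v => ne_of_gt (Real.rpow_pos_of_pos
      (norm_pos_iff.mpr (show (v : Euc d) ≠ 0 from v.2)) s))
  refine h4.congr fun v => ?_
  simp only [Set.restrict_apply, Function.comp_apply, Pi.div_apply]
  show _ = kf ω s (v : Euc d)
  unfold kf
  rw [dif_neg (show ¬((v : Euc d) = 0) from v.2)]

lemma continuousOn_ker_right (x : Euc d) :
    ContinuousOn (fun y => ker ω s x y) {y : Euc d | y ≠ x} := by
  have : (fun y => ker ω s x y) = kf ω s ∘ (fun y => x - y) :=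
    funext fun y => ker_eq_kf x y
  rw [this]
  exact continuousOn_kf.comp ((continuous_const.sub continuous_id).continuousOn)
    (fun y hy => sub_ne_zero.mpr (Ne.symm hy))

lemma continuousOn_ker_left (y : Euc d) :
    ContinuousOn (fun p => ker ω s p y) {p : Euc d | p ≠ y} := by
  have : (fun p => ker ω s p y) = kf ω s ∘ (fun p => p - y) :=
    funext fun p => ker_eq_kf p y
  rw [this]
  exact continuousOn_kf.comp ((continuous_id.sub continuous_const).continuousOn)
    (fun p hp => sub_ne_zero.mpr hp)

lemma abs_ker_le (hs : 0 < s) {x y : Euc d} {t : ℝ} (ht : 0 < t) (hd : t ≤ dist x y) :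
    |ker ω s x y| ≤ ‖ω‖ / t ^ s := by
  have hne : x ≠ y := by
    intro h; subst h; rw [dist_self] at hd; linarith
  rw [ker_of_ne hne, abs_div,
    abs_of_nonneg (Real.rpow_nonneg (norm_nonneg (x - y)) s)]
  have h1 : |ω (sphN y x hne)| ≤ ‖ω‖ := by
    simpa [Real.norm_eq_abs] using ω.norm_coe_le_norm (sphN y x hne)
  have h2 : t ^ s ≤ ‖x - y‖ ^ s :=
    Real.rpow_le_rpow ht.le (by rw [← dist_eq_norm]; exact hd) hs.le
  exact div_le_div₀ (norm_nonneg ω) h1 (Real.rpow_pos_of_pos ht s) h2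

lemma ker_sub_apply (ω₁ ω₂ : C(sphere (0 : Euc d) 1, ℝ)) (x y : Euc d) :
    ker (ω₁ - ω₂) s x y = ker ω₁ s x y - ker ω₂ s x y := by
  by_cases h : x = y
  · subst h; simp
  · rw [ker_of_ne h, ker_of_ne h, ker_of_ne h, ContinuousMap.sub_apply, sub_div]

lemma ker_add_smul_one (c : ℝ) (x y : Euc d)
    (hne : x ≠ y) :
    ker (ω + c • (1 : C(sphere (0 : Euc d) 1, ℝ))) s x y
      = ker ω s x y + c * ker (1 : C(sphere (0 : Euc d) 1, ℝ)) s x y := by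
  rw [ker_of_ne hne, ker_of_ne hne, ker_of_ne hne]
  simp only [ContinuousMap.add_apply, ContinuousMap.smul_apply, ContinuousMap.one_apply,
    smul_eq_mul, mul_one]
  rw [add_div, mul_one_div]

/-! ### Measure lemmas -/

def SwHomeo (hS : ∀ i x, S i x = q i + r i • x) (hr : ∀ i, r i ∈ Set.Ioo (0:ℝ) 1)
    (w : List (Fin N)) : Euc d ≃ₜ Euc d where
  toFun := Sw S w
  invFun := fun y => (rwd r w)⁻¹ • (y - Sw S w 0)
  left_inv := fun x => by
    show (rwd r w)⁻¹ • (Sw S w x - Sw S w 0) = x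
    rw [Sw_apply hS w x, add_sub_cancel_left, inv_smul_smul₀ (rwd_pos hr w).ne']
  right_inv := fun y => by
    show Sw S w ((rwd r w)⁻¹ • (y - Sw S w 0)) = y
    rw [Sw_apply hS w ((rwd r w)⁻¹ • (y - Sw S w 0)), smul_inv_smul₀ (rwd_pos hr w).ne']
    abel
  continuous_toFun := continuous_Sw hS w
  continuous_invFun := by fun_prop

lemma measurableEmbedding_Sw (hS : ∀ i x, S i x = q i + r i • x)
    (hr : ∀ i, r i ∈ Set.Ioo (0:ℝ) 1) (w : List (Fin N)) :
    MeasurableEmbedding (Sw S w) :=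
  (SwHomeo hS hr w).measurableEmbedding

lemma hausdorff_Sw (hS : ∀ i x, S i x = q i + r i • x)
    (hr : ∀ i, r i ∈ Set.Ioo (0:ℝ) 1) {s : ℝ} (hs0 : 0 ≤ s) (w : List (Fin N))
    (A : Set (Euc d)) :
    μH[s] (Sw S w '' A) = ENNReal.ofReal (rwd r w ^ s) * μH[s] A := by
  have hap := rwd_pos hr w
  set K : ℝ≥0 := ⟨rwd r w, hap.le⟩ with hK
  have hKcoe : (K : ℝ) = rwd r w := rfl
  have hK0 : K ≠ 0 := by
    refine fun h => hap.ne' ?_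
    rw [← hKcoe, h, NNReal.coe_zero]
  have hlip : LipschitzWith K (Sw S w) :=
    LipschitzWith.of_dist_le_mul fun x y => le_of_eq (by rw [dist_Sw hS hr, hKcoe])
  have hglip : LipschitzWith K⁻¹ (fun y : Euc d => (rwd r w)⁻¹ • (y - Sw S w 0)) := by
    refine LipschitzWith.of_dist_le_mul fun u v => le_of_eq ?_
    rw [dist_smul₀, dist_sub_right, Real.norm_eq_abs, abs_of_pos (inv_pos.2 hap),
      NNReal.coe_inv, hKcoe]
  have h1 := hlip.hausdorffMeasure_image_le hs0 A
  have h2 := hglip.hausdorffMeasure_image_le hs0 (Sw S w '' A)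
  have hgid : (fun y : Euc d => (rwd r w)⁻¹ • (y - Sw S w 0)) '' (Sw S w '' A) = A := by
    rw [← Set.image_comp]
    have hcomp : (fun y : Euc d => (rwd r w)⁻¹ • (y - Sw S w 0)) ∘ Sw S w = id :=
      funext fun x => by
        simp only [Function.comp_apply, id_eq]
        rw [Sw_apply hS w x, add_sub_cancel_left, inv_smul_smul₀ hap.ne']
    rw [hcomp, Set.image_id]
  rw [hgid] at h2
  have hKpos : (0:ℝ≥0∞) < (K : ℝ≥0∞) := ENNReal.coe_pos.mpr (pos_iff_ne_zero.mpr hK0)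
  have hcpos : (0:ℝ≥0∞) < (K : ℝ≥0∞) ^ s := ENNReal.rpow_pos hKpos ENNReal.coe_ne_top
  have hcne : ((K : ℝ≥0∞)) ^ s ≠ ⊤ := ENNReal.rpow_ne_top_of_nonneg hs0 ENNReal.coe_ne_top
  have hinv : ((K⁻¹ : ℝ≥0) : ℝ≥0∞) ^ s = (((K : ℝ≥0∞)) ^ s)⁻¹ := by
    rw [ENNReal.coe_inv hK0, ENNReal.inv_rpow]
  have hofReal : (K : ℝ≥0∞) ^ s = ENNReal.ofReal (rwd r w ^ s) := by
    rw [← ENNReal.ofReal_rpow_of_pos hap]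
    congr 1
    rw [ENNReal.ofReal_eq_coe_nnreal hap.le]
    rfl
  refine le_antisymm ?_ ?_
  · rw [← hofReal]; exact h1
  · rw [← hofReal]
    calc (K : ℝ≥0∞) ^ s * μH[s] A
        ≤ (K : ℝ≥0∞) ^ s * (((K⁻¹ : ℝ≥0) : ℝ≥0∞) ^ s * μH[s] (Sw S w '' A)) :=
          mul_le_mul_right h2 _
      _ = μH[s] (Sw S w '' A) := by
          rw [hinv, ← mul_assoc, ENNReal.mul_inv_cancel hcpos.ne' hcne, one_mul]

section MeasureFacts

variable {C : Set (Euc d)} {μ : Measure (Euc d)} {s : ℝ}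

lemma mu_apply (hCm : MeasurableSet C) (hμ : μ = (μH[s] C)⁻¹ • (μH[s]).restrict C)
    (A : Set (Euc d)) : μ A = (μH[s] C)⁻¹ * μH[s] (A ∩ C) := by
  rw [hμ, Measure.smul_apply, Measure.restrict_apply' hCm, smul_eq_mul]

lemma mu_univ_eq_one (hCm : MeasurableSet C)
    (hμ : μ = (μH[s] C)⁻¹ • (μH[s]).restrict C)
    (hpos : μH[s] C ≠ 0) (hfin : μH[s] C ≠ ⊤) : μ Set.univ = 1 := by
  rw [mu_apply hCm hμ, Set.univ_inter, ENNReal.inv_mul_cancel hpos hfin]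

lemma mu_C_eq_one (hCm : MeasurableSet C)
    (hμ : μ = (μH[s] C)⁻¹ • (μH[s]).restrict C)
    (hpos : μH[s] C ≠ 0) (hfin : μH[s] C ≠ ⊤) : μ C = 1 := by
  rw [mu_apply hCm hμ, Set.inter_self, ENNReal.inv_mul_cancel hpos hfin]

lemma mu_isProb (hCm : MeasurableSet C)
    (hμ : μ = (μH[s] C)⁻¹ • (μH[s]).restrict C)
    (hpos : μH[s] C ≠ 0) (hfin : μH[s] C ≠ ⊤) : IsProbabilityMeasure μ :=
  ⟨mu_univ_eq_one hCm hμ hpos hfin⟩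

lemma mu_compl_eq_zero (hCm : MeasurableSet C)
    (hμ : μ = (μH[s] C)⁻¹ • (μH[s]).restrict C) : μ Cᶜ = 0 := by
  rw [mu_apply hCm hμ, Set.compl_inter_self, measure_empty, mul_zero]

lemma mu_Sw_image (hCm : MeasurableSet C)
    (hμ : μ = (μH[s] C)⁻¹ • (μH[s]).restrict C)
    (hS : ∀ i x, S i x = q i + r i • x) (hr : ∀ i, r i ∈ Set.Ioo (0:ℝ) 1)
    (hCinv : C = ⋃ i, S i '' C) (hs0 : 0 ≤ s) (w : List (Fin N))
    {A : Set (Euc d)} (hA : A ⊆ C) :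
    μ (Sw S w '' A) = ENNReal.ofReal (rwd r w ^ s) * μ A := by
  have h1 : Sw S w '' A ⊆ C := (Set.image_mono hA).trans (Sw_image_subset hCinv w)
  rw [mu_apply hCm hμ, mu_apply hCm hμ, Set.inter_eq_self_of_subset_left h1,
    Set.inter_eq_self_of_subset_left hA, hausdorff_Sw hS hr hs0]
  ring

lemma restrict_SwC (hCm : MeasurableSet C)
    (hμ : μ = (μH[s] C)⁻¹ • (μH[s]).restrict C)
    (hS : ∀ i x, S i x = q i + r i • x) (hr : ∀ i, r i ∈ Set.Ioo (0:ℝ) 1)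
    (hCinv : C = ⋃ i, S i '' C) (hs0 : 0 ≤ s) (w : List (Fin N)) :
    μ.restrict (Sw S w '' C)
      = ENNReal.ofReal (rwd r w ^ s) • Measure.map (Sw S w) μ := by
  refine Measure.ext fun A hA => ?_
  rw [Measure.restrict_apply hA, Measure.smul_apply,
    Measure.map_apply (continuous_Sw hS w).measurable hA, smul_eq_mul,
    mu_apply hCm hμ, mu_apply hCm hμ]
  have hsub : Sw S w '' C ⊆ C := Sw_image_subset hCinv w
  have hACC : A ∩ Sw S w '' C ∩ C = A ∩ Sw S w '' C :=
    Set.inter_eq_self_of_subset_left (Set.inter_subset_right.trans hsub)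
  have himg : A ∩ Sw S w '' C = Sw S w '' (C ∩ Sw S w ⁻¹' A) := by
    rw [Set.image_inter_preimage, Set.inter_comm]
  rw [hACC, himg, hausdorff_Sw hS hr hs0, Set.inter_comm C (Sw S w ⁻¹' A)]
  ring

lemma setIntegral_Sw (hCm : MeasurableSet C)
    (hμ : μ = (μH[s] C)⁻¹ • (μH[s]).restrict C)
    (hS : ∀ i x, S i x = q i + r i • x) (hr : ∀ i, r i ∈ Set.Ioo (0:ℝ) 1)
    (hCinv : C = ⋃ i, S i '' C) (hs0 : 0 ≤ s) (w : List (Fin N))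
    {B : Set (Euc d)} (hB : MeasurableSet B) (hBC : B ⊆ C) (f : Euc d → ℝ) :
    ∫ y in Sw S w '' B, f y ∂μ = rwd r w ^ s * ∫ x in B, f (Sw S w x) ∂μ := by
  have hap := rwd_pos hr w
  have hmB : MeasurableSet (Sw S w '' B) := measurableSet_Sw_image hS hr w hB
  have hsub : Sw S w '' B ⊆ Sw S w '' C := Set.image_mono hBC
  have h1 : μ.restrict (Sw S w '' B) = (μ.restrict (Sw S w '' C)).restrict (Sw S w '' B) := by
    rw [Measure.restrict_restrict hmB, Set.inter_eq_self_of_subset_left hsub]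
  calc ∫ y in Sw S w '' B, f y ∂μ
      = ∫ y in Sw S w '' B, f y ∂(μ.restrict (Sw S w '' C)) := by rw [← h1]
    _ = ∫ y in Sw S w '' B, f y
          ∂(ENNReal.ofReal (rwd r w ^ s) • Measure.map (Sw S w) μ) := by
        rw [restrict_SwC hCm hμ hS hr hCinv hs0 w]
    _ = (ENNReal.ofReal (rwd r w ^ s)).toReal
          • ∫ y in Sw S w '' B, f y ∂(Measure.map (Sw S w) μ) := by
        rw [Measure.restrict_smul, integral_smul_measure]
    _ = rwd r w ^ s * ∫ x in Sw S w ⁻¹' (Sw S w '' B), f (Sw S w x) ∂μ := by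
        rw [(measurableEmbedding_Sw hS hr w).setIntegral_map,
          ENNReal.toReal_ofReal (Real.rpow_nonneg hap.le s), smul_eq_mul]
    _ = rwd r w ^ s * ∫ x in B, f (Sw S w x) ∂μ := by
        rw [Set.preimage_image_eq B (Sw_injective hS hr w)]

variable {ω : C(sphere (0 : Euc d) 1, ℝ)}

lemma integrableOn_ker (hs : 0 < s) [IsFiniteMeasure μ] (x : Euc d) {A : Set (Euc d)}
    {t : ℝ} (hA : MeasurableSet A) (ht : 0 < t) (hdist : ∀ y ∈ A, t ≤ dist x y) :
    IntegrableOn (fun y => ker ω s x y) A μ := by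
  have hsub : A ⊆ {y : Euc d | y ≠ x} := by
    intro y hy h
    have := hdist y hy
    rw [h, dist_self] at this
    linarith
  have hcont : ContinuousOn (fun y => ker ω s x y) A :=
    (continuousOn_ker_right x).mono hsub
  refine ⟨hcont.aestronglyMeasurable hA, ?_⟩
  apply HasFiniteIntegral.of_bounded (C := ‖ω‖ / t ^ s)
  refine (ae_restrict_iff' hA).2 (Filter.Eventually.of_forall fun y hy => ?_)
  rw [Real.norm_eq_abs]
  exact abs_ker_le hs ht (hdist y hy)

lemma abs_setIntegral_ker_le (hs : 0 < s) [IsProbabilityMeasure μ] (x : Euc d)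
    {A : Set (Euc d)} {t : ℝ} (hA : MeasurableSet A) (ht : 0 < t)
    (hdist : ∀ y ∈ A, t ≤ dist x y) :
    |∫ y in A, ker ω s x y ∂μ| ≤ ‖ω‖ / t ^ s := by
  have hsub : A ⊆ {y : Euc d | y ≠ x} := by
    intro y hy h
    have := hdist y hy
    rw [h, dist_self] at this
    linarith
  have hcont : ContinuousOn (fun y => ker ω s x y) A :=
    (continuousOn_ker_right x).mono hsub
  have h := norm_setIntegral_le_of_norm_le_const (μ := μ) (s := A) (f := fun y => ker ω s x y)
    (C := ‖ω‖ / t ^ s) (measure_lt_top μ A)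
    (fun y hy => by rw [Real.norm_eq_abs]; exact abs_ker_le hs ht (hdist y hy))
  rw [Real.norm_eq_abs] at h
  have hA1 : (μ A).toReal ≤ 1 := by
    have h1 : μ A ≤ 1 := prob_le_one
    have := ENNReal.toReal_mono (by norm_num) h1
    simpa using this
  calc |∫ y in A, ker ω s x y ∂μ| ≤ ‖ω‖ / t ^ s * (μ A).toReal := h
    _ ≤ ‖ω‖ / t ^ s * 1 := by
        apply mul_le_mul_of_nonneg_left hA1
        positivity
    _ = ‖ω‖ / t ^ s := mul_one _

end MeasureFacts

/-! ### Kernel scaling and decomposition -/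

lemma Sw_singleton (i : Fin N) : Sw S [i] = S i := rfl

lemma ker_Sw (hS : ∀ i x, S i x = q i + r i • x) (hr : ∀ i, r i ∈ Set.Ioo (0:ℝ) 1)
    {s : ℝ} (w : List (Fin N)) (z y : Euc d) {ω : C(sphere (0 : Euc d) 1, ℝ)} :
    ker ω s (Sw S w z) (Sw S w y) = ker ω s z y / rwd r w ^ s := by
  have hap := rwd_pos hr w
  by_cases h : z = y
  · subst h; simp
  · have h2 : Sw S w z ≠ Sw S w y := fun he => h (Sw_injective hS hr w he)
    rw [ker_of_ne h2, ker_of_ne h]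
    have hsub : Sw S w z - Sw S w y = rwd r w • (z - y) := by
      rw [Sw_apply hS w z, Sw_apply hS w y, add_sub_add_left_eq_sub, ← smul_sub]
    have hnorm : ‖Sw S w z - Sw S w y‖ = rwd r w * ‖z - y‖ := by
      rw [hsub, norm_smul, Real.norm_eq_abs, abs_of_pos hap]
    have hzy : ‖z - y‖ ≠ 0 := norm_ne_zero_iff.2 (sub_ne_zero.2 h)
    have hsph : sphN (Sw S w y) (Sw S w z) h2 = sphN y z h := by
      apply Subtype.ext
      show ‖Sw S w z - Sw S w y‖⁻¹ • (Sw S w z - Sw S w y) = ‖z - y‖⁻¹ • (z - y)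
      rw [hnorm, hsub, smul_smul]
      congr 1
      field_simp
    rw [hsph, hnorm, Real.mul_rpow hap.le (norm_nonneg _), div_div, mul_comm]

lemma iSup_eq_top_of_unbounded {g : ℝ → ℝ}
    (h : ∀ n : ℕ, ∃ ε : ℝ, 0 < ε ∧ (n : ℝ) ≤ |g ε|) :
    (⨆ (ε : ℝ) (_ : 0 < ε), ENNReal.ofReal |g ε|) = ⊤ := by
  refine top_unique ?_
  rw [← ENNReal.iSup_natCast]
  refine iSup_le fun n => ?_
  obtain ⟨ε, hε, hn⟩ := h n
  refine le_trans ?_ (le_iSup₂ (f := fun (ε : ℝ) (_ : 0 < ε) => ENNReal.ofReal |g ε|) ε hε)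
  rw [← ENNReal.ofReal_natCast n]
  exact ENNReal.ofReal_le_ofReal hn

section Decomp

variable {C : Set (Euc d)} {μ : Measure (Euc d)} {s : ℝ}
  {ω : C(sphere (0 : Euc d) 1, ℝ)} {δ : ℝ}

lemma decomp (hCm : MeasurableSet C)
    (hμ : μ = (μH[s] C)⁻¹ • (μH[s]).restrict C)
    (hS : ∀ i x, S i x = q i + r i • x) (hr : ∀ i, r i ∈ Set.Ioo (0:ℝ) 1)
    (hCinv : C = ⋃ i, S i '' C) (hs : 0 < s) [IsFiniteMeasure μ]
    (hδ0 : 0 < δ)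
    (hδ : ∀ i j, i ≠ j → ∀ u ∈ S i '' C, ∀ v ∈ S j '' C, δ ≤ dist u v)
    (w : List (Fin N)) {z : Euc d} (hz : z ∈ C) {ε : ℝ} (hε : 0 < ε)
    (hεle : ε ≤ rwd r w * (δ / 2)) :
    ∫ y in C \ closedBall (Sw S w z) ε, ker ω s (Sw S w z) y ∂μ
      = (∫ y in C \ Sw S w '' C, ker ω s (Sw S w z) y ∂μ)
        + ∫ y in C \ closedBall z (ε / rwd r w), ker ω s z y ∂μ := by
  have hap := rwd_pos hr w
  set x := Sw S w z with hx
  have hxmem : x ∈ Sw S w '' C := Set.mem_image_of_mem _ hz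
  have hgap : ∀ y ∈ C \ Sw S w '' C, rwd r w * δ ≤ dist x y := fun y hy =>
    gap_cylinder hS hr hCinv hδ0 hδ w x hxmem y hy.1 hy.2
  have hset : C \ closedBall x ε = (C \ Sw S w '' C) ∪ (Sw S w '' C \ closedBall x ε) := by
    ext y
    constructor
    · rintro ⟨hyC, hyB⟩
      by_cases h : y ∈ Sw S w '' C
      · exact Or.inr ⟨h, hyB⟩
      · exact Or.inl ⟨hyC, h⟩
    · rintro (⟨hyC, hyn⟩ | ⟨hyS, hyB⟩)
      · refine ⟨hyC, fun hball => ?_⟩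
        have h1 := hgap y ⟨hyC, hyn⟩
        have h2 : dist x y ≤ ε := by
          rw [mem_closedBall] at hball
          rw [dist_comm]; exact hball
        nlinarith
      · exact ⟨Sw_image_subset hCinv w hyS, hyB⟩
  have hdisj : Disjoint (C \ Sw S w '' C) (Sw S w '' C \ closedBall x ε) := by
    rw [Set.disjoint_left]
    rintro y ⟨_, hyn⟩ ⟨hyS, _⟩
    exact hyn hyS
  have hmSwC : MeasurableSet (Sw S w '' C) := measurableSet_Sw_image hS hr w hCm
  have hm1 : MeasurableSet (C \ Sw S w '' C) := hCm.diff hmSwC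
  have hm2 : MeasurableSet (Sw S w '' C \ closedBall x ε) :=
    hmSwC.diff measurableSet_closedBall
  have hi1 : IntegrableOn (fun y => ker ω s x y) (C \ Sw S w '' C) μ :=
    integrableOn_ker hs x hm1 (mul_pos hap hδ0) hgap
  have hi2 : IntegrableOn (fun y => ker ω s x y) (Sw S w '' C \ closedBall x ε) μ := by
    refine integrableOn_ker hs x hm2 hε fun y hy => ?_
    have := hy.2
    rw [mem_closedBall, not_le] at this
    rw [dist_comm]
    exact this.le
  rw [hset, setIntegral_union hdisj hm2 hi1 hi2]
  congr 1
  have hpre : Sw S w ⁻¹' (closedBall x ε) = closedBall z (ε / rwd r w) := by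
    ext u
    simp only [Set.mem_preimage, mem_closedBall, hx]
    rw [dist_Sw hS hr w u z, le_div_iff₀ hap, mul_comm]
  have himg2 : Sw S w '' C \ closedBall x ε
      = Sw S w '' (C \ closedBall z (ε / rwd r w)) := by
    rw [← hpre, Set.image_diff_preimage]
  rw [himg2, setIntegral_Sw hCm hμ hS hr hCinv hs.le w
    (hCm.diff measurableSet_closedBall) Set.diff_subset]
  have hker : ∀ y, ker ω s x (Sw S w y) = ker ω s z y / rwd r w ^ s := fun y =>
    ker_Sw hS hr w z y
  simp only [hker]
  rw [integral_div, mul_comm, div_mul_cancel₀]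
  exact ne_of_gt (Real.rpow_pos_of_pos hap s)

end Decomp

section Telescope

variable {C : Set (Euc d)} {μ : Measure (Euc d)} {s : ℝ}
  {ω : C(sphere (0 : Euc d) 1, ℝ)} {δ : ℝ}

lemma telescope (hCm : MeasurableSet C)
    (hμ : μ = (μH[s] C)⁻¹ • (μH[s]).restrict C)
    (hS : ∀ i x, S i x = q i + r i • x) (hr : ∀ i, r i ∈ Set.Ioo (0:ℝ) 1)
    (hCinv : C = ⋃ i, S i '' C) (hs : 0 < s) [IsFiniteMeasure μ]
    (hδ0 : 0 < δ)
    (hδ : ∀ i j, i ≠ j → ∀ u ∈ S i '' C, ∀ v ∈ S j '' C, δ ≤ dist u v)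
    (i₀ : Fin N) (m : ℕ) :
    ∀ z, z ∈ Sw S (List.replicate m i₀) '' C →
    ∃ p : ℕ → Euc d, (∀ l, l < m → p l ∈ Sw S (List.replicate (m - l) i₀) '' C) ∧
      ∃ z' ∈ C,
      ∫ y in C \ closedBall z (r i₀ ^ m * (δ / 2)), ker ω s z y ∂μ
        = (∑ l ∈ Finset.range m, ∫ y in C \ S i₀ '' C, ker ω s (p l) y ∂μ)
          + ∫ y in C \ closedBall z' (δ / 2), ker ω s z' y ∂μ := by
  induction m with
  | zero =>
    intro z hz
    refine ⟨fun _ => z, fun l hl => absurd hl (by omega), z, ?_, ?_⟩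
    · simpa [Sw] using hz
    · rw [pow_zero, one_mul]
      simp
  | succ m ih =>
    intro z hz
    rw [List.replicate_succ] at hz
    have hz' : z ∈ S i₀ '' (Sw S (List.replicate m i₀) '' C) := by
      rwa [show Sw S (i₀ :: List.replicate m i₀) = S i₀ ∘ Sw S (List.replicate m i₀)
        from rfl, Set.image_comp] at hz
    obtain ⟨z₁, hz₁, rfl⟩ := hz'
    have hz₁C : z₁ ∈ C := Sw_image_subset hCinv _ hz₁
    have hri := hr i₀
    have hrp : (0:ℝ) < r i₀ ^ (m + 1) := pow_pos hri.1 _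
    have hεle : r i₀ ^ (m + 1) * (δ / 2) ≤ rwd r [i₀] * (δ / 2) := by
      have h1 : r i₀ ^ (m + 1) ≤ r i₀ := by
        calc r i₀ ^ (m + 1) = r i₀ * r i₀ ^ m := by rw [pow_succ, mul_comm]
          _ ≤ r i₀ * 1 := by
              apply mul_le_mul_of_nonneg_left _ hri.1.le
              exact pow_le_one₀ hri.1.le hri.2.le
          _ = r i₀ := mul_one _
      have : rwd r [i₀] = r i₀ := by simp
      rw [this]
      apply mul_le_mul_of_nonneg_right h1
      positivity
    have hdec := decomp (ω := ω) hCm hμ hS hr hCinv hs hδ0 hδ [i₀] hz₁C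
      (mul_pos hrp (by positivity)) hεle
    rw [Sw_singleton] at hdec
    have hdiv : r i₀ ^ (m + 1) * (δ / 2) / rwd r [i₀] = r i₀ ^ m * (δ / 2) := by
      have : rwd r [i₀] = r i₀ := by simp
      rw [this, pow_succ]
      field_simp [hri.1.ne']
    rw [hdiv] at hdec
    obtain ⟨p', hp', z', hz'C, heq⟩ := ih z₁ hz₁
    refine ⟨fun l => if l = 0 then S i₀ z₁ else p' (l - 1), fun l hl => ?_, z', hz'C, ?_⟩
    · by_cases hl0 : l = 0
      · subst hl0
        simp only [if_pos rfl]
        have : m + 1 - 0 = m + 1 := rfl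
        rw [this, List.replicate_succ]
        rw [show Sw S (i₀ :: List.replicate m i₀) = S i₀ ∘ Sw S (List.replicate m i₀)
          from rfl, Set.image_comp]
        exact Set.mem_image_of_mem _ hz₁
      · obtain ⟨k, rfl⟩ : ∃ k, l = k + 1 := ⟨l - 1, by omega⟩
        simp only [if_neg hl0, Nat.add_sub_cancel]
        have : m + 1 - (k + 1) = m - k := by omega
        rw [this]
        exact hp' k (by omega)
    · rw [hdec, heq]
      have hsum : (∑ l ∈ Finset.range (m + 1), ∫ y in C \ S i₀ '' C,
          ker ω s (if l = 0 then S i₀ z₁ else p' (l - 1)) y ∂μ)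
          = (∫ y in C \ S i₀ '' C, ker ω s (S i₀ z₁) y ∂μ)
            + ∑ l ∈ Finset.range m, ∫ y in C \ S i₀ '' C, ker ω s (p' l) y ∂μ := by
        rw [Finset.sum_range_succ', if_pos rfl,
          Finset.sum_congr rfl (fun k _ => by
            rw [if_neg (Nat.succ_ne_zero k), Nat.add_sub_cancel])]
        ring
      rw [hsum]
      ring

end Telescope

section ContJ

variable {C : Set (Euc d)} {μ : Measure (Euc d)} {s : ℝ}
  {ω : C(sphere (0 : Euc d) 1, ℝ)}

lemma continuousAt_J (hs : 0 < s) [IsFiniteMeasure μ] {Λ : Set (Euc d)}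
    (hΛm : MeasurableSet Λ) {ξ : Euc d} {ρ : ℝ} (hρ : 0 < ρ)
    (hgap : ∀ y ∈ Λ, ρ ≤ dist ξ y) :
    ContinuousAt (fun p => ∫ y in Λ, ker ω s p y ∂μ) ξ := by
  apply continuousAt_of_dominated (bound := fun _ => ‖ω‖ / (ρ / 2) ^ s)
  · filter_upwards [Metric.ball_mem_nhds ξ (half_pos hρ)] with p hp
    refine ContinuousOn.aestronglyMeasurable ?_ hΛm
    refine (continuousOn_ker_right p).mono ?_
    intro y hy h
    have h1 := hgap y hy
    have h2 : dist p ξ < ρ / 2 := mem_ball.1 hp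
    rw [h] at h1
    rw [dist_comm] at h1
    linarith
  · filter_upwards [Metric.ball_mem_nhds ξ (half_pos hρ)] with p hp
    refine (ae_restrict_iff' hΛm).2 (Filter.Eventually.of_forall fun y hy => ?_)
    rw [Real.norm_eq_abs]
    apply abs_ker_le hs (half_pos hρ)
    have h1 := hgap y hy
    have h2 : dist p ξ < ρ / 2 := mem_ball.1 hp
    have h3 := dist_triangle ξ p y
    rw [dist_comm p ξ] at h2
    linarith
  · exact integrable_const _
  · refine (ae_restrict_iff' hΛm).2 (Filter.Eventually.of_forall fun y hy => ?_)
    have hne : ξ ≠ y := by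
      intro h
      have := hgap y hy
      rw [h, dist_self] at this
      linarith
    exact (continuousOn_ker_left y).continuousAt (IsOpen.mem_nhds isOpen_ne hne)

end ContJ

section BadNull

variable {C : Set (Euc d)} {μ : Measure (Euc d)} {s : ℝ}

lemma bad_null (hCm : MeasurableSet C)
    (hμ : μ = (μH[s] C)⁻¹ • (μH[s]).restrict C)
    (hpos : μH[s] C ≠ 0) (hfin : μH[s] C ≠ ⊤)
    (hS : ∀ i x, S i x = q i + r i • x) (hr : ∀ i, r i ∈ Set.Ioo (0:ℝ) 1)
    (hCinv : C = ⋃ i, S i '' C) (hs : 0 < s)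
    (hdim : ∑ i, r i ^ s = 1) (i₀ : Fin N) (m : ℕ) :
    μ {x | x ∈ C ∧ ∀ w : List (Fin N), x ∉ Sw S (w ++ List.replicate m i₀) '' C} = 0 := by
  classical
  set Bad := {x | x ∈ C ∧ ∀ w : List (Fin N), x ∉ Sw S (w ++ List.replicate m i₀) '' C}
    with hBad
  set Bfin : Finset (Fin m → Fin N) := Finset.univ.erase (fun _ => i₀) with hBfin
  set Dset : ℕ → Set (Euc d) :=
    fun k => Nat.rec C (fun _ Dk => ⋃ b ∈ Bfin, Sw S (List.ofFn b) '' Dk) k with hDset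
  have hD0 : Dset 0 = C := rfl
  have hDsucc : ∀ k, Dset (k + 1) = ⋃ b ∈ Bfin, Sw S (List.ofFn b) '' Dset k :=
    fun k => rfl
  have hDsub : ∀ k, Dset k ⊆ C := by
    intro k
    induction k with
    | zero => rw [hD0]
    | succ k ih =>
      rw [hDsucc]
      refine Set.iUnion₂_subset fun b _ => ?_
      exact (Set.image_mono ih).trans (Sw_image_subset hCinv _)
  have hDm : ∀ k, MeasurableSet (Dset k) := by
    intro k
    induction k with
    | zero => rw [hD0]; exact hCm
    | succ k ih =>
      rw [hDsucc]
      exact MeasurableSet.biUnion (Finset.countable_toSet _)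
        (fun b _ => measurableSet_Sw_image hS hr _ ih)
  have hBadD : ∀ k, Bad ⊆ Dset k := by
    intro k
    induction k with
    | zero => rw [hD0]; exact fun x hx => hx.1
    | succ k ih =>
      intro x hx
      obtain ⟨u, hu⟩ := cover hCinv m x hx.1
      obtain ⟨x', hx'C, hxu⟩ := hu
      have hune : u ≠ fun _ => i₀ := by
        intro h
        subst h
        apply hx.2 []
        rw [List.nil_append, ← List.ofFn_const m i₀]
        exact ⟨x', hx'C, hxu⟩
      have hx'Bad : x' ∈ Bad := by
        refine ⟨hx'C, fun w' hmem => ?_⟩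
        obtain ⟨x'', hx''C, hx''⟩ := hmem
        apply hx.2 (List.ofFn u ++ w')
        refine ⟨x'', hx''C, ?_⟩
        rw [List.append_assoc, Sw_append, Function.comp_apply, hx'', hxu]
      rw [hDsucc]
      refine Set.mem_biUnion (show u ∈ Bfin from ?_) ⟨x', ih hx'Bad, hxu⟩
      rw [hBfin]
      exact Finset.mem_erase.2 ⟨hune, Finset.mem_univ u⟩
  set θ : ℝ := (r i₀ ^ s) ^ m with hθ
  have hθpos : 0 < θ := pow_pos (Real.rpow_pos_of_pos (hr i₀).1 s) m
  have hθle : θ ≤ 1 := by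
    apply pow_le_one₀ (Real.rpow_pos_of_pos (hr i₀).1 s).le
    exact Real.rpow_le_one (hr i₀).1.le (hr i₀).2.le hs.le
  set β : ℝ≥0∞ := ENNReal.ofReal (1 - θ) with hβ
  have hβlt : β < 1 := by
    rw [hβ]
    apply ENNReal.ofReal_lt_one.2
    linarith
  have hsum_all : (∑ b : Fin m → Fin N, ∏ j, r (b j) ^ s) = 1 := by
    have h1 : (∏ _j : Fin m, ∑ i, r i ^ s) = 1 := by
      rw [hdim]; simp
    rw [← h1, Finset.prod_univ_sum]
    rw [Fintype.piFinset_univ]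
  have hsum_B : (∑ b ∈ Bfin, ∏ j, r (b j) ^ s) = 1 - θ := by
    have h3 := Finset.add_sum_erase Finset.univ (fun b : Fin m → Fin N => ∏ j, r (b j) ^ s)
      (Finset.mem_univ (fun _ => i₀))
    rw [hsum_all] at h3
    have h2 : (∏ _j : Fin m, r i₀ ^ s) = θ := by
      rw [hθ, Finset.prod_const, Finset.card_univ, Fintype.card_fin]
    rw [h2] at h3
    rw [hBfin]
    linarith
  have hstep : ∀ k, μ (Dset (k + 1)) ≤ β * μ (Dset k) := by
    intro k
    rw [hDsucc]
    calc μ (⋃ b ∈ Bfin, Sw S (List.ofFn b) '' Dset k)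
        ≤ ∑ b ∈ Bfin, μ (Sw S (List.ofFn b) '' Dset k) :=
          measure_biUnion_finset_le Bfin _
      _ = ∑ b ∈ Bfin, ENNReal.ofReal (rwd r (List.ofFn b) ^ s) * μ (Dset k) := by
          refine Finset.sum_congr rfl fun b _ => ?_
          rw [mu_Sw_image hCm hμ hS hr hCinv hs.le _ (hDsub k)]
      _ = (∑ b ∈ Bfin, ENNReal.ofReal (rwd r (List.ofFn b) ^ s)) * μ (Dset k) := by
          rw [Finset.sum_mul]
      _ = β * μ (Dset k) := by
          congr 1
          rw [hβ, ← hsum_B, ← ENNReal.ofReal_sum_of_nonneg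
            (fun b _ => Real.rpow_nonneg (rwd_pos hr _).le s)]
          congr 1
          refine Finset.sum_congr rfl fun b _ => ?_
          rw [rwd, List.map_ofFn, List.prod_ofFn]
          simp only [Function.comp]
          exact (Real.finset_prod_rpow Finset.univ _ (fun j _ => (hr (b j)).1.le) s).symm
  have hiter : ∀ k, μ (Dset k) ≤ β ^ k := by
    intro k
    induction k with
    | zero =>
      rw [hD0, pow_zero]
      rw [mu_C_eq_one hCm hμ hpos hfin]
    | succ k ih =>
      calc μ (Dset (k + 1)) ≤ β * μ (Dset k) := hstep k
        _ ≤ β * β ^ k := mul_le_mul_right ih β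
        _ = β ^ (k + 1) := (pow_succ' β k).symm
  have htend : Tendsto (fun k => β ^ k) atTop (𝓝 0) :=
    ENNReal.tendsto_pow_atTop_nhds_zero_of_lt_one hβlt
  have hle : μ Bad ≤ 0 :=
    ge_of_tendsto htend (Filter.Eventually.of_forall fun k =>
      le_trans (measure_mono (hBadD k)) (hiter k))
  exact le_antisymm hle zero_le

end BadNull

end Stmt9

open Stmt9

set_option maxHeartbeats 2000000

/-- For a separated, rotation-free similarity IFS on `ℝ^d`, the collection `U⁰`
of continuous degree-zero homogeneous `Ω` whose maximal singular integral of `1` is infinite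
`μ`-a.e. contains an open dense subset of `K⁰ ≅ C(S^{d-1},ℝ)`; in particular it is dense. -/
theorem stmt9
    {d N : ℕ} (hd : 1 ≤ d) (hN : 2 ≤ N)
    (q : Fin N → Euc d) (r : Fin N → ℝ) (hr : ∀ i, r i ∈ Set.Ioo (0:ℝ) 1)
    (S : Fin N → Euc d → Euc d) (hS : ∀ i x, S i x = q i + r i • x)
    (C : Set (Euc d)) (hCne : C.Nonempty) (hCcomp : IsCompact C)
    (hCinv : C = ⋃ i, S i '' C)
    (hsep : ∀ i j, i ≠ j → Disjoint (S i '' C) (S j '' C))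
    (s : ℝ) (hs : 0 < s) (hdim : ∑ i, r i ^ s = 1)
    (μ : Measure (Euc d)) (hμ : μ = (μH[s] C)⁻¹ • μH[s].restrict C) :
    (∃ V : Set (ContinuousMap (sphere (0 : Euc d) 1) ℝ),
      IsOpen V ∧ Dense V ∧ V ⊆ U0 C μ s) ∧ Dense (U0 C μ s) := by
  classical
  have hCm : MeasurableSet C := hCcomp.isClosed.measurableSet
  by_cases hdeg : μH[s] C = 0 ∨ μH[s] C = ⊤
  · have hμ0 : μ = 0 := by
      rcases hdeg with h | h
      · have h0 : (μH[s]).restrict C = 0 := Measure.restrict_eq_zero.2 h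
        rw [hμ, h0, smul_zero]
      · rw [hμ, h, ENNReal.inv_top, zero_smul]
    have hU : U0 C μ s = Set.univ := by
      ext ω0
      simp only [Set.mem_univ, iff_true, U0, Set.mem_setOf_eq]
      rw [hμ0]
      simp
    exact ⟨⟨Set.univ, isOpen_univ, dense_univ, by rw [hU]⟩, by rw [hU]; exact dense_univ⟩
  · push_neg at hdeg
    obtain ⟨hpos, hfin⟩ := hdeg
    haveI hprob : IsProbabilityMeasure μ := mu_isProb hCm hμ hpos hfin
    have hNpos : 0 < N := by omega
    set i₀ : Fin N := ⟨0, hNpos⟩ with hi₀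
    obtain ⟨δ, hδ0, hδ⟩ := exists_gap hN hCne hCcomp hS hsep
    set ξ := xi q r i₀ with hξdef
    have hξC : ξ ∈ C := xi_mem_C hCne hCcomp hCinv hS hr
    have hξSi : ξ ∈ S i₀ '' C := ⟨ξ, hξC, S_xi hS hr⟩
    have hmSi : MeasurableSet (S i₀ '' C) := by
      have := measurableSet_Sw_image hS hr (w := [i₀]) hCm
      rwa [Sw_singleton] at this
    set Λ : Set (Euc d) := C \ S i₀ '' C with hΛ
    have hΛm : MeasurableSet Λ := hCm.diff hmSi
    have hρpos : 0 < r i₀ * δ := mul_pos (hr i₀).1 hδ0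
    have hJgap : ∀ p ∈ S i₀ '' C, ∀ y ∈ Λ, r i₀ * δ ≤ dist p y := by
      intro p hp y hy
      have h := gap_cylinder hS hr hCinv hδ0 hδ [i₀] p (by rwa [Sw_singleton]) y hy.1
        (by rw [Sw_singleton]; exact hy.2)
      simpa using h
    have hgapξ : ∀ y ∈ Λ, r i₀ * δ ≤ dist ξ y := hJgap ξ hξSi
    have hint : ∀ ω : C(sphere (0 : Euc d) 1, ℝ),
        IntegrableOn (fun y => ker ω s ξ y) Λ μ := fun ω =>
      integrableOn_ker hs ξ hΛm hρpos hgapξ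
    set I : C(sphere (0 : Euc d) 1, ℝ) → ℝ :=
      fun ω => ∫ y in Λ, ker ω s ξ y ∂μ with hI
    -- continuity of I
    have hIlip : LipschitzWith (Real.toNNReal (1 / (r i₀ * δ) ^ s)) I := by
      apply LipschitzWith.of_dist_le_mul
      intro ω₁ ω₂
      rw [Real.dist_eq]
      have h1 : I ω₁ - I ω₂ = ∫ y in Λ, ker (ω₁ - ω₂) s ξ y ∂μ := by
        show (∫ y in Λ, ker ω₁ s ξ y ∂μ) - (∫ y in Λ, ker ω₂ s ξ y ∂μ)
          = ∫ y in Λ, ker (ω₁ - ω₂) s ξ y ∂μ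
        rw [← integral_sub (hint ω₁) (hint ω₂)]
        exact integral_congr_ae (Filter.Eventually.of_forall fun y =>
          (ker_sub_apply ω₁ ω₂ ξ y).symm)
      have h2 := abs_setIntegral_ker_le (μ := μ) (ω := ω₁ - ω₂) hs ξ hΛm hρpos hgapξ
      calc |I ω₁ - I ω₂| ≤ ‖ω₁ - ω₂‖ / (r i₀ * δ) ^ s := by rw [h1]; exact h2
        _ = 1 / (r i₀ * δ) ^ s * dist ω₁ ω₂ := by rw [dist_eq_norm]; ring
        _ ≤ (Real.toNNReal (1 / (r i₀ * δ) ^ s) : ℝ) * dist ω₁ ω₂ := by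
            apply mul_le_mul_of_nonneg_right _ dist_nonneg
            rw [Real.coe_toNNReal _ (by positivity)]
    have hIcont : Continuous I := hIlip.continuous
    set V : Set (C(sphere (0 : Euc d) 1, ℝ)) := {ω | I ω ≠ 0} with hV
    have hVopen : IsOpen V := by
      have hVeq : V = I ⁻¹' ({(0:ℝ)}ᶜ) := by ext ω; simp [hV]
      rw [hVeq]
      exact (isOpen_compl_singleton).preimage hIcont
    -- diameter bound
    set D : ℝ := Metric.diam C + 1 with hD
    have hDpos : 0 < D := by
      have := Metric.diam_nonneg (s := C)
      rw [hD]; linarith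
    have hdistD : ∀ u ∈ C, ∀ v ∈ C, dist u v ≤ D := fun u hu v hv =>
      le_trans (Metric.dist_le_diam_of_mem hCcomp.isBounded hu hv) (by rw [hD]; linarith)
    -- μ Λ > 0 and I 1 > 0
    have hSiC : S i₀ '' C ⊆ C := Si_image_subset hCinv i₀
    have hμSi : μ (S i₀ '' C) = ENNReal.ofReal (r i₀ ^ s) := by
      have h := mu_Sw_image hCm hμ hS hr hCinv hs.le [i₀] (le_refl C)
      rw [Sw_singleton] at h
      rw [h, mu_C_eq_one hCm hμ hpos hfin, mul_one]
      congr 1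
      simp
    have hμΛ : μ Λ = 1 - ENNReal.ofReal (r i₀ ^ s) := by
      rw [hΛ, measure_diff hSiC hmSi.nullMeasurableSet (measure_ne_top μ _), hμSi,
        mu_C_eq_one hCm hμ hpos hfin]
    have hrs1 : ENNReal.ofReal (r i₀ ^ s) < 1 := by
      rw [ENNReal.ofReal_lt_one]
      exact Real.rpow_lt_one (hr i₀).1.le (hr i₀).2 hs
    have hμΛpos : 0 < μ Λ := by
      rw [hμΛ]
      exact tsub_pos_of_lt hrs1
    have hξne : ∀ y ∈ Λ, ξ ≠ y := by
      intro y hy h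
      have := hgapξ y hy
      rw [h, dist_self] at this
      linarith
    have hI1 : 0 < I (1 : C(sphere (0 : Euc d) 1, ℝ)) := by
      have hlow : ∀ y ∈ Λ, (1:ℝ) / D ^ s ≤ ker (1 : C(sphere (0 : Euc d) 1, ℝ)) s ξ y := by
        intro y hy
        have hne := hξne y hy
        rw [ker_of_ne hne, ContinuousMap.one_apply]
        apply one_div_le_one_div_of_le
        · exact Real.rpow_pos_of_pos (norm_pos_iff.mpr (sub_ne_zero.mpr hne)) s
        · apply Real.rpow_le_rpow (norm_nonneg _) _ hs.le
          rw [← dist_eq_norm]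
          exact hdistD ξ hξC y hy.1
      have hge := setIntegral_ge_of_const_le hΛm (measure_ne_top μ Λ) hlow (hint 1)
      have hpos' : 0 < 1 / D ^ s * (μ Λ).toReal := by
        apply mul_pos
        · positivity
        · exact ENNReal.toReal_pos hμΛpos.ne' (measure_ne_top μ Λ)
      calc (0:ℝ) < 1 / D ^ s * (μ Λ).toReal := hpos'
        _ ≤ I 1 := by rw [smul_eq_mul, mul_comm] at hge; exact hge
    have hVdense : Dense V := by
      rw [Metric.dense_iff]
      intro ω₀ ρ hρ
      by_cases h0 : I ω₀ ≠ 0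
      · exact ⟨ω₀, Metric.mem_ball_self hρ, h0⟩
      · push_neg at h0
        refine ⟨ω₀ + (ρ/2) • 1, Set.mem_inter ?_ ?_⟩
        · rw [mem_ball, dist_eq_norm, add_sub_cancel_left]
          have h1 : ‖(1 : C(sphere (0 : Euc d) 1, ℝ))‖ ≤ 1 :=
            (ContinuousMap.norm_le _ zero_le_one).2 (fun p => by simp)
          have h3 : ‖(ρ/2) • (1 : C(sphere (0 : Euc d) 1, ℝ))‖ ≤ ρ/2 :=
            (ContinuousMap.norm_le _ (by linarith)).2 (fun p => by
              simp [Real.norm_eq_abs, abs_of_nonneg (le_of_lt hρ)])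
          linarith
        · show I (ω₀ + (ρ/2) • 1) ≠ 0
          have hlin : I (ω₀ + (ρ/2) • 1) = I ω₀ + (ρ/2) * I 1 := by
            show (∫ y in Λ, ker (ω₀ + (ρ/2) • 1) s ξ y ∂μ)
              = (∫ y in Λ, ker ω₀ s ξ y ∂μ) + (ρ/2) * ∫ y in Λ, ker 1 s ξ y ∂μ
            rw [MeasureTheory.setIntegral_congr_fun hΛm
              (show Set.EqOn (fun y => ker (ω₀ + (ρ/2) • 1) s ξ y)
                (fun y => ker ω₀ s ξ y + (ρ/2) * ker 1 s ξ y) Λ from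
                fun y hy => ker_add_smul_one (ρ/2) ξ y (hξne y hy))]
            rw [integral_add (hint ω₀) ((hint 1).const_mul (ρ/2)),
              integral_const_mul]
          rw [hlin, h0, zero_add]
          exact mul_ne_zero (by linarith) (ne_of_gt hI1)
    -- the key inclusion
    have hVsub : V ⊆ U0 C μ s := by
      have hrepsub : ∀ k : ℕ, 1 ≤ k → Sw S (List.replicate k i₀) '' C ⊆ S i₀ '' C := by
        intro k hk
        obtain ⟨k', rfl⟩ : ∃ k', k = k' + 1 := ⟨k - 1, by omega⟩
        rw [List.replicate_succ]
        rw [show Sw S (i₀ :: List.replicate k' i₀) = S i₀ ∘ Sw S (List.replicate k' i₀)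
          from rfl, Set.image_comp]
        exact Set.image_mono (Sw_image_subset hCinv _)
      have hdistrep : ∀ t : ℕ, ∀ p ∈ Sw S (List.replicate t i₀) '' C,
          dist p ξ ≤ r i₀ ^ t * D := by
        intro t p hp
        obtain ⟨p', hp', rfl⟩ := hp
        have hξ' : Sw S (List.replicate t i₀) ξ = ξ := Sw_rep_xi hS hr t
        calc dist (Sw S (List.replicate t i₀) p') ξ
            = dist (Sw S (List.replicate t i₀) p') (Sw S (List.replicate t i₀) ξ) := by
              rw [hξ']
          _ = rwd r (List.replicate t i₀) * dist p' ξ := dist_Sw hS hr _ _ _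
          _ = r i₀ ^ t * dist p' ξ := by rw [rwd_replicate]
          _ ≤ r i₀ ^ t * D := mul_le_mul_of_nonneg_left (hdistD p' hp' ξ hξC)
              (pow_nonneg (hr i₀).1.le t)
      intro ω hω
      rw [mem_U0_iff]
      have ha : I ω ≠ 0 := hω
      set a : ℝ := I ω with haeq
      have habs : 0 < |a| := abs_pos.2 ha
      set Jb : ℝ := ‖ω‖ / (r i₀ * δ) ^ s with hJbdef
      have hJb0 : 0 ≤ Jb := by rw [hJbdef]; positivity
      have hJb : ∀ p ∈ S i₀ '' C, |∫ y in Λ, ker ω s p y ∂μ| ≤ Jb := fun p hp =>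
        abs_setIntegral_ker_le (μ := μ) hs p hΛm hρpos (hJgap p hp)
      have haJb : |a| ≤ Jb := hJb ξ hξSi
      set B0 : ℝ := ‖ω‖ / (δ/2) ^ s with hB0def
      have hB0pos : 0 ≤ B0 := by rw [hB0def]; positivity
      have hB0 : ∀ u : Euc d, |∫ y in C \ closedBall u (δ/2), ker ω s u y ∂μ| ≤ B0 := by
        intro u
        refine abs_setIntegral_ker_le (μ := μ) hs u (hCm.diff measurableSet_closedBall)
          (half_pos hδ0) fun y hy => ?_
        have h2 := hy.2
        rw [mem_closedBall, not_le] at h2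
        rw [dist_comm]
        exact h2.le
      have hJcont : ContinuousAt (fun p => ∫ y in Λ, ker ω s p y ∂μ) ξ :=
        continuousAt_J hs hΛm hρpos hgapξ
      obtain ⟨ρ', hρ'pos, hmod⟩ := Metric.continuousAt_iff.1 hJcont (|a|/2) (by linarith)
      obtain ⟨t₀, ht₀⟩ : ∃ t₀ : ℕ, ∀ t, t ≥ t₀ → r i₀ ^ t * D < ρ' := by
        have h := (tendsto_pow_atTop_nhds_zero_of_lt_one (hr i₀).1.le
          (hr i₀).2).mul_const D
        rw [zero_mul] at h
        exact eventually_atTop.1 (h.eventually_lt_const hρ'pos)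
      have hae1 : ∀ᵐ x ∂μ, x ∈ C := by
        have h := mu_compl_eq_zero hCm hμ
        rw [ae_iff]
        exact h
      have hae2 : ∀ᵐ x ∂μ, ∀ m : ℕ,
          ¬(x ∈ C ∧ ∀ w : List (Fin N), x ∉ Sw S (w ++ List.replicate m i₀) '' C) := by
        rw [MeasureTheory.ae_all_iff]
        intro m
        have hbn := bad_null hCm hμ hpos hfin hS hr hCinv hs hdim i₀ m
        rw [ae_iff]
        simpa only [not_not] using hbn
      filter_upwards [hae1, hae2] with x hxC hxGood
      apply iSup_eq_top_of_unbounded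
      intro n
      obtain ⟨m, hm⟩ := exists_nat_ge ((2*(n:ℝ) + t₀*(2*Jb) + 2*B0 + 1) * 2 / |a|)
      have hmlb : 2*(n:ℝ) + t₀*(2*Jb) + 2*B0 + 1 ≤ m * (|a|/2) := by
        have h1 := (div_le_iff₀ habs).1 hm
        linarith
      have hex : ∃ w : List (Fin N), x ∈ Sw S (w ++ List.replicate m i₀) '' C := by
        by_contra hcon
        push_neg at hcon
        exact hxGood m ⟨hxC, hcon⟩
      obtain ⟨w, hw⟩ := hex
      rw [Sw_append, Set.image_comp] at hw
      obtain ⟨z, hzrep, hxz⟩ := hw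
      have hzC : z ∈ C := Sw_image_subset hCinv _ hzrep
      have hrwp : 0 < rwd r w := rwd_pos hr w
      have hε₁pos : (0:ℝ) < rwd r w * (δ/2) := mul_pos hrwp (half_pos hδ0)
      have hdec₁ := decomp (ω := ω) hCm hμ hS hr hCinv hs hδ0 hδ w hzC hε₁pos (le_refl _)
      have hε₂pos : (0:ℝ) < rwd r w * (r i₀ ^ m * (δ/2)) :=
        mul_pos hrwp (mul_pos (pow_pos (hr i₀).1 m) (half_pos hδ0))
      have hε₂le : rwd r w * (r i₀ ^ m * (δ/2)) ≤ rwd r w * (δ/2) := by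
        apply mul_le_mul_of_nonneg_left _ hrwp.le
        have h1 : r i₀ ^ m ≤ 1 := pow_le_one₀ (hr i₀).1.le (hr i₀).2.le
        nlinarith [half_pos hδ0]
      have hdec₂ := decomp (ω := ω) hCm hμ hS hr hCinv hs hδ0 hδ w hzC hε₂pos hε₂le
      rw [mul_div_cancel_left₀ _ hrwp.ne'] at hdec₁ hdec₂
      obtain ⟨p, hp, z', hz'C, htel⟩ :=
        telescope (ω := ω) hCm hμ hS hr hCinv hs hδ0 hδ i₀ m z hzrep
      rw [← hΛ] at htel
      set T₁ : ℝ := ∫ y in C \ closedBall (Sw S w z) (rwd r w * (δ/2)),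
        ker ω s (Sw S w z) y ∂μ with hT₁
      set T₂ : ℝ := ∫ y in C \ closedBall (Sw S w z) (rwd r w * (r i₀ ^ m * (δ/2))),
        ker ω s (Sw S w z) y ∂μ with hT₂
      set tz : ℝ := ∫ y in C \ closedBall z (δ/2), ker ω s z y ∂μ with htz
      set tz' : ℝ := ∫ y in C \ closedBall z' (δ/2), ker ω s z' y ∂μ with htz'
      set SM : ℝ := ∑ l ∈ Finset.range m, ∫ y in Λ, ker ω s (p l) y ∂μ with hSM
      have hdiff : T₂ - T₁ = SM + tz' - tz := by
        rw [hdec₁, hdec₂, htel]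
        ring
      have hterm : ∀ l ∈ Finset.range m,
          |(∫ y in Λ, ker ω s (p l) y ∂μ) - a|
            ≤ |a|/2 + (if m - l < t₀ then 2*Jb else 0) := by
        intro l hl
        have hlm : l < m := Finset.mem_range.1 hl
        have hpl := hp l hlm
        have hpls : p l ∈ S i₀ '' C := hrepsub (m - l) (by omega) hpl
        by_cases hcase : m - l < t₀
        · rw [if_pos hcase]
          have h1 : |∫ y in Λ, ker ω s (p l) y ∂μ| ≤ Jb := hJb _ hpls
          have h2 := abs_sub (∫ y in Λ, ker ω s (p l) y ∂μ) a
          linarith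
        · rw [if_neg hcase, add_zero]
          have hd1 := hdistrep (m - l) (p l) hpl
          have hlt : r i₀ ^ (m - l) * D < ρ' := ht₀ (m - l) (by omega)
          have h3 := hmod (lt_of_le_of_lt hd1 hlt)
          rw [Real.dist_eq] at h3
          exact le_of_lt h3
      have hsum1 : |SM - m * a| ≤ m * (|a|/2) + t₀ * (2*Jb) := by
        have h1 : SM - m * a
            = ∑ l ∈ Finset.range m, ((∫ y in Λ, ker ω s (p l) y ∂μ) - a) := by
          rw [hSM, Finset.sum_sub_distrib, Finset.sum_const, Finset.card_range, nsmul_eq_mul]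
        rw [h1]
        calc |∑ l ∈ Finset.range m, ((∫ y in Λ, ker ω s (p l) y ∂μ) - a)|
            ≤ ∑ l ∈ Finset.range m, |(∫ y in Λ, ker ω s (p l) y ∂μ) - a| :=
              Finset.abs_sum_le_sum_abs _ _
          _ ≤ ∑ l ∈ Finset.range m, (|a|/2 + if m - l < t₀ then 2*Jb else 0) :=
              Finset.sum_le_sum hterm
          _ = m * (|a|/2) + ∑ l ∈ Finset.range m, (if m - l < t₀ then 2*Jb else 0) := by
              rw [Finset.sum_add_distrib, Finset.sum_const, Finset.card_range, nsmul_eq_mul]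
          _ ≤ m * (|a|/2) + t₀ * (2*Jb) := by
              have h2 : (∑ l ∈ Finset.range m, if m - l < t₀ then 2*Jb else 0)
                  = ∑ l ∈ (Finset.range m).filter (fun l => m - l < t₀), 2*Jb :=
                (Finset.sum_filter _ _).symm
              have hsubset : (Finset.range m).filter (fun l => m - l < t₀)
                  ⊆ Finset.Ico (m - t₀) m := by
                intro l hli
                rw [Finset.mem_filter, Finset.mem_range] at hli
                rw [Finset.mem_Ico]
                omega
              have hcard : ((Finset.range m).filter (fun l => m - l < t₀)).card ≤ t₀ := by
                have h3 := Finset.card_le_card hsubset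
                rw [Nat.card_Ico] at h3
                omega
              rw [h2, Finset.sum_const, nsmul_eq_mul]
              have h4 : (((Finset.range m).filter (fun l => m - l < t₀)).card : ℝ) * (2*Jb)
                  ≤ t₀ * (2*Jb) := by
                apply mul_le_mul_of_nonneg_right _ (by linarith)
                exact_mod_cast hcard
              linarith
      have htail1 := hB0 z
      have htail2 := hB0 z'
      rw [← htz] at htail1
      rw [← htz'] at htail2
      have hma : |(m:ℝ) * a| = m * |a| := by rw [abs_mul, Nat.abs_cast]
      have hSMlow : m * |a| - (m * (|a|/2) + t₀ * (2*Jb)) ≤ |SM| := by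
        have h5 := abs_sub_abs_le_abs_sub ((m:ℝ) * a) SM
        have h6 : |(m:ℝ) * a - SM| = |SM - m * a| := abs_sub_comm _ _
        rw [hma, h6] at h5
        linarith
      have hlow : 2*(n:ℝ) ≤ |T₂ - T₁| := by
        rw [hdiff]
        have e1 : |SM| = |(SM + tz' - tz) + (tz - tz')| := by
          congr 1
          ring
        have e2 := abs_add_le (SM + tz' - tz) (tz - tz')
        have e3 := abs_sub tz tz'
        rw [e1] at hSMlow
        linarith
      have hTor : (n:ℝ) ≤ |T₁| ∨ (n:ℝ) ≤ |T₂| := by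
        by_contra hcon
        push_neg at hcon
        have h7 := abs_sub T₂ T₁
        linarith [hcon.1, hcon.2]
      rcases hTor with h | h
      · refine ⟨rwd r w * (δ/2), hε₁pos, ?_⟩
        rw [← hxz]
        exact h
      · refine ⟨rwd r w * (r i₀ ^ m * (δ/2)), hε₂pos, ?_⟩
        rw [← hxz]
        exact h
    exact ⟨⟨V, hVopen, hVdense, hVsub⟩, hVdense.mono hVsub⟩
end
end
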